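/- arXiv:1404.7264 — 10 statements merged into one kernel-verified Lean document; each statement's English description precedes it below -/
import Mathlib

section
/- If U and V are elementary atoms over G_0 with the same signed support, then U = V or U = -V. -/
/-- A zero-sum sequence over `G₀ ⊆ ℤ^r`: a finite multiset of elements of `G₀` summing to `0`. -/
def IsZeroSumSeq {r : ℕ} (G₀ : Set (Fin r → ℤ)) (S : Multiset (Fin r → ℤ)) : Prop :=
  (∀ g ∈ S, g ∈ G₀) ∧ S.sum = 0

/-- An atom (minimal zero-sum sequence) over `G₀`: a nonempty zero-sum sequence with no
proper nonempty zero-sum subsequence. -/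
def IsAtomSeq {r : ℕ} (G₀ : Set (Fin r → ℤ)) (S : Multiset (Fin r → ℤ)) : Prop :=
  IsZeroSumSeq G₀ S ∧ S ≠ 0 ∧
    ∀ T : Multiset (Fin r → ℤ), T ≤ S → T ≠ 0 → T.sum = 0 → T = S

/-- The signed support `supp⁺(S) = {g : v_g(S) - v_{-g}(S) ≠ 0}`. -/
def signedSupp {r : ℕ} (S : Multiset (Fin r → ℤ)) : Set (Fin r → ℤ) :=
  {g | S.count g ≠ S.count (-g)}

/-- An elementary zero-sum sequence over `G₀`: one whose signed support is nonempty and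
minimal among nonempty signed supports of zero-sum sequences over `G₀`. -/
def IsElemZeroSumSeq {r : ℕ} (G₀ : Set (Fin r → ℤ)) (S : Multiset (Fin r → ℤ)) : Prop :=
  IsZeroSumSeq G₀ S ∧ signedSupp S ≠ ∅ ∧
    ∀ T : Multiset (Fin r → ℤ), IsZeroSumSeq G₀ T → signedSupp T ≠ ∅ →
      signedSupp T ⊆ signedSupp S → signedSupp T = signedSupp S

/-- An elementary atom over `G₀`. -/
def IsElemAtom {r : ℕ} (G₀ : Set (Fin r → ℤ)) (S : Multiset (Fin r → ℤ)) : Prop :=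
  IsAtomSeq G₀ S ∧ IsElemZeroSumSeq G₀ S

namespace Stmt1Aux

open Multiset

variable {r : ℕ}

def fS (S : Multiset (Fin r → ℤ)) (x : Fin r → ℤ) : ℤ :=
  (S.count x : ℤ) - (S.count (-x) : ℤ)

lemma fS_neg (S : Multiset (Fin r → ℤ)) (x : Fin r → ℤ) : fS S (-x) = - fS S x := by
  simp [fS, neg_neg]

lemma mem_signedSupp (S : Multiset (Fin r → ℤ)) (x : Fin r → ℤ) :
    x ∈ signedSupp S ↔ fS S x ≠ 0 := by
  simp only [signedSupp, Set.mem_setOf_eq, fS, sub_ne_zero]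
  exact ⟨fun h h' => h (by exact_mod_cast h'), fun h h' => h (by exact_mod_cast h')⟩

lemma atom_count (U : Multiset (Fin r → ℤ))
    (hmin : ∀ T : Multiset (Fin r → ℤ), T ≤ U → T ≠ 0 → T.sum = 0 → T = U)
    (hss : signedSupp U ≠ ∅) (x : Fin r → ℤ) :
    U.count x = 0 ∨ U.count (-x) = 0 := by
  by_contra hc
  push_neg at hc
  obtain ⟨h1, h2⟩ := hc
  have hxU : x ∈ U := by rw [← count_pos]; omega
  have hxU' : -x ∈ U := by rw [← count_pos]; omega
  by_cases hx : x = -x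
  · have hx0 : x = 0 := by
      funext i
      have h3 : x i = -(x i) := congrFun hx i
      show x i = 0
      omega
    subst hx0
    have hle : ({0} : Multiset (Fin r → ℤ)) ≤ U := singleton_le.mpr hxU
    have := hmin {0} hle (by simp) (by simp)
    apply hss
    rw [← this]
    ext y
    simp only [signedSupp, Set.mem_setOf_eq, count_singleton, Set.mem_empty_iff_false,
      iff_false, not_not, neg_eq_zero]
  · have hle : (x ::ₘ {-x}) ≤ U := by
      rw [le_iff_count]
      intro y
      rw [count_cons, count_singleton]
      by_cases hyx : y = x
      · subst hyx
        rw [if_pos rfl, if_neg hx]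
        omega
      · rw [if_neg hyx]
        by_cases hy2 : y = -x
        · subst hy2
          rw [if_pos rfl]
          omega
        · rw [if_neg hy2]
          omega
    have := hmin (x ::ₘ {-x}) hle (cons_ne_zero) (by simp)
    apply hss
    rw [← this]
    ext y
    simp only [signedSupp, Set.mem_setOf_eq, count_cons, count_singleton,
      Set.mem_empty_iff_false, iff_false, not_not]
    have e1 : (-y = x) ↔ (y = -x) := by
      constructor
      · intro hh; rw [← hh, neg_neg]
      · intro hh; rw [hh, neg_neg]
    have e2 : (-y = -x) ↔ (y = x) := by
      constructor <;> (intro hh; simpa using congrArg Neg.neg hh)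
    simp only [e1, e2]
    omega

lemma count_eq_max (U : Multiset (Fin r → ℤ))
    (hd : ∀ x, U.count x = 0 ∨ U.count (-x) = 0) (x : Fin r → ℤ) :
    (U.count x : ℤ) = max (fS U x) 0 := by
  rcases hd x with h | h
  · simp only [fS, h, Nat.cast_zero, zero_sub]
    omega
  · simp only [fS, h, Nat.cast_zero, sub_zero]
    omega

lemma sum_finset_sum {β M : Type*} [AddCommMonoid M] (s : Finset β) (f : β → Multiset M) :
    (∑ b ∈ s, f b).sum = ∑ b ∈ s, (f b).sum := by
  classical
  induction s using Finset.cons_induction with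
  | empty => simp
  | cons a s ha ih => rw [Finset.sum_cons, Finset.sum_cons, Multiset.sum_add, ih]

lemma count_finset_sum {β : Type*} (s : Finset β) (f : β → Multiset (Fin r → ℤ))
    (x : Fin r → ℤ) : (∑ b ∈ s, f b).count x = ∑ b ∈ s, (f b).count x := by
  classical
  induction s using Finset.cons_induction with
  | empty => simp
  | cons a s ha ih => rw [Finset.sum_cons, Finset.sum_cons, Multiset.count_add, ih]

lemma sum_nsmul' {M : Type*} [AddCommMonoid M] (n : ℕ) (S : Multiset M) :
    (n • S).sum = n • S.sum := by
  induction n with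
  | zero => simp
  | succ k ih => rw [succ_nsmul, succ_nsmul, Multiset.sum_add, ih]

lemma toFinset_sum_count_smul_eq {M : Type*} [AddCommMonoid M] [DecidableEq M]
    (s : Multiset M) : ∑ a ∈ s.toFinset, s.count a • a = s.sum := by
  conv_rhs => rw [← Multiset.toFinset_sum_count_nsmul_eq s]
  rw [sum_finset_sum]
  exact Finset.sum_congr rfl fun a _ => by rw [sum_nsmul', Multiset.sum_singleton]

end Stmt1Aux


open Stmt1Aux Multiset

/-- If `U` and `V` are elementary atoms over `G₀` with the same signed support,
then `U = V` or `U = -V`. -/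
theorem stmt1 {r : ℕ} (G₀ : Set (Fin r → ℤ)) (U V : Multiset (Fin r → ℤ))
    (hU : IsElemAtom G₀ U) (hV : IsElemAtom G₀ V)
    (h : signedSupp U = signedSupp V) :
    U = V ∨ U = V.map (fun g => -g) := by
  classical
  obtain ⟨⟨⟨hUG, hUsum⟩, hUne, hUmin⟩, _, hUss, hUelem⟩ := hU
  obtain ⟨⟨⟨hVG, hVsum⟩, hVne, hVmin⟩, _, hVss, _⟩ := hV
  have hAU := Stmt1Aux.atom_count U hUmin hUss
  have hAV := Stmt1Aux.atom_count V hVmin hVss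
  have hcU := Stmt1Aux.count_eq_max U hAU
  have hcV := Stmt1Aux.count_eq_max V hAV
  have hSig : ∀ x, fS U x ≠ 0 ↔ fS V x ≠ 0 := by
    intro x
    rw [← mem_signedSupp, ← mem_signedSupp, h]
  by_cases hop : ∃ w, 0 < fS U w ∧ fS V w < 0
  · -- opposite signs somewhere : conclude U = -V
    obtain ⟨w, hw1, hw2⟩ := hop
    set a : ℤ := -fS V w with ha_def
    set b : ℤ := fS U w with hb_def
    have ha : 0 < a := by rw [ha_def]; omega
    have hb : 0 < b := hw1
    set T : Multiset (Fin r → ℤ) := a.toNat • U + b.toNat • V with hT_def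
    have hcountT : ∀ x, (T.count x : ℤ) = a * U.count x + b * V.count x := by
      intro x
      rw [hT_def, count_add, count_nsmul, count_nsmul]
      push_cast
      rw [Int.toNat_of_nonneg ha.le, Int.toNat_of_nonneg hb.le]
    have hfT : ∀ x, fS T x = a * fS U x + b * fS V x := by
      intro x
      simp only [fS]
      rw [hcountT, hcountT]
      ring
    have hTzs : IsZeroSumSeq G₀ T := by
      constructor
      · intro g hg
        rcases Multiset.mem_add.mp hg with hg | hg
        · exact hUG g (Multiset.mem_of_mem_nsmul hg)
        · exact hVG g (Multiset.mem_of_mem_nsmul hg)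
      · rw [hT_def, Multiset.sum_add, sum_nsmul', sum_nsmul', hUsum, hVsum]
        simp
    have hsupT : signedSupp T ⊆ signedSupp U := by
      intro x hx
      rw [mem_signedSupp] at hx ⊢
      intro h0
      have h0' : fS V x = 0 := by
        by_contra h0'
        exact ((hSig x).mpr h0') h0
      exact hx (by rw [hfT, h0, h0']; ring)
    have hwT : fS T w = 0 := by
      rw [hfT, ha_def, hb_def]; ring
    have hTempty : signedSupp T = ∅ := by
      by_contra hne
      have heq := hUelem T hTzs hne hsupT
      have hwmem : w ∈ signedSupp T := by
        rw [heq, mem_signedSupp]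
        omega
      rw [mem_signedSupp] at hwmem
      exact hwmem hwT
    have hprop : ∀ x, a * fS U x + b * fS V x = 0 := by
      intro x
      have hx : x ∉ signedSupp T := by rw [hTempty]; exact Set.notMem_empty x
      rw [mem_signedSupp, not_not] at hx
      rw [← hfT]; exact hx
    right
    have hmapcount : ∀ W : Multiset (Fin r → ℤ), ∀ x,
        (W.map (fun g => -g)).count x = W.count (-x) := by
      intro W x
      have := Multiset.count_map_eq_count' (fun g : Fin r → ℤ => -g) W neg_injective (-x)
      simpa [neg_neg] using this
    have hmapsum : ∀ W : Multiset (Fin r → ℤ), W.sum = 0 → (W.map (fun g => -g)).sum = 0 := by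
      intro W hW
      have : (W.map (fun g : Fin r → ℤ => -g)).sum = -W.sum := Multiset.sum_map_neg' W
      rw [this, hW, neg_zero]
    rcases le_total a b with hab | hab
    · -- -V ≤ U
      have hle : V.map (fun g => -g) ≤ U := by
        rw [le_iff_count]
        intro x
        have key : (V.count (-x) : ℤ) ≤ (U.count x : ℤ) := by
          rw [hcV, hcU, fS_neg]
          have hPx := hprop x
          rcases le_or_gt (-fS V x) 0 with h0 | h0
          · exact max_le (le_trans h0 (le_max_right _ _)) (le_max_right _ _)
          · have h1 : 0 < fS U x := by nlinarith
            have h2 : -fS V x ≤ fS U x := by nlinarith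
            exact max_le (le_trans h2 (le_max_left _ _)) (le_max_right _ _)
        rw [hmapcount]
        exact_mod_cast key
      have hne0 : V.map (fun g => -g) ≠ 0 := by
        simp [Multiset.map_eq_zero, hVne]
      exact (hUmin _ hle hne0 (hmapsum V hVsum)).symm
    · -- -U ≤ V
      have hle : U.map (fun g => -g) ≤ V := by
        rw [le_iff_count]
        intro x
        have key : (U.count (-x) : ℤ) ≤ (V.count x : ℤ) := by
          rw [hcV, hcU, fS_neg]
          have hPx := hprop x
          rcases le_or_gt (-fS U x) 0 with h0 | h0
          · exact max_le (le_trans h0 (le_max_right _ _)) (le_max_right _ _)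
          · have h1 : 0 < fS V x := by nlinarith
            have h2 : -fS U x ≤ fS V x := by nlinarith
            exact max_le (le_trans h2 (le_max_left _ _)) (le_max_right _ _)
        rw [hmapcount]
        exact_mod_cast key
      have hne0 : U.map (fun g => -g) ≠ 0 := by
        simp [Multiset.map_eq_zero, hUne]
      have hUV : U.map (fun g => -g) = V := hVmin _ hle hne0 (hmapsum U hUsum)
      rw [← hUV, Multiset.map_map]
      rw [show ((fun g : Fin r → ℤ => -g) ∘ (fun g : Fin r → ℤ => -g)) = id from
        funext fun g => by simp, Multiset.map_id]
  · -- same sign everywhere : conclude U = V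
    push_neg at hop
    have hpos : ∀ x, 0 < fS U x ↔ 0 < fS V x := by
      intro x
      constructor
      · intro hx
        have h1 := hop x hx
        have h2 : fS V x ≠ 0 := (hSig x).mp hx.ne'
        omega
      · intro hx
        have h2 : fS U x ≠ 0 := (hSig x).mpr hx.ne'
        rcases lt_or_gt_of_ne h2 with hlt | hgt
        · exfalso
          have h3 : 0 < fS U (-x) := by rw [fS_neg]; omega
          have h4 := hop _ h3
          rw [fS_neg] at h4
          omega
        · exact hgt
    have hposU : ∀ x, (0 < fS U x) ↔ 0 < U.count x := by
      intro x
      rw [← Nat.cast_pos (α := ℤ), hcU x, lt_max_iff]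
      simp
    have hposV : ∀ x, (0 < fS V x) ↔ 0 < V.count x := by
      intro x
      rw [← Nat.cast_pos (α := ℤ), hcV x, lt_max_iff]
      simp
    have hFmem : ∀ x, x ∈ U.toFinset ↔ 0 < fS U x := by
      intro x
      rw [mem_toFinset, ← count_pos, ← hposU]
    have hFV : U.toFinset = V.toFinset := by
      ext x
      rw [hFmem, mem_toFinset, ← count_pos, ← hposV, hpos]
    have hFne : U.toFinset.Nonempty := toFinset_nonempty.mpr hUne
    obtain ⟨g, hgF, hgmax⟩ :=
      U.toFinset.exists_max_image (fun h => (fS V h : ℚ) / (fS U h)) hFne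
    have hgU : 0 < fS U g := (hFmem g).mp hgF
    have hgV : 0 < fS V g := (hpos g).mp hgU
    set d : (Fin r → ℤ) → ℤ := fun x => fS V g * fS U x - fS U g * fS V x with hd_def
    have hdneg : ∀ x, d (-x) = -d x := by
      intro x
      simp only [hd_def, fS_neg]
      ring
    have hdF : ∀ x ∈ U.toFinset, 0 ≤ d x := by
      intro x hx
      have h1 : 0 < fS U x := (hFmem x).mp hx
      have h2 := hgmax x hx
      rw [div_le_div_iff₀ (by exact_mod_cast h1) (by exact_mod_cast hgU)] at h2
      have h3 : fS V x * fS U g ≤ fS V g * fS U x := by exact_mod_cast h2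
      simp only [hd_def]
      linarith
    set T : Multiset (Fin r → ℤ) :=
      ∑ hh ∈ U.toFinset, Multiset.replicate (d hh).toNat hh with hT_def
    have hcT : ∀ x, T.count x = if x ∈ U.toFinset then (d x).toNat else 0 := by
      intro x
      rw [hT_def, count_finset_sum]
      rw [Finset.sum_congr rfl fun hh _ => Multiset.count_replicate x hh _]
      exact Finset.sum_ite_eq' _ x _
    have hTzs : IsZeroSumSeq G₀ T := by
      constructor
      · intro gg hgg
        have hc : 0 < T.count gg := count_pos.mpr hgg
        rw [hcT] at hc
        by_cases hm : gg ∈ U.toFinset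
        · exact hUG gg (mem_toFinset.mp hm)
        · rw [if_neg hm] at hc; omega
      · have h1 : T.sum = ∑ hh ∈ U.toFinset, (d hh).toNat • hh := by
          rw [hT_def, sum_finset_sum]
          exact Finset.sum_congr rfl fun hh _ => Multiset.sum_replicate _ _
        have h2 : ∀ hh ∈ U.toFinset,
            (d hh).toNat • hh =
              fS V g • ((U.count hh : ℤ) • hh) - fS U g • ((V.count hh : ℤ) • hh) := by
          intro hh hhF
          have e1 : (d hh).toNat • hh = d hh • hh := by
            rw [← natCast_zsmul, Int.toNat_of_nonneg (hdF hh hhF)]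
          have hcount : 0 < U.count hh := count_pos.mpr (mem_toFinset.mp hhF)
          have hUn : U.count (-hh) = 0 := by
            rcases hAU hh with h' | h'
            · omega
            · exact h'
          have hcountV : 0 < V.count hh := by
            rw [← hposV, ← hpos, ← hFmem]; exact hhF
          have hVn : V.count (-hh) = 0 := by
            rcases hAV hh with h' | h'
            · omega
            · exact h'
          have efU : fS U hh = (U.count hh : ℤ) := by simp [fS, hUn]
          have efV : fS V hh = (V.count hh : ℤ) := by simp [fS, hVn]
          rw [e1]
          simp only [hd_def]
          rw [sub_smul, mul_smul, mul_smul, efU, efV]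
        rw [h1, Finset.sum_congr rfl h2, Finset.sum_sub_distrib, ← Finset.smul_sum,
          ← Finset.smul_sum]
        have hsU : ∑ hh ∈ U.toFinset, (U.count hh : ℤ) • hh = 0 := by
          have : ∀ hh ∈ U.toFinset, (U.count hh : ℤ) • hh = U.count hh • hh := by
            intro hh _; rw [natCast_zsmul]
          rw [Finset.sum_congr rfl this, Stmt1Aux.toFinset_sum_count_smul_eq, hUsum]
        have hsV : ∑ hh ∈ U.toFinset, (V.count hh : ℤ) • hh = 0 := by
          have : ∀ hh ∈ U.toFinset, (V.count hh : ℤ) • hh = V.count hh • hh := by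
            intro hh _; rw [natCast_zsmul]
          rw [Finset.sum_congr rfl this, hFV, Stmt1Aux.toFinset_sum_count_smul_eq, hVsum]
        rw [hsU, hsV, smul_zero, smul_zero, sub_zero]
    have hfT : ∀ x, fS T x = d x := by
      intro x
      simp only [fS]
      rw [hcT, hcT]
      by_cases h1 : x ∈ U.toFinset
      · have h2 : -x ∉ U.toFinset := by
          intro h2
          rw [hFmem] at h1 h2
          rw [fS_neg] at h2
          omega
        rw [if_pos h1, if_neg h2, Int.toNat_of_nonneg (hdF x h1)]
        simp
      · by_cases h2 : -x ∈ U.toFinset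
        · rw [if_neg h1, if_pos h2, Int.toNat_of_nonneg (hdF _ h2), hdneg]
          simp
        · rw [if_neg h1, if_neg h2]
          have hU0 : fS U x = 0 := by
            by_contra h0
            rcases lt_or_gt_of_ne h0 with hlt | hgt
            · apply h2
              rw [hFmem, fS_neg]
              omega
            · exact h1 ((hFmem x).mpr hgt)
          have hV0 : fS V x = 0 := by
            by_contra h0
            exact ((hSig x).mpr h0) hU0
          simp [hd_def, hU0, hV0]
    have hsupT : signedSupp T ⊆ signedSupp U := by
      intro x hx
      rw [mem_signedSupp] at hx ⊢
      rw [hfT] at hx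
      intro h0
      have hV0 : fS V x = 0 := by
        by_contra h0'
        exact ((hSig x).mpr h0') h0
      apply hx
      simp [hd_def, h0, hV0]
    have hgT : fS T g = 0 := by
      rw [hfT]
      simp only [hd_def]
      ring
    have hTempty : signedSupp T = ∅ := by
      by_contra hne
      have heq := hUelem T hTzs hne hsupT
      have hgmem : g ∈ signedSupp T := by
        rw [heq, mem_signedSupp]
        omega
      rw [mem_signedSupp] at hgmem
      exact hgmem hgT
    have hprop : ∀ x, fS V g * fS U x = fS U g * fS V x := by
      intro x
      have hx : x ∉ signedSupp T := by rw [hTempty]; exact Set.notMem_empty x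
      rw [mem_signedSupp, not_not, hfT] at hx
      simp only [hd_def] at hx
      linarith
    left
    rcases le_total (fS U g) (fS V g) with hab | hab
    · -- U ≤ V
      have hle : U ≤ V := by
        rw [le_iff_count]
        intro x
        have key : (U.count x : ℤ) ≤ (V.count x : ℤ) := by
          rw [hcU, hcV]
          have hPx := hprop x
          rcases le_or_gt (fS U x) 0 with h0 | h0
          · exact max_le (le_trans h0 (le_max_right _ _)) (le_max_right _ _)
          · have h1 : 0 < fS V x := (hpos x).mp h0
            have h2 : fS U x ≤ fS V x := by nlinarith
            exact max_le (le_trans h2 (le_max_left _ _)) (le_max_right _ _)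
        exact_mod_cast key
      exact hVmin U hle hUne hUsum
    · -- V ≤ U
      have hle : V ≤ U := by
        rw [le_iff_count]
        intro x
        have key : (V.count x : ℤ) ≤ (U.count x : ℤ) := by
          rw [hcU, hcV]
          have hPx := hprop x
          rcases le_or_gt (fS V x) 0 with h0 | h0
          · exact max_le (le_trans h0 (le_max_right _ _)) (le_max_right _ _)
          · have h1 : 0 < fS U x := (hpos x).mpr h0
            have h2 : fS V x ≤ fS U x := by nlinarith
            exact max_le (le_trans h2 (le_max_left _ _)) (le_max_right _ _)
        exact_mod_cast key
      exact (hUmin V hle hVne hVsum).symm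
end

section
/- Every elementary zero-sum sequence S over G_0 can be written as S = R · U^ℓ for some ℓ ≥ 1, an elementary atom U with supp⁺(U) = supp⁺(S), and a zero-sum sequence R that factors into zero-sum subsequences each of length at most 2. -/
lemma signedSupp_neg_mem {r : ℕ} {S : Multiset (Fin r → ℤ)} {g : Fin r → ℤ}
    (h : g ∈ signedSupp S) : -g ∈ signedSupp S := by
  simp only [signedSupp, Set.mem_setOf_eq, neg_neg] at *
  exact fun e => h e.symm

def Reduced {r : ℕ} (S : Multiset (Fin r → ℤ)) : Prop := ∀ g ∈ S, -g ∉ S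

lemma reduced_mem_signedSupp {r : ℕ} {S : Multiset (Fin r → ℤ)} (hred : Reduced S)
    {g : Fin r → ℤ} (hg : g ∈ S) : g ∈ signedSupp S := by
  have h1 : 0 < S.count g := Multiset.count_pos.2 hg
  have h2 : S.count (-g) = 0 := Multiset.count_eq_zero.2 (hred g hg)
  simp only [signedSupp, Set.mem_setOf_eq, h2]
  omega

lemma reduced_of_le {r : ℕ} {S T : Multiset (Fin r → ℤ)} (h : T ≤ S) (hred : Reduced S) :
    Reduced T := fun g hg hng => hred g (Multiset.mem_of_le h hg) (Multiset.mem_of_le h hng)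

lemma pairs_lemma {r : ℕ} (n : ℕ) (R : Multiset (Fin r → ℤ)) (hcard : Multiset.card R ≤ n)
    (hsym : ∀ g, R.count g = R.count (-g)) :
    ∃ parts : Multiset (Multiset (Fin r → ℤ)),
      parts.sum = R ∧ ∀ T ∈ parts, T.sum = 0 ∧ Multiset.card T ≤ 2 := by
  induction n generalizing R with
  | zero =>
    have : R = 0 := Multiset.card_eq_zero.1 (Nat.le_zero.1 hcard)
    exact ⟨0, by simp [this], by simp⟩
  | succ n ih =>
    rcases eq_or_ne R 0 with rfl | hne
    · exact ⟨0, by simp, by simp⟩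
    obtain ⟨g, hg⟩ := Multiset.exists_mem_of_ne_zero hne
    rcases eq_or_ne g 0 with rfl | hg0
    · -- remove {0}
      have hle : ({(0 : Fin r → ℤ)} : Multiset _) ≤ R := Multiset.singleton_le.2 hg
      obtain ⟨R', rfl⟩ := Multiset.le_iff_exists_add.1 hle
      have hsym' : ∀ g, R'.count g = R'.count (-g) := by
        intro g
        have := hsym g
        rcases eq_or_ne g 0 with rfl | h0
        · simp
        · simpa [Multiset.count_singleton, h0, neg_eq_zero] using this
      obtain ⟨parts, hp1, hp2⟩ := ih R' (by simp at hcard ⊢; omega) hsym'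
      refine ⟨({(0:Fin r → ℤ)} : Multiset _) ::ₘ parts, by simp [hp1], ?_⟩
      intro T hT
      rcases Multiset.mem_cons.1 hT with rfl | hT
      · simp
      · exact hp2 T hT
    · -- remove {g, -g}
      have hng : -g ∈ R := by
        rw [← Multiset.count_pos, ← hsym]
        exact Multiset.count_pos.2 hg
      have hgg : g ≠ -g := by
        intro h
        apply hg0
        funext i
        have := congrFun h i
        simp only [Pi.neg_apply] at this
        show g i = 0
        omega
      have hggs : -g ≠ g := Ne.symm hgg
      have hcg := Multiset.count_pos.2 hg
      have hcng := Multiset.count_pos.2 hng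
      have hle : ({g, -g} : Multiset _) ≤ R := by
        rw [Multiset.le_iff_count]
        intro x
        rw [show ({g, -g} : Multiset (Fin r → ℤ)) = g ::ₘ {-g} from rfl,
          Multiset.count_cons, Multiset.count_singleton]
        by_cases e1 : x = g <;> by_cases e2 : x = -g
        · exact absurd (e1 ▸ e2) hgg
        · subst e1; simp [e2]; omega
        · subst e2; simp [hggs]; omega
        · simp [e1, e2]
      obtain ⟨R', hR⟩ := Multiset.le_iff_exists_add.1 hle
      have hcount : ∀ x, Multiset.count x ({g, -g} : Multiset (Fin r → ℤ)) =
          Multiset.count (-x) ({g, -g} : Multiset (Fin r → ℤ)) := by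
        intro x
        rw [show ({g, -g} : Multiset (Fin r → ℤ)) = g ::ₘ {-g} from rfl]
        simp only [Multiset.count_cons, Multiset.count_singleton]
        have h1 : (-x = g) ↔ (x = -g) := neg_eq_iff_eq_neg
        have h2 : (-x = -g) ↔ (x = g) := neg_inj
        by_cases e1 : x = g <;> by_cases e2 : x = -g
        · exact absurd (e1 ▸ e2) hgg
        all_goals simp [e1, e2, h1, h2, hgg, hggs]
      have hsym' : ∀ x, R'.count x = R'.count (-x) := by
        intro x
        have h1 := hsym x
        rw [hR] at h1
        simp only [Multiset.count_add] at h1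
        have h2 := hcount x
        omega
      have hcard' : Multiset.card R' ≤ n := by
        have := congrArg Multiset.card hR
        rw [Multiset.card_add] at this
        rw [show Multiset.card ({g, -g} : Multiset (Fin r → ℤ)) = 2 from rfl] at this
        omega
      obtain ⟨parts, hp1, hp2⟩ := ih R' hcard' hsym'
      refine ⟨({g, -g} : Multiset _) ::ₘ parts, by rw [Multiset.sum_cons, hp1, ← hR], ?_⟩
      intro T hT
      rcases Multiset.mem_cons.1 hT with rfl | hT
      · refine ⟨?_, le_refl _⟩
        show (g ::ₘ ({-g} : Multiset _)).sum = 0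
        simp
      · exact hp2 T hT

lemma atom_exists {r : ℕ} (G₀ : Set (Fin r → ℤ)) (n : ℕ) (T : Multiset (Fin r → ℤ))
    (hcard : Multiset.card T ≤ n) (hG : ∀ g ∈ T, g ∈ G₀) (hsum : T.sum = 0) (hne : T ≠ 0) :
    ∃ U, U ≤ T ∧ IsAtomSeq G₀ U := by
  induction n generalizing T with
  | zero => exact absurd (Multiset.card_eq_zero.1 (Nat.le_zero.1 hcard)) hne
  | succ n ih =>
    by_cases hmin : ∀ W : Multiset (Fin r → ℤ), W ≤ T → W ≠ 0 → W.sum = 0 → W = T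
    · exact ⟨T, le_refl _, ⟨hG, hsum⟩, hne, hmin⟩
    · push_neg at hmin
      obtain ⟨W, hWle, hWne, hWsum, hWneT⟩ := hmin
      have hWlt : W < T := lt_of_le_of_ne hWle hWneT
      have : Multiset.card W ≤ n := by
        have := Multiset.card_lt_card hWlt
        omega
      exact (ih W this (fun g hg => hG g (Multiset.mem_of_le hWle hg)) hWsum hWne).imp
        (fun U hU => ⟨hU.1.trans hWle, hU.2⟩)

lemma sum_over {r : ℕ} (W : Multiset (Fin r → ℤ)) (F : Finset (Fin r → ℤ))
    (h : ∀ x ∉ F, W.count x = 0) :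
    ∑ i ∈ F, W.count i • i = W.sum := by
  have key : ∑ i ∈ F, W.count i • ({i} : Multiset (Fin r → ℤ)) = W := by
    conv_rhs => rw [← Multiset.toFinset_sum_count_nsmul_eq W]
    refine (Finset.sum_subset ?_ ?_).symm
    · intro x hx
      rw [Multiset.mem_toFinset] at hx
      by_contra hxF
      exact (Multiset.count_pos.2 hx).ne' (h x hxF)
    · intro x _ hx
      rw [Multiset.mem_toFinset] at hx
      rw [Multiset.count_eq_zero.2 hx, zero_smul]
  calc ∑ i ∈ F, W.count i • i
      = ∑ i ∈ F, (W.count i • ({i} : Multiset (Fin r → ℤ))).sum := by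
        apply Finset.sum_congr rfl
        intro i _
        rw [Multiset.sum_nsmul, Multiset.sum_singleton]
    _ = (∑ i ∈ F, W.count i • ({i} : Multiset (Fin r → ℤ))).sum := by
        rw [Multiset.sum_sum]
    _ = W.sum := by rw [key]

lemma reduced_sub_signedSupp {r : ℕ} {S' T : Multiset (Fin r → ℤ)} (hred : Reduced S')
    (hle : T ≤ S') : signedSupp T ⊆ signedSupp S' := by
  intro h hh
  simp only [signedSupp, Set.mem_setOf_eq] at hh
  rcases Nat.eq_zero_or_pos (T.count h) with h0 | hpos
  · have hpos : 0 < T.count (-h) := by omega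
    have h1 := reduced_mem_signedSupp hred (Multiset.mem_of_le hle (Multiset.count_pos.1 hpos))
    simpa using signedSupp_neg_mem h1
  · exact reduced_mem_signedSupp hred (Multiset.mem_of_le hle (Multiset.count_pos.1 hpos))

lemma reduced_ne_signedSupp {r : ℕ} {T : Multiset (Fin r → ℤ)} (hred : Reduced T)
    (hne : T ≠ 0) : signedSupp T ≠ ∅ := by
  obtain ⟨x, hx⟩ := Multiset.exists_mem_of_ne_zero hne
  intro h
  exact (h ▸ reduced_mem_signedSupp hred hx : x ∈ (∅ : Set (Fin r → ℤ)))

/-- Any nonzero zero-sum subsequence of a reduced `S'` with full signed support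
has full signed support, in particular positive count at every element of `S'`. -/

lemma sub_full_count {r : ℕ} {G₀ : Set (Fin r → ℤ)} {S S' T : Multiset (Fin r → ℤ)}
    (hS : IsElemZeroSumSeq G₀ S) (hred : Reduced S') (hG : ∀ g ∈ S', g ∈ G₀)
    (hsupp : signedSupp S' = signedSupp S) (hle : T ≤ S') (hne : T ≠ 0) (hsum : T.sum = 0) :
    (signedSupp T = signedSupp S) ∧ ∀ g ∈ S', 0 < T.count g := by
  have hTG : ∀ g ∈ T, g ∈ G₀ := fun g hg => hG g (Multiset.mem_of_le hle hg)
  have hTred : Reduced T := reduced_of_le hle hred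
  have heq : signedSupp T = signedSupp S :=
    hS.2.2 T ⟨hTG, hsum⟩ (reduced_ne_signedSupp hTred hne)
      (hsupp ▸ reduced_sub_signedSupp hred hle)
  refine ⟨heq, fun g hg => ?_⟩
  have hgs : g ∈ signedSupp T := heq ▸ hsupp ▸ reduced_mem_signedSupp hred hg
  simp only [signedSupp, Set.mem_setOf_eq] at hgs
  have hneg : T.count (-g) = 0 := by
    rw [Multiset.count_eq_zero]
    intro hmem
    exact hred g hg (Multiset.mem_of_le hle hmem)
  omega

lemma atom_unique {r : ℕ} {G₀ : Set (Fin r → ℤ)} {S S' U₁ U₂ : Multiset (Fin r → ℤ)}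
    (hS : IsElemZeroSumSeq G₀ S) (hred : Reduced S') (hG : ∀ g ∈ S', g ∈ G₀)
    (hsupp : signedSupp S' = signedSupp S)
    (h₁ : IsAtomSeq G₀ U₁) (h₂ : IsAtomSeq G₀ U₂) (hle₁ : U₁ ≤ S') (hle₂ : U₂ ≤ S') :
    U₁ = U₂ := by
  set a : (Fin r → ℤ) → ℕ := fun g => U₁.count g with ha
  set b : (Fin r → ℤ) → ℕ := fun g => U₂.count g with hb
  have hpos₁ : ∀ g ∈ S', 0 < a g :=
    (sub_full_count hS hred hG hsupp hle₁ h₁.2.1 h₁.1.2).2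
  have hpos₂ : ∀ g ∈ S', 0 < b g :=
    (sub_full_count hS hred hG hsupp hle₂ h₂.2.1 h₂.1.2).2
  set F : Finset (Fin r → ℤ) := S'.toFinset with hF
  have hmemF : ∀ x, x ∈ F ↔ x ∈ S' := fun x => Multiset.mem_toFinset
  have hcount0 : ∀ x ∉ F, S'.count x = 0 := fun x hx =>
    Multiset.count_eq_zero.2 (fun h => hx ((hmemF x).2 h))
  have hcount₁ : ∀ x ∉ F, U₁.count x = 0 := fun x hx =>
    Nat.eq_zero_of_le_zero ((hcount0 x hx) ▸ Multiset.le_iff_count.1 hle₁ x)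
  have hcount₂ : ∀ x ∉ F, U₂.count x = 0 := fun x hx =>
    Nat.eq_zero_of_le_zero ((hcount0 x hx) ▸ Multiset.le_iff_count.1 hle₂ x)
  have hFne : F.Nonempty := by
    obtain ⟨x, hx⟩ := Multiset.exists_mem_of_ne_zero
      (fun h0 : U₁ = 0 => h₁.2.1 h0 : U₁ ≠ 0)
    exact ⟨x, (hmemF x).2 (Multiset.mem_of_le hle₁ hx)⟩
  obtain ⟨j, hjF, hjmin⟩ := F.exists_min_image (fun i => (b i : ℚ) / (a i)) hFne
  have hjS' : j ∈ S' := (hmemF j).1 hjF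
  have key : ∀ i ∈ F, b j * a i ≤ a j * b i := by
    intro i hi
    have hiS' : i ∈ S' := (hmemF i).1 hi
    have h := hjmin i hi
    rw [div_le_div_iff₀ (by exact_mod_cast hpos₁ j hjS') (by exact_mod_cast hpos₁ i hiS')] at h
    have : (b j : ℚ) * a i ≤ b i * a j := h
    rw [mul_comm (b i : ℚ)] at this
    exact_mod_cast this
  set c : (Fin r → ℤ) → ℕ := fun i => a j * b i - b j * a i with hc
  set T : Multiset (Fin r → ℤ) := ∑ i ∈ F, c i • ({i} : Multiset (Fin r → ℤ)) with hT
  have hTcount : ∀ x, T.count x = if x ∈ F then c x else 0 := by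
    intro x
    rw [hT, Multiset.count_sum']
    simp only [Multiset.count_nsmul, Multiset.count_singleton, mul_ite, mul_one, mul_zero]
    exact Finset.sum_ite_eq F x c
  rcases eq_or_ne T 0 with hT0 | hTne
  · -- proportional case
    have hprop : ∀ i ∈ F, a j * b i = b j * a i := by
      intro i hi
      have := hTcount i
      rw [hT0, Multiset.count_zero, if_pos hi] at this
      have := this.symm
      have hk := key i hi
      simp only [hc] at this
      omega
    rcases le_total (a j) (b j) with hab | hab
    · have hU : U₁ ≤ U₂ := by
        rw [Multiset.le_iff_count]
        intro x
        by_cases hx : x ∈ F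
        · have h1 := hprop x hx
          have h2 : b j * a x ≤ b j * b x := by
            calc b j * a x = a j * b x := h1.symm
              _ ≤ b j * b x := Nat.mul_le_mul_right _ hab
          exact Nat.le_of_mul_le_mul_left h2 (hpos₂ j hjS')
        · rw [hcount₁ x hx]; exact Nat.zero_le _
      exact h₂.2.2 U₁ hU h₁.2.1 h₁.1.2
    · have hU : U₂ ≤ U₁ := by
        rw [Multiset.le_iff_count]
        intro x
        by_cases hx : x ∈ F
        · have h1 := hprop x hx
          have h2 : a j * b x ≤ a j * a x := by
            calc a j * b x = b j * a x := h1
              _ ≤ a j * a x := Nat.mul_le_mul_right _ hab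
          exact Nat.le_of_mul_le_mul_left h2 (hpos₁ j hjS')
        · rw [hcount₂ x hx]; exact Nat.zero_le _
      exact (h₁.2.2 U₂ hU h₂.2.1 h₂.1.2).symm
  · -- contradiction case
    exfalso
    have hTmemF : ∀ x ∈ T, x ∈ F := by
      intro x hx
      by_contra hxF
      exact (Multiset.count_pos.2 hx).ne' ((hTcount x).trans (if_neg hxF))
    have hTG : ∀ g ∈ T, g ∈ G₀ := fun g hg => hG g ((hmemF g).1 (hTmemF g hg))
    have hTsum : T.sum = 0 := by
      have hsum1 : ∑ i ∈ F, a i • i = (0 : Fin r → ℤ) := by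
        rw [sum_over U₁ F hcount₁]; exact h₁.1.2
      have hsum2 : ∑ i ∈ F, b i • i = (0 : Fin r → ℤ) := by
        rw [sum_over U₂ F hcount₂]; exact h₂.1.2
      have hexp : T.sum = ∑ i ∈ F, c i • i := by
        rw [hT, Multiset.sum_sum]
        apply Finset.sum_congr rfl
        intro i _
        rw [Multiset.sum_nsmul, Multiset.sum_singleton]
      have hsplit : ∑ i ∈ F, c i • i + ∑ i ∈ F, (b j * a i) • i
          = ∑ i ∈ F, (a j * b i) • i := by
        rw [← Finset.sum_add_distrib]
        apply Finset.sum_congr rfl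
        intro i hi
        rw [← add_smul]
        congr 1
        have := key i hi
        simp only [hc]
        omega
      have e1 : ∑ i ∈ F, (b j * a i) • i = (0 : Fin r → ℤ) := by
        calc ∑ i ∈ F, (b j * a i) • i = ∑ i ∈ F, b j • (a i • i) := by
              apply Finset.sum_congr rfl; intro i _; rw [mul_smul]
          _ = b j • ∑ i ∈ F, a i • i := (Finset.smul_sum).symm
          _ = 0 := by rw [hsum1, smul_zero]
      have e2 : ∑ i ∈ F, (a j * b i) • i = (0 : Fin r → ℤ) := by
        calc ∑ i ∈ F, (a j * b i) • i = ∑ i ∈ F, a j • (b i • i) := by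
              apply Finset.sum_congr rfl; intro i _; rw [mul_smul]
          _ = a j • ∑ i ∈ F, b i • i := (Finset.smul_sum).symm
          _ = 0 := by rw [hsum2, smul_zero]
      rw [hexp]
      rw [e1, e2] at hsplit
      simpa using hsplit
    have hnegF : ∀ x ∈ F, -x ∉ F := by
      intro x hx hnx
      exact hred x ((hmemF x).1 hx) ((hmemF (-x)).1 hnx)
    have hTsub : signedSupp T ⊆ signedSupp S := by
      intro h hh
      simp only [signedSupp, Set.mem_setOf_eq] at hh
      rcases Nat.eq_zero_or_pos (T.count h) with h0 | hpos
      · have hpos : 0 < T.count (-h) := by omega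
        have : -h ∈ S' := (hmemF _).1 (hTmemF _ (Multiset.count_pos.1 hpos))
        have := reduced_mem_signedSupp hred this
        rw [hsupp] at this
        simpa using signedSupp_neg_mem this
      · have : h ∈ S' := (hmemF _).1 (hTmemF _ (Multiset.count_pos.1 hpos))
        exact hsupp ▸ reduced_mem_signedSupp hred this
    have hTssne : signedSupp T ≠ ∅ := by
      obtain ⟨x, hx⟩ := Multiset.exists_mem_of_ne_zero hTne
      have hxF := hTmemF x hx
      have hnx : T.count (-x) = 0 := (hTcount (-x)).trans (if_neg (hnegF x hxF))
      intro hcon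
      have : x ∈ signedSupp T := by
        simp only [signedSupp, Set.mem_setOf_eq, hnx]
        exact (Multiset.count_pos.2 hx).ne'
      exact (hcon ▸ this : x ∈ (∅ : Set (Fin r → ℤ)))
    have heq := hS.2.2 T ⟨hTG, hTsum⟩ hTssne hTsub
    have hjS : j ∈ signedSupp S := hsupp ▸ reduced_mem_signedSupp hred hjS'
    rw [← heq] at hjS
    simp only [signedSupp, Set.mem_setOf_eq] at hjS
    apply hjS
    rw [(hTcount j).trans (if_pos hjF), (hTcount (-j)).trans (if_neg (hnegF j hjF))]
    simp only [hc]
    rw [mul_comm (a j) (b j), Nat.sub_self]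

lemma power_lemma {r : ℕ} {G₀ : Set (Fin r → ℤ)} {S : Multiset (Fin r → ℤ)}
    (hS : IsElemZeroSumSeq G₀ S) (n : ℕ) :
    ∀ S' : Multiset (Fin r → ℤ), Multiset.card S' ≤ n → Reduced S' →
    (∀ g ∈ S', g ∈ G₀) → S'.sum = 0 → signedSupp S' = signedSupp S → S' ≠ 0 →
    ∃ (U : Multiset (Fin r → ℤ)) (l : ℕ),
      IsAtomSeq G₀ U ∧ U ≤ S' ∧ 1 ≤ l ∧ S' = l • U := by
  induction n with
  | zero =>
    intro S' hcard _ _ _ _ hne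
    exact absurd (Multiset.card_eq_zero.1 (Nat.le_zero.1 hcard)) hne
  | succ n ih =>
    intro S' hcard hred hG hsum hsupp hne
    obtain ⟨U, hUle, hUatom⟩ := atom_exists G₀ (Multiset.card S') S' le_rfl hG hsum hne
    obtain ⟨V, hV⟩ := Multiset.le_iff_exists_add.1 hUle
    rcases eq_or_ne V 0 with rfl | hVne
    · exact ⟨U, 1, hUatom, hUle, le_rfl, by simpa using hV⟩
    · have hVle : V ≤ S' := by rw [hV]; exact Multiset.le_add_left V U
      have hVsum : V.sum = 0 := by
        have := hsum
        rw [hV, Multiset.sum_add, hUatom.1.2, zero_add] at this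
        exact this
      have hVsupp : signedSupp V = signedSupp S :=
        (sub_full_count hS hred hG hsupp hVle hVne hVsum).1
      have hUcard : 1 ≤ Multiset.card U := by
        rw [Nat.one_le_iff_ne_zero]
        exact fun h => hUatom.2.1 (Multiset.card_eq_zero.1 h)
      have hVcard : Multiset.card V ≤ n := by
        have := congrArg Multiset.card hV
        rw [Multiset.card_add] at this
        omega
      obtain ⟨U', l', hU'atom, hU'le, hl', hVeq⟩ := ih V hVcard (reduced_of_le hVle hred)
        (fun g hg => hG g (Multiset.mem_of_le hVle hg)) hVsum hVsupp hVne
      have hUU' : U = U' := atom_unique hS hred hG hsupp hUatom hU'atom hUle (hU'le.trans hVle)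
      refine ⟨U, l' + 1, hUatom, hUle, by omega, ?_⟩
      rw [hV, hVeq, ← hUU', succ_nsmul, add_comm]

lemma sum_parts_zero {r : ℕ} (parts : Multiset (Multiset (Fin r → ℤ)))
    (h : ∀ T ∈ parts, T.sum = 0) : parts.sum.sum = 0 := by
  induction parts using Multiset.induction_on with
  | empty => simp
  | cons T parts ih =>
    rw [Multiset.sum_cons, Multiset.sum_add, h T (Multiset.mem_cons_self T parts),
      ih (fun W hW => h W (Multiset.mem_cons_of_mem hW)), zero_add]

/-- Every elementary zero-sum sequence `S` over `G₀` can be written as `S = R + ℓ • U`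
with `ℓ ≥ 1`, `U` an elementary atom with `supp⁺(U) = supp⁺(S)`, and `R` a zero-sum
sequence factoring into zero-sum subsequences each of length at most 2. -/
theorem stmt2 {r : ℕ} (G₀ : Set (Fin r → ℤ)) (S : Multiset (Fin r → ℤ))
    (hS : IsElemZeroSumSeq G₀ S) :
    ∃ (l : ℕ) (U R : Multiset (Fin r → ℤ)),
      1 ≤ l ∧ IsElemAtom G₀ U ∧ signedSupp U = signedSupp S ∧
      IsZeroSumSeq G₀ R ∧
      (∃ parts : Multiset (Multiset (Fin r → ℤ)),
        parts.sum = R ∧ ∀ T ∈ parts, T.sum = 0 ∧ Multiset.card T ≤ 2) ∧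
      S = R + l • U := by
  classical
  set m : (Fin r → ℤ) → ℕ := fun x => S.count x with hm
  set S' : Multiset (Fin r → ℤ) :=
    ∑ x ∈ S.toFinset, (m x - m (-x)) • ({x} : Multiset (Fin r → ℤ)) with hS'
  have hcS' : ∀ x, S'.count x = m x - m (-x) := by
    intro x
    rw [hS', Multiset.count_sum']
    simp only [Multiset.count_nsmul, Multiset.count_singleton, mul_ite, mul_one, mul_zero]
    rw [Finset.sum_ite_eq S.toFinset x (fun i => m i - m (-i))]
    by_cases hx : x ∈ S.toFinset
    · rw [if_pos hx]
    · rw [if_neg hx]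
      have : m x = 0 := Multiset.count_eq_zero.2 (fun h => hx (Multiset.mem_toFinset.2 h))
      omega
  have hS'le : S' ≤ S := by
    rw [Multiset.le_iff_count]
    intro x
    rw [hcS' x]
    simp only [hm]
    omega
  set R₀ : Multiset (Fin r → ℤ) := S - S' with hR₀
  have hsplit : S' + R₀ = S := add_tsub_cancel_of_le hS'le
  have hcR₀ : ∀ x, R₀.count x = m x - S'.count x := by
    intro x; rw [hR₀, Multiset.count_sub]
  have hsupp' : signedSupp S' = signedSupp S := by
    ext g
    simp only [signedSupp, Set.mem_setOf_eq]
    rw [hcS' g, hcS' (-g), neg_neg]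
    simp only [hm]
    omega
  have hred' : Reduced S' := by
    intro g hg hng
    have h1 : 0 < S'.count g := Multiset.count_pos.2 hg
    have h2 : 0 < S'.count (-g) := Multiset.count_pos.2 hng
    rw [hcS' g] at h1
    rw [hcS' (-g), neg_neg] at h2
    omega
  have hGS' : ∀ g ∈ S', g ∈ G₀ := fun g hg => hS.1.1 g (Multiset.mem_of_le hS'le hg)
  have hRsym : ∀ x, R₀.count x = R₀.count (-x) := by
    intro x
    rw [hcR₀ x, hcR₀ (-x), hcS' x, hcS' (-x), neg_neg]
    omega
  obtain ⟨parts, hparts1, hparts2⟩ :=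
    pairs_lemma (Multiset.card R₀) R₀ le_rfl hRsym
  have hRsum : R₀.sum = 0 := by
    rw [← hparts1]
    exact sum_parts_zero parts (fun T hT => (hparts2 T hT).1)
  have hS'sum : S'.sum = 0 := by
    have := hS.1.2
    rw [← hsplit, Multiset.sum_add, hRsum, add_zero] at this
    exact this
  have hS'ne : S' ≠ 0 := by
    intro h0
    apply hS.2.1
    rw [← hsupp', h0]
    ext g
    simp [signedSupp]
  obtain ⟨U, l, hUatom, hUle, hl, hS'eq⟩ :=
    power_lemma hS (Multiset.card S') S' le_rfl hred' hGS' hS'sum hsupp' hS'ne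
  have hUsupp : signedSupp U = signedSupp S :=
    (sub_full_count hS hred' hGS' hsupp' hUle hUatom.2.1 hUatom.1.2).1
  have hUelem : IsElemZeroSumSeq G₀ U := by
    refine ⟨hUatom.1, ?_, ?_⟩
    · rw [hUsupp]; exact hS.2.1
    · intro T hT1 hT2 hT3
      rw [hUsupp] at hT3 ⊢
      exact hS.2.2 T hT1 hT2 hT3
  have hRG : ∀ g ∈ R₀, g ∈ G₀ := fun g hg =>
    hS.1.1 g (Multiset.mem_of_le (Multiset.sub_le_self S S') hg)
  refine ⟨l, U, R₀, hl, ⟨hUatom, hUelem⟩, hUsupp, ⟨hRG, hRsum⟩,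
    ⟨parts, hparts1, hparts2⟩, ?_⟩
  rw [← hsplit, hS'eq, add_comm]
end

section
/- If S is a rational zero-sum sequence over G_0 with nonempty signed support, then there exists an elementary atom U ∈ A(G_0) with supp(U) ⊆ supp(S). -/
section Aux
variable {r : ℕ}

/-- Build a multiset from nonnegative integer multiplicities on a finset. -/
private noncomputable def mkSeq (Q : Finset (Fin r → ℤ)) (f : (Fin r → ℤ) → ℤ) :
    Multiset (Fin r → ℤ) :=
  ∑ q ∈ Q, Multiset.replicate (f q).toNat q

private lemma count_mkSeq (Q : Finset (Fin r → ℤ)) (f : (Fin r → ℤ) → ℤ) (g : Fin r → ℤ) :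
    (mkSeq Q f).count g = if g ∈ Q then (f g).toNat else 0 := by
  classical
  simp [mkSeq, Multiset.count_sum', Multiset.count_replicate, Finset.sum_ite_eq]

private lemma mem_mkSeq (Q : Finset (Fin r → ℤ)) (f : (Fin r → ℤ) → ℤ) (g : Fin r → ℤ) :
    g ∈ mkSeq Q f ↔ g ∈ Q ∧ 0 < f g := by
  rw [← Multiset.count_pos, count_mkSeq]
  split
  · simp only [Int.lt_toNat, Int.ofNat_zero]
    exact ⟨fun h => ⟨‹_›, by exact_mod_cast h⟩, fun h => by exact_mod_cast h.2⟩
  · simp [*]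

private lemma sum_mkSeq (Q : Finset (Fin r → ℤ)) (f : (Fin r → ℤ) → ℤ)
    (hf : ∀ q ∈ Q, 0 ≤ f q) (hsum : ∀ i, ∑ q ∈ Q, f q * q i = 0) :
    (mkSeq Q f).sum = 0 := by
  classical
  funext i
  have h1 : (mkSeq Q f).sum i = ∑ q ∈ Q, ((f q).toNat : ℤ) * q i := by
    rw [mkSeq]
    rw [show (∑ q ∈ Q, Multiset.replicate (f q).toNat q).sum
        = ∑ q ∈ Q, (Multiset.replicate (f q).toNat q).sum by
      exact map_sum Multiset.sumAddMonoidHom _ Q]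
    simp [Multiset.sum_replicate, Finset.sum_apply, nsmul_eq_mul]
  rw [h1]
  have : ∀ q ∈ Q, ((f q).toNat : ℤ) * q i = f q * q i := by
    intro q hq; rw [Int.toNat_of_nonneg (hf q hq)]
  rw [Finset.sum_congr rfl this, hsum i]
  rfl

/-- Evaluate the sum of a multiset of vectors at a coordinate. -/
private lemma sum_coord (S : Multiset (Fin r → ℤ)) (i : Fin r) :
    S.sum i = ∑ g ∈ S.toFinset, (S.count g : ℤ) * g i := by
  classical
  have h := (Pi.evalAddMonoidHom (fun _ : Fin r => ℤ) i).map_multiset_sum S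
  rw [Finset.sum_multiset_map_count] at h
  simpa [nsmul_eq_mul] using h

/-- Reindexing a sum over a negation-symmetric finset. -/
private lemma sum_neg_reindex {R : Type*} [CommRing R] (B : Finset (Fin r → ℤ))
    (hB : ∀ g ∈ B, -g ∈ B) (c : (Fin r → ℤ) → R) (φ : (Fin r → ℤ) → R)
    (hφ : ∀ g, φ (-g) = -φ g) :
    ∑ g ∈ B, c (-g) * φ g = -∑ g ∈ B, c g * φ g := by
  classical
  rw [← Finset.sum_neg_distrib]
  refine Finset.sum_nbij' (fun g => -g) (fun g => -g) ?_ ?_ ?_ ?_ ?_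
  · intro a ha; exact hB a ha
  · intro a ha; exact hB a ha
  · intro a _; simp
  · intro a _; simp
  · intro a _; simp only [hφ]; ring

end Aux

/-- A rational zero-sum sequence over `G₀ ⊆ ℤ^r`: finitely supported nonnegative rational
multiplicities supported in `G₀`, with weighted sum zero (coordinatewise in `ℚ`). -/
def IsRatZSeq {r : ℕ} (G₀ : Set (Fin r → ℤ)) (v : (Fin r → ℤ) →₀ ℚ) : Prop :=
  (∀ g, 0 ≤ v g) ∧ (∀ g, v g ≠ 0 → g ∈ G₀) ∧
    ∀ i : Fin r, (v.sum fun g q => q * (g i : ℚ)) = 0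

private lemma exists_atom {r : ℕ} (G₀ : Set (Fin r → ℤ)) :
    ∀ (n : ℕ) (S : Multiset (Fin r → ℤ)), Multiset.card S ≤ n → IsZeroSumSeq G₀ S → S ≠ 0 →
      ∃ A, A ≤ S ∧ IsAtomSeq G₀ A := by
  intro n
  induction n with
  | zero =>
    intro S hc hS h0
    exact absurd (Multiset.card_eq_zero.mp (Nat.le_zero.mp hc)) h0
  | succ n ih =>
    intro S hc hS h0
    by_cases hmin : ∀ T : Multiset (Fin r → ℤ), T ≤ S → T ≠ 0 → T.sum = 0 → T = S
    · exact ⟨S, le_refl S, hS, h0, hmin⟩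
    · push_neg at hmin
      obtain ⟨T, hTle, hT0, hTsum, hTne⟩ := hmin
      have hlt : Multiset.card T < Multiset.card S :=
        Multiset.card_lt_card (lt_of_le_of_ne hTle hTne)
      obtain ⟨A, hAle, hA⟩ := ih T (by omega)
        ⟨fun g hg => hS.1 g (Multiset.subset_of_le hTle hg), hTsum⟩ hT0
      exact ⟨A, le_trans hAle hTle, hA⟩

/-- If `S` is a rational zero-sum sequence over `G₀` with nonempty signed support, then
there exists an elementary atom `U ∈ A(G₀)` with `supp(U) ⊆ supp(S)`. -/
theorem stmt3 {r : ℕ} (G₀ : Set (Fin r → ℤ)) (v : (Fin r → ℤ) →₀ ℚ)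
    (hv : IsRatZSeq G₀ v) (hsupp : ∃ g, v g ≠ v (-g)) :
    ∃ U : Multiset (Fin r → ℤ), IsElemAtom G₀ U ∧ ∀ g ∈ U, 0 < v g := by
  classical
  obtain ⟨hv0, hvG, hvsum⟩ := hv
  set P₀ : Finset (Fin r → ℤ) := v.support.filter (fun g => v (-g) < v g) with hP₀def
  have hmemP : ∀ g, g ∈ P₀ ↔ v (-g) < v g := by
    intro g
    simp only [hP₀def, Finset.mem_filter, Finsupp.mem_support_iff]
    exact ⟨fun h => h.2, fun h => ⟨(lt_of_le_of_lt (hv0 (-g)) h).ne', h⟩⟩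
  have hPv : ∀ g ∈ P₀, 0 < v g := fun g hg => lt_of_le_of_lt (hv0 (-g)) ((hmemP g).mp hg)
  have hPG : ∀ g ∈ P₀, g ∈ G₀ := fun g hg => hvG g (hPv g hg).ne'
  have hPneg : ∀ g ∈ P₀, -g ∉ P₀ := by
    intro g hg hg'
    rw [hmemP] at hg hg'
    rw [neg_neg] at hg'
    exact absurd hg (not_lt.mpr hg'.le)
  -- the rational weights u
  set u : (Fin r → ℤ) → ℚ := fun g => max (v g - v (-g)) 0 with hudef
  have hu_sub : ∀ g, u g - u (-g) = v g - v (-g) := by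
    intro g
    simp only [hudef, neg_neg]
    rcases le_total (v g) (v (-g)) with h | h
    · rw [max_eq_right (by linarith), max_eq_left (by linarith)]; ring
    · rw [max_eq_left (by linarith), max_eq_right (by linarith)]; ring
  have hu_pos : ∀ g ∈ P₀, 0 < u g := by
    intro g hg
    have h := (hmemP g).mp hg
    simp only [hudef]
    rw [max_eq_left (by linarith)]; linarith
  have hu_zero : ∀ g, g ∉ P₀ → u g = 0 := by
    intro g hg
    rw [hmemP] at hg
    simp only [hudef]
    exact max_eq_right (by linarith [not_lt.mp hg])
  -- symmetric superset B of the support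
  set B : Finset (Fin r → ℤ) := v.support ∪ v.support.image (fun g => -g) with hBdef
  have hBsymm : ∀ g ∈ B, -g ∈ B := by
    intro g hg
    rw [hBdef, Finset.mem_union] at hg ⊢
    rcases hg with hg | hg
    · exact Or.inr (Finset.mem_image.mpr ⟨g, hg, rfl⟩)
    · obtain ⟨h, hh, rfl⟩ := Finset.mem_image.mp hg
      exact Or.inl (by rwa [neg_neg])
  have hsuppB : v.support ⊆ B := Finset.subset_union_left
  have hPB : P₀ ⊆ B := fun g hg => hsuppB (Finset.mem_of_mem_filter g (hP₀def ▸ hg))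
  have hvB : ∀ i, ∑ g ∈ B, v g * ((g i : ℤ) : ℚ) = 0 := by
    intro i
    rw [← Finset.sum_subset hsuppB (fun x _ hx => by
      rw [Finsupp.notMem_support_iff.mp hx, zero_mul])]
    exact hvsum i
  have hu_sumP : ∀ i, ∑ q ∈ P₀, u q * ((q i : ℤ) : ℚ) = 0 := by
    intro i
    have hnu : ∑ g ∈ B, u (-g) * ((g i : ℤ) : ℚ) = -∑ g ∈ B, u g * ((g i : ℤ) : ℚ) :=
      sum_neg_reindex B hBsymm _ _ (fun g => by push_cast [Pi.neg_apply]; ring)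
    have hnv : ∑ g ∈ B, v (-g) * ((g i : ℤ) : ℚ) = -∑ g ∈ B, v g * ((g i : ℤ) : ℚ) :=
      sum_neg_reindex B hBsymm _ _ (fun g => by push_cast [Pi.neg_apply]; ring)
    have h1 : ∑ g ∈ B, (u g - u (-g)) * ((g i : ℤ) : ℚ)
        = ∑ g ∈ B, (v g - v (-g)) * ((g i : ℤ) : ℚ) :=
      Finset.sum_congr rfl (fun g _ => by rw [hu_sub])
    have e1 : ∑ g ∈ B, (u g - u (-g)) * ((g i : ℤ) : ℚ)
        = ∑ g ∈ B, u g * ((g i : ℤ) : ℚ) - ∑ g ∈ B, u (-g) * ((g i : ℤ) : ℚ) := by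
      rw [← Finset.sum_sub_distrib]
      exact Finset.sum_congr rfl (fun g _ => by ring)
    have e2 : ∑ g ∈ B, (v g - v (-g)) * ((g i : ℤ) : ℚ)
        = ∑ g ∈ B, v g * ((g i : ℤ) : ℚ) - ∑ g ∈ B, v (-g) * ((g i : ℤ) : ℚ) := by
      rw [← Finset.sum_sub_distrib]
      exact Finset.sum_congr rfl (fun g _ => by ring)
    have hB0 : ∑ g ∈ B, u g * ((g i : ℤ) : ℚ) = 0 := by
      have hv0' := hvB i
      linarith [h1, e1, e2, hnu, hnv]
    rw [Finset.sum_subset hPB (fun x _ hx => by rw [hu_zero x hx, zero_mul])]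
    exact hB0
  -- P₀ is nonempty
  have hP0ne : P₀.Nonempty := by
    obtain ⟨g₁, hg₁⟩ := hsupp
    rcases lt_or_gt_of_ne hg₁ with h | h
    · exact ⟨-g₁, (hmemP _).mpr (by rwa [neg_neg])⟩
    · exact ⟨g₁, (hmemP _).mpr h⟩
  -- clear denominators
  set N : ℕ := ∏ q ∈ P₀, (u q).den with hNdef
  have hN : 0 < N := Finset.prod_pos (fun q _ => (u q).pos)
  set f₀ : (Fin r → ℤ) → ℤ := fun q => ((N / (u q).den : ℕ) : ℤ) * (u q).num with hf₀def
  have hf₀cast : ∀ q ∈ P₀, (f₀ q : ℚ) = (N : ℚ) * u q := by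
    intro q hq
    have hd : (u q).den ∣ N := Finset.dvd_prod_of_mem _ hq
    have hden : ((u q).den : ℚ) ≠ 0 := by
      exact_mod_cast (u q).pos.ne'
    simp only [hf₀def]
    rw [Int.cast_mul, Int.cast_natCast, Nat.cast_div hd hden]
    rw [div_mul_eq_mul_div, mul_div_assoc]
    congr 1
    exact_mod_cast (u q).num_div_den
  have hf₀pos : ∀ q ∈ P₀, 0 < f₀ q := by
    intro q hq
    have h : (0 : ℚ) < (f₀ q : ℚ) := by
      rw [hf₀cast q hq]
      exact mul_pos (by exact_mod_cast hN) (hu_pos q hq)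
    exact_mod_cast h
  have hf₀sum : ∀ i, ∑ q ∈ P₀, f₀ q * q i = 0 := by
    intro i
    have h : ((∑ q ∈ P₀, f₀ q * q i : ℤ) : ℚ) = 0 := by
      push_cast
      calc ∑ q ∈ P₀, (f₀ q : ℚ) * ((q i : ℤ) : ℚ)
          = ∑ q ∈ P₀, (N : ℚ) * (u q * ((q i : ℤ) : ℚ)) :=
            Finset.sum_congr rfl (fun q hq => by rw [hf₀cast q hq]; ring)
        _ = (N : ℚ) * ∑ q ∈ P₀, u q * ((q i : ℤ) : ℚ) := by rw [Finset.mul_sum]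
        _ = 0 := by rw [hu_sumP i, mul_zero]
    exact_mod_cast h
  -- the starting integral zero-sum sequence
  have hW₀mem : ∀ g ∈ mkSeq P₀ f₀, g ∈ P₀ := fun g hg => ((mem_mkSeq _ _ g).mp hg).1
  have hW₀0 : mkSeq P₀ f₀ ≠ 0 := by
    obtain ⟨q, hq⟩ := hP0ne
    intro h
    have hm : q ∈ mkSeq P₀ f₀ := (mem_mkSeq _ _ q).mpr ⟨hq, hf₀pos q hq⟩
    rw [h] at hm
    exact Multiset.notMem_zero q hm
  have hW₀sum : (mkSeq P₀ f₀).sum = 0 := sum_mkSeq P₀ f₀ (fun q hq => (hf₀pos q hq).le) hf₀sum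
  -- minimize support cardinality
  have hex : ∃ n, ∃ T : Multiset (Fin r → ℤ),
      (T ≠ 0 ∧ T.sum = 0 ∧ ∀ g ∈ T, g ∈ P₀) ∧ T.toFinset.card = n :=
    ⟨_, mkSeq P₀ f₀, ⟨hW₀0, hW₀sum, hW₀mem⟩, rfl⟩
  obtain ⟨W, ⟨hW0, hWsum, hWmem⟩, hWcard⟩ := Nat.find_spec hex
  have hmincard : ∀ T : Multiset (Fin r → ℤ), T ≠ 0 → T.sum = 0 → (∀ g ∈ T, g ∈ P₀) →
      Nat.find hex ≤ T.toFinset.card :=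
    fun T h1 h2 h3 => Nat.find_le ⟨T, ⟨h1, h2, h3⟩, rfl⟩
  -- extract an atom
  obtain ⟨A, hAle, hA⟩ := exists_atom G₀ (Multiset.card W) W le_rfl
    ⟨fun g hg => hPG g (hWmem g hg), hWsum⟩ hW0
  have hAmem : ∀ g ∈ A, g ∈ P₀ := fun g hg => hWmem g (Multiset.subset_of_le hAle hg)
  have hAsum : A.sum = 0 := hA.1.2
  have hA0 : A ≠ 0 := hA.2.1
  set Q : Finset (Fin r → ℤ) := A.toFinset with hQdef
  have hQsub : Q ⊆ W.toFinset := Multiset.toFinset_subset.mpr (Multiset.subset_of_le hAle)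
  have hQcard : ∀ T : Multiset (Fin r → ℤ), T ≠ 0 → T.sum = 0 → (∀ g ∈ T, g ∈ P₀) →
      Q.card ≤ T.toFinset.card := by
    intro T h1 h2 h3
    calc Q.card ≤ W.toFinset.card := Finset.card_le_card hQsub
      _ = Nat.find hex := hWcard
      _ ≤ _ := hmincard T h1 h2 h3
  have hQP : ∀ q ∈ Q, q ∈ P₀ := fun q hq => hAmem q (Multiset.mem_toFinset.mp hq)
  have hQne : Q.Nonempty := by
    obtain ⟨g, hg⟩ := Multiset.exists_mem_of_ne_zero hA0
    exact ⟨g, Multiset.mem_toFinset.mpr hg⟩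
  have hQneg : ∀ q ∈ Q, -q ∉ Q := fun q hq hq' => hPneg q (hQP q hq) (hQP _ hq')
  have hacount : ∀ q ∈ Q, 0 < A.count q := fun q hq =>
    Multiset.count_pos.mpr (Multiset.mem_toFinset.mp hq)
  have hAcoord : ∀ i, ∑ q ∈ Q, (A.count q : ℤ) * q i = 0 := by
    intro i
    have h := sum_coord A i
    rw [hAsum] at h
    simpa using h.symm
  have hcz : ∀ g, g ∉ Q → A.count g = 0 := fun g hg =>
    Multiset.count_eq_zero.mpr (fun h => hg (Multiset.mem_toFinset.mpr h))
  have hsignA : ∀ g, g ∈ signedSupp A ↔ (g ∈ Q ∨ -g ∈ Q) := by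
    intro g
    constructor
    · intro h
      by_contra hc
      push_neg at hc
      exact h (by rw [hcz g hc.1, hcz (-g) hc.2])
    · rintro (h | h)
      · have h1 := hacount g h
        have h2 : A.count (-g) = 0 := hcz _ (hQneg g h)
        simp only [signedSupp, Set.mem_setOf_eq]
        omega
      · have h1 := hacount _ h
        have h2 : A.count g = 0 := hcz _ (fun hgQ => hQneg g hgQ h)
        simp only [signedSupp, Set.mem_setOf_eq]
        omega
  refine ⟨A, ⟨hA, hA.1, ?_, ?_⟩, fun g hg => hPv g (hAmem g hg)⟩
  · obtain ⟨q, hq⟩ := hQne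
    exact Set.nonempty_iff_ne_empty.mp ⟨q, (hsignA q).mpr (Or.inl hq)⟩
  · intro T hT hTne hTsub
    set e : (Fin r → ℤ) → ℤ := fun g => (T.count g : ℤ) - (T.count (-g) : ℤ) with hedef
    have hesign : ∀ g, e g ≠ 0 ↔ g ∈ signedSupp T := by
      intro g
      simp only [hedef, signedSupp, Set.mem_setOf_eq, sub_ne_zero, ne_eq, Nat.cast_inj]
    have heneg : ∀ g, e (-g) = -e g := by
      intro g; simp only [hedef, neg_neg]; ring
    have hesum : ∀ i, ∑ q ∈ Q, e q * q i = 0 := by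
      intro i
      set B' : Finset (Fin r → ℤ) :=
        (T.toFinset ∪ T.toFinset.image (fun g => -g)) ∪ (Q ∪ Q.image (fun g => -g)) with hB'def
      have hB'symm : ∀ g ∈ B', -g ∈ B' := by
        intro g hg
        simp only [hB'def, Finset.mem_union, Finset.mem_image] at hg ⊢
        rcases hg with (hg | ⟨h, hh, rfl⟩) | (hg | ⟨h, hh, rfl⟩)
        · exact Or.inl (Or.inr ⟨g, hg, rfl⟩)
        · exact Or.inl (Or.inl (by rwa [neg_neg]))
        · exact Or.inr (Or.inr ⟨g, hg, rfl⟩)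
        · exact Or.inr (Or.inl (by rwa [neg_neg]))
      have hTB' : T.toFinset ⊆ B' :=
        fun g hg => Finset.mem_union_left _ (Finset.mem_union_left _ hg)
      have hQB' : Q ∪ Q.image (fun g => -g) ⊆ B' := Finset.subset_union_right
      have h1 : ∑ g ∈ B', (T.count g : ℤ) * g i = 0 := by
        have h := sum_coord T i
        rw [hT.2] at h
        rw [← Finset.sum_subset hTB' (fun x _ hx => by
          simp [Multiset.count_eq_zero.mpr (fun h' => hx (Multiset.mem_toFinset.mpr h'))])]
        simpa using h.symm
      have h2 : ∑ g ∈ B', (T.count (-g) : ℤ) * g i = 0 := by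
        have h2' : ∑ g ∈ B', (T.count (-g) : ℤ) * g i = -∑ g ∈ B', (T.count g : ℤ) * g i :=
          sum_neg_reindex B' hB'symm (fun g => (T.count g : ℤ)) (fun g => g i)
            (fun g => by simp [Pi.neg_apply])
        rw [h2', h1, neg_zero]
      have h3 : ∑ g ∈ B', e g * g i = 0 := by
        have he : ∑ g ∈ B', e g * g i
            = ∑ g ∈ B', ((T.count g : ℤ) * g i - (T.count (-g) : ℤ) * g i) :=
          Finset.sum_congr rfl (fun g _ => by simp only [hedef]; ring)
        rw [he, Finset.sum_sub_distrib, h1, h2, sub_zero]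
      have h4 : ∑ g ∈ Q ∪ Q.image (fun g => -g), e g * g i = 0 := by
        have hz : ∀ x ∈ B', x ∉ Q ∪ Q.image (fun g => -g) → e x * x i = 0 := by
          intro x hx hx'
          have hns : x ∉ signedSupp T := fun hmem => hx' (by
            have hsx := hTsub hmem
            rw [hsignA] at hsx
            rcases hsx with h | h
            · exact Finset.mem_union_left _ h
            · exact Finset.mem_union_right _ (Finset.mem_image.mpr ⟨-x, h, by rw [neg_neg]⟩))
          have hzero : e x = 0 := by
            by_contra h5
            exact hns ((hesign x).mp h5)
          rw [hzero, zero_mul]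
        rw [Finset.sum_subset hQB' hz]
        exact h3
      have hdisj : Disjoint Q (Q.image (fun g => -g)) := by
        rw [Finset.disjoint_left]
        intro g hg hg'
        obtain ⟨q, hq, rfl⟩ := Finset.mem_image.mp hg'
        exact hQneg q hq hg
      rw [Finset.sum_union hdisj] at h4
      have h5 : ∑ g ∈ Q.image (fun g => -g), e g * g i = ∑ q ∈ Q, e q * q i := by
        rw [Finset.sum_image (fun x _ y _ h => neg_injective h)]
        refine Finset.sum_congr rfl (fun q _ => ?_)
        rw [heneg]
        simp only [Pi.neg_apply]
        ring
      rw [h5] at h4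
      linarith
    have hq₀ : ∃ q₀ ∈ Q, e q₀ ≠ 0 := by
      obtain ⟨g₀, hg₀⟩ := Set.nonempty_iff_ne_empty.mpr hTne
      have hg₀e : e g₀ ≠ 0 := (hesign g₀).mpr hg₀
      have hsx := hTsub hg₀
      rw [hsignA] at hsx
      rcases hsx with h | h
      · exact ⟨g₀, h, hg₀e⟩
      · refine ⟨-g₀, h, ?_⟩
        rw [heneg]
        simpa using hg₀e
    by_contra hnee
    have hqstar : ∃ q ∈ Q, e q = 0 := by
      by_contra hall
      push_neg at hall
      apply hnee
      refine Set.Subset.antisymm hTsub (fun g hg => ?_)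
      rw [hsignA] at hg
      rcases hg with h | h
      · exact (hesign g).mp (hall g h)
      · have h6 := hall _ h
        have h7 : e g ≠ 0 := by
          intro h8
          apply h6
          rw [heneg, h8, neg_zero]
        exact (hesign g).mp h7
    obtain ⟨qs, hqsQ, hqse⟩ := hqstar
    obtain ⟨q₀, hq₀Q, hq₀e⟩ := hq₀
    by_cases hcase : ∀ q ∈ Q, 0 ≤ e q
    · have hsub' : (mkSeq Q e).toFinset ⊆ Q :=
        fun g hg => ((mem_mkSeq _ _ g).mp (Multiset.mem_toFinset.mp hg)).1
      have hT'mem : ∀ g ∈ mkSeq Q e, g ∈ P₀ := fun g hg => hQP g ((mem_mkSeq _ _ g).mp hg).1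
      have hT'0 : mkSeq Q e ≠ 0 := by
        intro h
        have hm : q₀ ∈ mkSeq Q e := (mem_mkSeq _ _ q₀).mpr
          ⟨hq₀Q, lt_of_le_of_ne (hcase q₀ hq₀Q) (Ne.symm hq₀e)⟩
        rw [h] at hm
        exact Multiset.notMem_zero q₀ hm
      have hT'sum : (mkSeq Q e).sum = 0 := sum_mkSeq Q e hcase hesum
      have hcard := hQcard _ hT'0 hT'sum hT'mem
      have hss : (mkSeq Q e).toFinset ⊂ Q :=
        (Finset.ssubset_iff_of_subset hsub').mpr ⟨qs, hqsQ, fun h => by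
          have := ((mem_mkSeq _ _ qs).mp (Multiset.mem_toFinset.mp h)).2
          omega⟩
      exact absurd hcard (not_le.mpr (Finset.card_lt_card hss))
    · push_neg at hcase
      obtain ⟨q₁, hq₁Q, hq₁e⟩ := hcase
      obtain ⟨q₂, hq₂Q, hq₂min⟩ :=
        Finset.exists_min_image Q (fun q => (e q : ℚ) / (A.count q : ℚ)) hQne
      have hAq : ∀ q ∈ Q, (0 : ℚ) < (A.count q : ℚ) := fun q hq => by
        exact_mod_cast hacount q hq
      have hq₂neg : e q₂ < 0 := by
        have h := hq₂min q₁ hq₁Q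
        have hlt : (e q₂ : ℚ) / (A.count q₂ : ℚ) < 0 :=
          lt_of_le_of_lt h (div_neg_of_neg_of_pos (by exact_mod_cast hq₁e) (hAq q₁ hq₁Q))
        by_contra hc
        push_neg at hc
        exact absurd hlt (not_lt.mpr (div_nonneg (by exact_mod_cast hc) (hAq q₂ hq₂Q).le))
      set f : (Fin r → ℤ) → ℤ :=
        fun q => (-(e q₂)) * (A.count q : ℤ) + (A.count q₂ : ℤ) * e q with hfdef
      have hfnn : ∀ q ∈ Q, 0 ≤ f q := by
        intro q hq
        have h := hq₂min q hq
        rw [div_le_div_iff₀ (hAq q₂ hq₂Q) (hAq q hq)] at h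
        have h' : e q₂ * (A.count q : ℤ) ≤ e q * (A.count q₂ : ℤ) := by exact_mod_cast h
        simp only [hfdef]
        linarith
      have hfq₂ : f q₂ = 0 := by simp only [hfdef]; ring
      have hfqs : 0 < f qs := by
        simp only [hfdef]
        rw [hqse, mul_zero, add_zero]
        exact mul_pos (neg_pos.mpr hq₂neg) (by exact_mod_cast hacount qs hqsQ)
      have hfsum : ∀ i, ∑ q ∈ Q, f q * q i = 0 := by
        intro i
        have hexp : ∑ q ∈ Q, f q * q i
            = (-(e q₂)) * ∑ q ∈ Q, (A.count q : ℤ) * q i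
              + (A.count q₂ : ℤ) * ∑ q ∈ Q, e q * q i := by
          rw [Finset.mul_sum, Finset.mul_sum, ← Finset.sum_add_distrib]
          exact Finset.sum_congr rfl (fun q _ => by simp only [hfdef]; ring)
        rw [hexp, hAcoord i, hesum i, mul_zero, mul_zero, add_zero]
      have hsub' : (mkSeq Q f).toFinset ⊆ Q :=
        fun g hg => ((mem_mkSeq _ _ g).mp (Multiset.mem_toFinset.mp hg)).1
      have hT'mem : ∀ g ∈ mkSeq Q f, g ∈ P₀ := fun g hg => hQP g ((mem_mkSeq _ _ g).mp hg).1
      have hT'0 : mkSeq Q f ≠ 0 := by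
        intro h
        have hm : qs ∈ mkSeq Q f := (mem_mkSeq _ _ qs).mpr ⟨hqsQ, hfqs⟩
        rw [h] at hm
        exact Multiset.notMem_zero qs hm
      have hT'sum : (mkSeq Q f).sum = 0 := sum_mkSeq Q f hfnn hfsum
      have hcard := hQcard _ hT'0 hT'sum hT'mem
      have hss : (mkSeq Q f).toFinset ⊂ Q :=
        (Finset.ssubset_iff_of_subset hsub').mpr ⟨q₂, hq₂Q, fun h => by
          have := ((mem_mkSeq _ _ q₂).mp (Multiset.mem_toFinset.mp h)).2
          omega⟩
      exact absurd hcard (not_le.mpr (Finset.card_lt_card hss))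
end

section
/- The Davenport constant satisfies D(G_0) ≤ max{2, (|G_0^+| − rk⟨G_0⟩) · D^elm(G_0)}, where D^elm(G_0) is the supremum of lengths of elementary atoms. -/
/-- The Davenport constant of `G₀`: the supremum (in `ℕ∞`) of the lengths of atoms
(minimal zero-sum sequences) over `G₀`. -/
noncomputable def Davenport {r : ℕ} (G₀ : Set (Fin r → ℤ)) : ℕ∞ :=
  ⨆ U ∈ {U : Multiset (Fin r → ℤ) | IsAtomSeq G₀ U}, (Multiset.card U : ℕ∞)

/-- The elementary Davenport constant of `G₀`: the supremum (in `ℕ∞`) of the lengths of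
elementary atoms over `G₀`. -/
noncomputable def DavenportElem {r : ℕ} (G₀ : Set (Fin r → ℤ)) : ℕ∞ :=
  ⨆ U ∈ {U : Multiset (Fin r → ℤ) | IsElemAtom G₀ U}, (Multiset.card U : ℕ∞)

/-!
Identify `g` with `-g`: a sequence `S` over `G₀` gives the vector `(v_g(S) - v_{-g}(S))_{g ∈ G₀⁺}`,
which for a zero-sum `S` lies in the kernel `L` of `ℚ^{G₀⁺} → ℚ^r, e_g ↦ g`, a space of dimension
`|G₀⁺| - rk⟨G₀⟩`. An atom `U` of length at least `3` contains no `g` together with `-g`, so it is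
determined by its vector `v`. By the conformal decomposition in `L`, `v = ∑ μᵢ xᵢ` with `μᵢ > 0`
and at most `dim L` linearly independent elementary vectors `xᵢ` of `L` conformal to `v`, and each
`xᵢ` can be taken to be the vector of an elementary atom `Aᵢ`. Conformality makes lengths add,
`|U| = ∑ μᵢ |Aᵢ|`. If some `μᵢ ≥ 1`, then `Aᵢ ≤ U`, so `U = Aᵢ`; otherwise
`|U| ≤ ∑ |Aᵢ| ≤ dim L · D^elm(G₀)`.
-/

open Function Module Submodule

section Conformal

variable {ι κ K : Type*}

def IsConformal [Zero K] [LE K] (w v : ι → K) : Prop :=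
  ∀ i, (0 ≤ v i → 0 ≤ w i) ∧ (v i ≤ 0 → w i ≤ 0)

namespace IsConformal

section Order

variable [Zero K] [PartialOrder K] {u v w : ι → K}

theorem refl (v : ι → K) : IsConformal v v := fun _ => ⟨id, id⟩

theorem trans (h₁ : IsConformal u v) (h₂ : IsConformal v w) : IsConformal u w :=
  fun i => ⟨fun h => (h₁ i).1 ((h₂ i).1 h), fun h => (h₁ i).2 ((h₂ i).2 h)⟩

theorem eq_zero (h : IsConformal w v) {i : ι} (hv : v i = 0) : w i = 0 :=
  le_antisymm ((h i).2 hv.le) ((h i).1 hv.ge)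

theorem support_subset (h : IsConformal w v) : support w ⊆ support v :=
  fun _ hw hv => hw (h.eq_zero hv)

end Order

variable [Ring K] [LinearOrder K] [IsStrictOrderedRing K] {v w : ι → K}

theorem smul (h : IsConformal w v) {c : K} (hc : 0 ≤ c) : IsConformal (c • w) v :=
  fun i => ⟨fun hv => mul_nonneg hc ((h i).1 hv),
    fun hv => mul_nonpos_of_nonneg_of_nonpos hc ((h i).2 hv)⟩

theorem mul_pos (h : IsConformal w v) {i : ι} (hw : w i ≠ 0) : 0 < w i * v i := by
  rcases lt_trichotomy (v i) 0 with hv | hv | hv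
  · exact mul_pos_of_neg_of_neg (((h i).2 hv.le).lt_of_ne hw) hv
  · exact absurd (h.eq_zero hv) hw
  · exact _root_.mul_pos (((h i).1 hv.le).lt_of_ne' hw) hv

theorem abs_apply_eq_sum {s : Finset κ} {μ : κ → K} {x : κ → ι → K}
    (hx : ∀ k ∈ s, IsConformal (x k) v) (hv : v = ∑ k ∈ s, μ k • x k) (i : ι) :
    |v i| = ∑ k ∈ s, μ k * |x k i| := by
  have hvi : v i = ∑ k ∈ s, μ k * x k i := by simp [hv, Finset.sum_apply]
  rcases le_total 0 (v i) with h | h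
  · rw [abs_of_nonneg h, hvi]
    exact Finset.sum_congr rfl fun k hk => by rw [abs_of_nonneg ((hx k hk i).1 h)]
  · rw [abs_of_nonpos h, hvi, ← Finset.sum_neg_distrib]
    exact Finset.sum_congr rfl fun k hk => by rw [abs_of_nonpos ((hx k hk i).2 h), mul_neg]

theorem abs_apply_le {s : Finset κ} {μ : κ → K} {x : κ → ι → K} (hμ : ∀ k ∈ s, 0 ≤ μ k)
    (hx : ∀ k ∈ s, IsConformal (x k) v) (hv : v = ∑ k ∈ s, μ k • x k) {k : κ} (hk : k ∈ s)
    (hμk : 1 ≤ μ k) (i : ι) : |x k i| ≤ |v i| := by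
  rw [abs_apply_eq_sum hx hv]
  calc |x k i| ≤ μ k * |x k i| := le_mul_of_one_le_left (abs_nonneg _) hμk
    _ ≤ ∑ l ∈ s, μ l * |x l i| :=
      Finset.single_le_sum (f := fun l => μ l * |x l i|)
        (fun l hl => mul_nonneg (hμ l hl) (abs_nonneg _)) hk

end IsConformal

variable [Field K] [LinearOrder K] [IsStrictOrderedRing K]

theorem IsConformal.pos_of_smul {w : ι → K} {c d : K} (h : IsConformal (c • w) (d • w))
    (hd : 0 < d) (hcw : c • w ≠ 0) : 0 < c := by
  obtain ⟨i, hi⟩ : ∃ i, (c • w) i ≠ 0 := Function.ne_iff.mp hcw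
  have := h.mul_pos hi
  simp only [Pi.smul_apply, smul_eq_mul] at this
  by_contra! hc
  nlinarith [mul_nonneg hd.le (mul_self_nonneg (w i))]

variable [Fintype ι]

theorem exists_isConformal_sub_smul {v z : ι → K} (hz : z ≠ 0) (hzv : support z ⊆ support v) :
    ∃ t : K, ∃ j, z j ≠ 0 ∧ (v - t • z) j = 0 ∧ IsConformal (v - t • z) v := by
  classical
  obtain ⟨j₀, hj₀⟩ := Function.ne_iff.mp hz
  -- the ratio test: `t = v j / z j` with `|v j / z j|` minimal
  obtain ⟨j, hj, hmin⟩ := (Finset.univ.filter (z · ≠ 0)).exists_min_image (fun i => |v i / z i|)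
    ⟨j₀, by simpa using hj₀⟩
  replace hj : z j ≠ 0 := (Finset.mem_filter.mp hj).2
  refine ⟨v j / z j, j, hj, by simp [hj], fun i => ?_⟩
  by_cases hzi : z i = 0
  · simp [hzi]
  have hvi : v i ≠ 0 := hzv hzi
  have hratio : v j / z j * z i / v i ≤ 1 := by
    have hle := hmin i (by simpa using hzi)
    calc v j / z j * z i / v i ≤ |v j / z j * z i / v i| := le_abs_self _
      _ = |v j / z j| / |v i / z i| := by rw [← abs_div]; congr 1; field_simp
      _ ≤ 1 := div_le_one_of_le₀ hle (abs_nonneg _)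
  have heq : (v - (v j / z j) • z) i = (1 - v j / z j * z i / v i) * v i := by
    simp only [Pi.sub_apply, Pi.smul_apply, smul_eq_mul]
    field_simp
  rw [heq]
  have hs : 0 ≤ 1 - v j / z j * z i / v i := sub_nonneg.mpr hratio
  exact ⟨mul_nonneg hs, mul_nonpos_of_nonneg_of_nonpos hs⟩

variable (L : Submodule K (ι → K))

def IsElementary (w : ι → K) : Prop :=
  w ∈ L ∧ w ≠ 0 ∧ ∀ z ∈ L, support z ⊆ support w → ∃ c : K, z = c • w

theorem exists_isElementary_isConformal {v : ι → K} (hv : v ∈ L) (hv0 : v ≠ 0) :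
    ∃ w, IsElementary L w ∧ IsConformal w v := by
  obtain ⟨w, ⟨hwL, hw0, hwv⟩, hmin⟩ := (measure fun w : ι → K => (support w).ncard).wf.has_min
    {w | w ∈ L ∧ w ≠ 0 ∧ IsConformal w v} ⟨v, hv, hv0, .refl v⟩
  refine ⟨w, ⟨hwL, hw0, fun z hzL hzw => ?_⟩, hwv⟩
  by_contra hno
  obtain ⟨j, hj⟩ : ∃ j, w j ≠ 0 := Function.ne_iff.mp hw0
  -- `z'` vanishes at `j`; moving from `w` along `z'` gives a smaller conformal support
  set z' := z - (z j / w j) • w with hz'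
  have hz'0 : z' ≠ 0 := fun h => hno ⟨z j / w j, sub_eq_zero.mp h⟩
  have hz'j : z' j = 0 := by simp [hz', hj]
  have hz'w : support z' ⊆ support w :=
    (support_sub _ _).trans (Set.union_subset hzw (support_const_smul_subset _ _))
  obtain ⟨t, i, hi, hti, hconf⟩ := exists_isConformal_sub_smul hz'0 hz'w
  refine hmin (w - t • z') ⟨L.sub_mem hwL (L.smul_mem t (L.sub_mem hzL (L.smul_mem _ hwL))),
    fun h => hj (by simpa [hz'j] using congrFun h j), hconf.trans hwv⟩ ?_
  exact Set.ncard_lt_ncard ((Set.ssubset_iff_of_subset hconf.support_subset).mpr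
    ⟨i, hz'w hi, fun h => h hti⟩)

theorem exists_conformal_decomposition {v : ι → K} (hv : v ∈ L) :
    ∃ (k : ℕ) (w : Fin k → ι → K) (μ : Fin k → K), (∀ i, 0 < μ i) ∧
      (∀ i, IsElementary L (w i)) ∧ (∀ i, IsConformal (w i) v) ∧ LinearIndependent K w ∧
      v = ∑ i, μ i • w i := by
  by_cases hv0 : v = 0
  · exact ⟨0, Fin.elim0, Fin.elim0, (·.elim0), (·.elim0), (·.elim0),
      linearIndependent_empty_type, by simp [hv0]⟩
  obtain ⟨w, hw, hwv⟩ := exists_isElementary_isConformal L hv hv0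
  obtain ⟨t, j, hj, htj, hconf⟩ := exists_isConformal_sub_smul hw.2.1 hwv.support_subset
  have ht : 0 < t := by
    have hvj : v j = t * w j := by simpa [sub_eq_zero] using htj
    have := hwv.mul_pos hj
    rw [hvj] at this
    nlinarith [mul_self_pos.mpr hj]
  have hlt : (support (v - t • w)).ncard < (support v).ncard :=
    Set.ncard_lt_ncard ((Set.ssubset_iff_of_subset hconf.support_subset).mpr
      ⟨j, hwv.support_subset hj, fun h => h htj⟩)
  obtain ⟨k, ws, μ, hμ, hws, hwsv, hli, hsum⟩ :=
    exists_conformal_decomposition (L.sub_mem hv (L.smul_mem t hw.1))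
  refine ⟨k + 1, Fin.cons w ws, Fin.cons t μ, Fin.cases ht hμ, Fin.cases hw hws,
    Fin.cases hwv fun i => (hwsv i).trans hconf, ?_, ?_⟩
  · -- `w j ≠ 0`, while every vector in the span of the `ws i` vanishes at `j`
    refine linearIndependent_finCons.mpr ⟨hli, fun hmem => hj ?_⟩
    have hspan : span K (Set.range ws) ≤ LinearMap.ker (LinearMap.proj j) :=
      span_le.mpr (by rintro _ ⟨i, rfl⟩; exact (hwsv i).eq_zero htj)
    simpa using hspan hmem
  · rw [Fin.sum_univ_succ, Fin.cons_zero, Fin.cons_zero]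
    simp only [Fin.cons_succ, ← hsum]
    abel
termination_by (support v).ncard

end Conformal

section ZeroSumSequences

variable {r : ℕ}

abbrev castHom (ι : Type*) : (ι → ℤ) →+ (ι → ℚ) := (Int.castAddHom ℚ).compLeft ι

@[simp] theorem castHom_apply {ι : Type*} (z : ι → ℤ) (i : ι) : castHom ι z i = z i := rfl

theorem castHom_injective (ι : Type*) : Injective (castHom ι) :=
  Int.cast_injective.comp_left

theorem isConformal_castHom_iff {ι : Type*} {a b : ι → ℤ} :
    IsConformal (castHom ι a) (castHom ι b) ↔ IsConformal a b := by
  simp [IsConformal]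

theorem ne_zero_iff_of_castHom_eq_smul {ι : Type*} {z : ι → ℤ} {w : ι → ℚ} {c : ℚ}
    (h : castHom ι z = c • w) (hc : c ≠ 0) (i : ι) : z i ≠ 0 ↔ w i ≠ 0 := by
  simpa [hc] using congrArg (· ≠ 0) (congrFun h i)

theorem exists_castHom_eq_smul {ι : Type*} [Fintype ι] (w : ι → ℚ) :
    ∃ n : ℕ, 0 < n ∧ ∃ z : ι → ℤ, castHom ι z = (n : ℚ) • w := by
  refine ⟨∏ i, (w i).den, Finset.prod_pos fun i _ => (w i).pos,
    fun i => ((∏ k, (w k).den) / (w i).den : ℕ) * (w i).num, funext fun i => ?_⟩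
  obtain ⟨m, hm⟩ : (w i).den ∣ ∏ k, (w k).den := Finset.dvd_prod_of_mem _ (Finset.mem_univ i)
  simp only [castHom_apply, Pi.smul_apply, smul_eq_mul]
  rw [hm, Nat.mul_div_cancel_left _ (w i).pos]
  push_cast
  rw [← Rat.mul_den_eq_num]
  ring

theorem card_le_davenportElem {G : Set (Fin r → ℤ)} {A : Multiset (Fin r → ℤ)}
    (hA : IsElemAtom G A) : (Multiset.card A : ℕ∞) ≤ DavenportElem G :=
  le_iSup₂ (f := fun U (_ : U ∈ {U | IsElemAtom G U}) => (Multiset.card U : ℕ∞)) A hA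

theorem exists_isAtomSeq_le {G : Set (Fin r → ℤ)} {S : Multiset (Fin r → ℤ)}
    (hS : IsZeroSumSeq G S) (hS0 : S ≠ 0) : ∃ A ≤ S, IsAtomSeq G A := by
  obtain ⟨A, ⟨hAS, hA0, hAsum⟩, hmin⟩ := wellFounded_lt.has_min
    {T : Multiset (Fin r → ℤ) | T ≤ S ∧ T ≠ 0 ∧ T.sum = 0} ⟨S, le_rfl, hS0, hS.2⟩
  refine ⟨A, hAS, ⟨fun g hg => hS.1 g (Multiset.mem_of_le hAS hg), hAsum⟩, hA0,
    fun T hTA hT0 hTsum => ?_⟩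
  by_contra hne
  exact hmin T ⟨hTA.trans hAS, hT0, hTsum⟩ (lt_of_le_of_ne hTA hne)

def IsPairFree (S : Multiset (Fin r → ℤ)) : Prop := ∀ g ∈ S, -g ∉ S

theorem IsPairFree.mono {S T : Multiset (Fin r → ℤ)} (hT : IsPairFree T) (h : S ≤ T) :
    IsPairFree S :=
  fun g hg hng => hT g (Multiset.mem_of_le h hg) (Multiset.mem_of_le h hng)

theorem IsPairFree.count_eq_zero_or {S : Multiset (Fin r → ℤ)} (hS : IsPairFree S)
    (g : Fin r → ℤ) : S.count g = 0 ∨ S.count (-g) = 0 := by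
  by_contra! h
  exact hS g (Multiset.count_ne_zero.mp h.1) (Multiset.count_ne_zero.mp h.2)

theorem IsAtomSeq.isPairFree {G : Set (Fin r → ℤ)} {U : Multiset (Fin r → ℤ)}
    (hU : IsAtomSeq G U) (hcard : 3 ≤ Multiset.card U) : IsPairFree U := by
  intro g hg hng
  by_cases hg0 : g = 0
  · subst hg0
    have := hU.2.2 {0} (Multiset.singleton_le.mpr hg) (by simp) (by simp)
    rw [← this] at hcard
    simp at hcard
  · have hnodup : ({g, -g} : Multiset (Fin r → ℤ)).Nodup := by
      simpa [eq_comm, self_eq_neg] using hg0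
    have hle : ({g, -g} : Multiset (Fin r → ℤ)) ≤ U :=
      (Multiset.le_iff_subset hnodup).mpr fun x hx => by
        rcases Multiset.mem_cons.mp hx with rfl | hx
        exacts [hg, Multiset.mem_singleton.mp hx ▸ hng]
    have := hU.2.2 _ hle (by simp) (by simp)
    rw [← this] at hcard
    simp at hcard

/-- `P` plays the role of `G₀⁺`. -/
structure IsHalfSystem (G₀ P : Finset (Fin r → ℤ)) : Prop where
  subset : P ⊆ G₀
  neg_notMem : ∀ g ∈ P, -g ∉ P
  mem_or_neg_mem : ∀ g ∈ G₀, g ≠ 0 → g ∈ P ∨ -g ∈ P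

def signedCount (P : Finset (Fin r → ℤ)) (S : Multiset (Fin r → ℤ)) (j : P) : ℤ :=
  S.count (j : Fin r → ℤ) - S.count (-(j : Fin r → ℤ))

def ofSignedCount (P : Finset (Fin r → ℤ)) (z : P → ℤ) : Multiset (Fin r → ℤ) :=
  ∑ j, (Multiset.replicate (z j).toNat (j : Fin r → ℤ) +
    Multiset.replicate (-z j).toNat (-(j : Fin r → ℤ)))

noncomputable def sumMap (P : Finset (Fin r → ℤ)) : (P → ℚ) →ₗ[ℚ] (Fin r → ℚ) :=
  Fintype.linearCombination ℚ fun j => castHom (Fin r) j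

variable {G₀ P : Finset (Fin r → ℤ)}

@[simp] theorem signedCount_zero : signedCount P 0 = 0 := by
  funext j; simp [signedCount]

theorem signedCount_add (S T : Multiset (Fin r → ℤ)) :
    signedCount P (S + T) = signedCount P S + signedCount P T := by
  funext j; simp only [signedCount, Multiset.count_add, Pi.add_apply]; push_cast; ring

theorem coe_mem_signedSupp_iff {S : Multiset (Fin r → ℤ)} {j : P} :
    (j : Fin r → ℤ) ∈ signedSupp S ↔ signedCount P S j ≠ 0 := by
  simp [signedSupp, signedCount, sub_eq_zero]

theorem neg_mem_signedSupp_iff {S : Multiset (Fin r → ℤ)} {g : Fin r → ℤ} :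
    -g ∈ signedSupp S ↔ g ∈ signedSupp S := by
  simp [signedSupp, ne_comm]

theorem neg_mem_of_isConformal {S : Multiset (Fin r → ℤ)} {w : P → ℚ}
    (h : IsConformal w (castHom P (signedCount P S))) {j : P} (hj : w j < 0) :
    -(j : Fin r → ℤ) ∈ S := by
  have hS : signedCount P S j < 0 := by
    by_contra! hS
    exact hj.not_ge ((h j).1 (by simpa using hS))
  rw [← Multiset.count_pos]
  simp only [signedCount] at hS
  omega

theorem isConformal_signedCount_of_le {A T : Multiset (Fin r → ℤ)} (hT : IsPairFree T)
    (h : A ≤ T) : IsConformal (signedCount P A) (signedCount P T) := by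
  intro j
  have h₁ := Multiset.count_le_of_le (j : Fin r → ℤ) h
  have h₂ := Multiset.count_le_of_le (-(j : Fin r → ℤ)) h
  simp only [signedCount]
  rcases hT.count_eq_zero_or j with h | h <;> omega

theorem mem_ofSignedCount {z : P → ℤ} {g : Fin r → ℤ} (hg : g ∈ ofSignedCount P z) :
    ∃ j : P, (g = j ∧ 0 < z j) ∨ (g = -j ∧ z j < 0) := by
  obtain ⟨j, -, hj⟩ := Multiset.mem_sum.mp hg
  refine ⟨j, ?_⟩
  simp only [Multiset.mem_add, Multiset.mem_replicate] at hj
  rcases hj with ⟨hz, rfl⟩ | ⟨hz, rfl⟩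
  · exact Or.inl ⟨rfl, by omega⟩
  · exact Or.inr ⟨rfl, by omega⟩

theorem card_ofSignedCount (z : P → ℤ) :
    Multiset.card (ofSignedCount P z) = ∑ j, (z j).natAbs := by
  simp [ofSignedCount, Multiset.card_sum, Int.toNat_add_toNat_neg_eq_natAbs]

theorem ofSignedCount_le {a b : P → ℤ} (hconf : IsConformal a b) (habs : ∀ j, |a j| ≤ |b j|) :
    ofSignedCount P a ≤ ofSignedCount P b := by
  refine Finset.sum_le_sum fun j _ => add_le_add ?_ ?_ <;>
    refine (Multiset.replicate_le_replicate _).mpr ?_ <;>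
  · have := hconf j
    have := habs j
    rcases abs_cases (a j) with _ | _ <;> rcases abs_cases (b j) with _ | _ <;> omega

namespace IsHalfSystem

theorem of_union_eq {Pm : Finset (Fin r → ℤ)}
    (hpart : (↑P ∪ ↑Pm : Set (Fin r → ℤ)) = (↑G₀ : Set (Fin r → ℤ)) \ {0})
    (hp : ∀ g ∈ P, -g ∉ P) (hmax : ∀ g ∈ Pm, -g ∈ P) : IsHalfSystem G₀ P where
  subset g hg := by
    have : g ∈ (↑G₀ : Set (Fin r → ℤ)) \ {0} := hpart ▸ Or.inl hg
    exact this.1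
  neg_notMem := hp
  mem_or_neg_mem g hg hg0 := by
    have : g ∈ (↑P ∪ ↑Pm : Set (Fin r → ℤ)) := hpart ▸ ⟨hg, hg0⟩
    exact this.imp id (hmax g)

variable (hP : IsHalfSystem G₀ P)
include hP

theorem neg_coe_ne_coe (i j : P) : -(i : Fin r → ℤ) ≠ j :=
  fun h => hP.neg_notMem i i.2 (h ▸ j.2)

theorem exists_eq_or_eq_neg {g : Fin r → ℤ} (hg : g ∈ G₀) (hg0 : g ≠ 0) :
    ∃ j : P, g = j ∨ g = -j := by
  rcases hP.mem_or_neg_mem g hg hg0 with h | h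
  · exact ⟨⟨g, h⟩, Or.inl rfl⟩
  · exact ⟨⟨-g, h⟩, Or.inr (neg_neg g).symm⟩

theorem exists_of_mem_signedSupp {S : Multiset (Fin r → ℤ)} (hS : ∀ g ∈ S, g ∈ G₀)
    {g : Fin r → ℤ} (hg : g ∈ signedSupp S) : ∃ j : P, g = j ∨ g = -j := by
  have hg0 : g ≠ 0 := by rintro rfl; simp [signedSupp] at hg
  have hgS : g ∈ S ∨ -g ∈ S := by
    by_contra! h
    exact hg (by rw [Multiset.count_eq_zero.mpr h.1, Multiset.count_eq_zero.mpr h.2])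
  rcases hgS with h | h
  · exact hP.exists_eq_or_eq_neg (hS g h) hg0
  · obtain ⟨j, hj | hj⟩ := hP.exists_eq_or_eq_neg (hS _ h) (neg_ne_zero.mpr hg0)
    · exact ⟨j, Or.inr (by rw [← hj, neg_neg])⟩
    · exact ⟨j, Or.inl (neg_injective hj)⟩

theorem signedSupp_subset_iff {S T : Multiset (Fin r → ℤ)} (hT : ∀ g ∈ T, g ∈ G₀) :
    signedSupp T ⊆ signedSupp S ↔ ∀ j, signedCount P T j ≠ 0 → signedCount P S j ≠ 0 := by
  refine ⟨fun h j hj => coe_mem_signedSupp_iff.mp (h (coe_mem_signedSupp_iff.mpr hj)),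
    fun h g hg => ?_⟩
  obtain ⟨j, rfl | rfl⟩ := hP.exists_of_mem_signedSupp hT hg
  · exact coe_mem_signedSupp_iff.mpr (h j (coe_mem_signedSupp_iff.mp hg))
  · rw [neg_mem_signedSupp_iff] at hg ⊢
    exact coe_mem_signedSupp_iff.mpr (h j (coe_mem_signedSupp_iff.mp hg))

theorem signedSupp_ne_empty_iff {S : Multiset (Fin r → ℤ)} (hS : ∀ g ∈ S, g ∈ G₀) :
    signedSupp S ≠ ∅ ↔ signedCount P S ≠ 0 := by
  have hempty : signedSupp (0 : Multiset (Fin r → ℤ)) = ∅ := by simp [signedSupp]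
  rw [Ne, ← Set.subset_empty_iff, ← hempty, hP.signedSupp_subset_iff hS, not_iff_not]
  simp [funext_iff]

theorem count_coe_ofSignedCount (z : P → ℤ) (j : P) :
    (ofSignedCount P z).count (j : Fin r → ℤ) = (z j).toNat := by
  rw [ofSignedCount, Multiset.count_sum', Finset.sum_eq_single j]
  · simp [Multiset.count_replicate, hP.neg_coe_ne_coe]
  · intro i _ hij
    simp [Multiset.count_replicate, hP.neg_coe_ne_coe, Subtype.coe_injective.ne hij]
  · simp

theorem count_neg_ofSignedCount (z : P → ℤ) (j : P) :
    (ofSignedCount P z).count (-(j : Fin r → ℤ)) = (-z j).toNat := by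
  rw [ofSignedCount, Multiset.count_sum', Finset.sum_eq_single j]
  · simp [Multiset.count_replicate, (hP.neg_coe_ne_coe j j).symm]
  · intro i _ hij
    simp [Multiset.count_replicate, (hP.neg_coe_ne_coe _ _).symm, Subtype.coe_injective.ne hij]
  · simp

theorem signedCount_ofSignedCount (z : P → ℤ) : signedCount P (ofSignedCount P z) = z := by
  funext j
  simp only [signedCount, hP.count_coe_ofSignedCount, hP.count_neg_ofSignedCount]
  omega

theorem isPairFree_ofSignedCount (z : P → ℤ) : IsPairFree (ofSignedCount P z) := by
  intro g hg hng
  obtain ⟨j, hj⟩ := mem_ofSignedCount hg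
  have hcoe := hP.count_coe_ofSignedCount z j
  have hneg := hP.count_neg_ofSignedCount z j
  rcases hj with ⟨rfl, -⟩ | ⟨rfl, -⟩
  · have h₁ := Multiset.count_pos.mpr hg
    have h₂ := Multiset.count_pos.mpr hng
    omega
  · rw [neg_neg] at hng
    have h₁ := Multiset.count_pos.mpr hng
    have h₂ := Multiset.count_pos.mpr hg
    omega

theorem ofSignedCount_signedCount {S : Multiset (Fin r → ℤ)} (hS : ∀ g ∈ S, g ∈ G₀)
    (hfree : IsPairFree S) : ofSignedCount P (signedCount P S) = S := by
  ext g
  by_cases hg : ∃ j : P, g = j ∨ g = -j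
  · obtain ⟨j, rfl | rfl⟩ := hg <;>
      simp only [hP.count_coe_ofSignedCount, hP.count_neg_ofSignedCount, signedCount] <;>
      rcases hfree.count_eq_zero_or j with h | h <;> simp only [h] <;> omega
  · have h₁ : g ∉ ofSignedCount P (signedCount P S) := fun h => by
      obtain ⟨j, hj⟩ := mem_ofSignedCount h
      exact hg ⟨j, by tauto⟩
    have h₂ : g ∉ S := fun h => hg (hP.exists_eq_or_eq_neg (hS g h)
      (by rintro rfl; exact hfree 0 h (by simpa using h)))
    rw [Multiset.count_eq_zero.mpr h₁, Multiset.count_eq_zero.mpr h₂]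

theorem signedCount_ne_zero {S : Multiset (Fin r → ℤ)} (hS : ∀ g ∈ S, g ∈ G₀)
    (hfree : IsPairFree S) (hS0 : S ≠ 0) : signedCount P S ≠ 0 := fun h => hS0 (by
  rw [← hP.ofSignedCount_signedCount hS hfree, h]
  simp [ofSignedCount])

theorem le_of_isConformal_of_abs_le {A U : Multiset (Fin r → ℤ)} (hA : ∀ g ∈ A, g ∈ G₀)
    (hAfree : IsPairFree A) (hU : ∀ g ∈ U, g ∈ G₀) (hUfree : IsPairFree U)
    (hconf : IsConformal (signedCount P A) (signedCount P U))
    (habs : ∀ j, |signedCount P A j| ≤ |signedCount P U j|) : A ≤ U := by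
  rw [← hP.ofSignedCount_signedCount hA hAfree, ← hP.ofSignedCount_signedCount hU hUfree]
  exact ofSignedCount_le hconf habs

theorem card_eq_sum_abs_signedCount {S : Multiset (Fin r → ℤ)} (hS : ∀ g ∈ S, g ∈ G₀)
    (hfree : IsPairFree S) : (Multiset.card S : ℚ) = ∑ j, |castHom P (signedCount P S) j| := by
  conv_lhs => rw [← hP.ofSignedCount_signedCount hS hfree]
  simp [card_ofSignedCount, Nat.cast_natAbs]

theorem card_eq_sum_mul_card {κ : Type*} [Fintype κ] {U : Multiset (Fin r → ℤ)}
    {A : κ → Multiset (Fin r → ℤ)} {μ : κ → ℚ} (hU : ∀ g ∈ U, g ∈ G₀) (hUfree : IsPairFree U)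
    (hA : ∀ i, ∀ g ∈ A i, g ∈ G₀) (hAfree : ∀ i, IsPairFree (A i))
    (hconf : ∀ i ∈ Finset.univ, IsConformal (castHom P (signedCount P (A i)))
      (castHom P (signedCount P U)))
    (hsum : castHom P (signedCount P U) = ∑ i, μ i • castHom P (signedCount P (A i))) :
    (Multiset.card U : ℚ) = ∑ i, μ i * Multiset.card (A i) := by
  simp_rw [hP.card_eq_sum_abs_signedCount hU hUfree,
    hP.card_eq_sum_abs_signedCount (hA _) (hAfree _), Finset.mul_sum]
  rw [Finset.sum_comm]
  exact Finset.sum_congr rfl fun j _ => IsConformal.abs_apply_eq_sum hconf hsum j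

theorem signedCount_singleton_coe (j : P) :
    signedCount P {(j : Fin r → ℤ)} = Pi.single j 1 := by
  classical
  funext i
  by_cases hij : i = j
  · subst hij; simp [signedCount, hP.neg_coe_ne_coe]
  · simp [signedCount, hP.neg_coe_ne_coe, hij, Subtype.coe_injective.ne hij]

theorem signedCount_singleton_neg (j : P) :
    signedCount P {-(j : Fin r → ℤ)} = -Pi.single j 1 := by
  classical
  funext i
  by_cases hij : i = j
  · subst hij; simp [signedCount, (hP.neg_coe_ne_coe i i).symm]
  · simp [signedCount, (hP.neg_coe_ne_coe _ _).symm, hij, Subtype.coe_injective.ne hij]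

theorem sumMap_signedCount_singleton {g : Fin r → ℤ} (hg : g ∈ G₀) :
    sumMap P (castHom P (signedCount P {g})) = castHom (Fin r) g := by
  classical
  have hsingle (j : P) : castHom P (Pi.single j 1) = Pi.single j 1 := by
    funext i; by_cases hij : i = j <;> simp [hij]
  by_cases hg0 : g = 0
  · subst hg0
    have : signedCount P {0} = 0 := by funext j; simp [signedCount, Multiset.count_singleton]
    simp [this]
  obtain ⟨j, rfl | rfl⟩ := hP.exists_eq_or_eq_neg hg hg0
  · simp [hP.signedCount_singleton_coe, hsingle, sumMap]
  · simp [hP.signedCount_singleton_neg, hsingle, sumMap]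

theorem sumMap_signedCount {S : Multiset (Fin r → ℤ)} (hS : ∀ g ∈ S, g ∈ G₀) :
    sumMap P (castHom P (signedCount P S)) = castHom (Fin r) S.sum := by
  induction S using Multiset.induction_on with
  | empty => simp
  | cons g S ih =>
    rw [← Multiset.singleton_add, signedCount_add, map_add, map_add, Multiset.sum_add,
      Multiset.sum_singleton, map_add,
      hP.sumMap_signedCount_singleton (hS g (Multiset.mem_cons_self g S)),
      ih fun h hh => hS h (Multiset.mem_cons_of_mem hh)]

theorem castHom_signedCount_mem_ker {S : Multiset (Fin r → ℤ)} (hS : IsZeroSumSeq (↑G₀) S) :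
    castHom P (signedCount P S) ∈ LinearMap.ker (sumMap P) := by
  rw [LinearMap.mem_ker, hP.sumMap_signedCount hS.1, hS.2, map_zero]

theorem isZeroSumSeq_ofSignedCount {z : P → ℤ} (hz : castHom P z ∈ LinearMap.ker (sumMap P))
    (hneg : ∀ j, z j < 0 → -(j : Fin r → ℤ) ∈ G₀) : IsZeroSumSeq (↑G₀) (ofSignedCount P z) := by
  have hG : ∀ g ∈ ofSignedCount P z, g ∈ G₀ := fun g hg => by
    obtain ⟨j, ⟨rfl, -⟩ | ⟨rfl, hj⟩⟩ := mem_ofSignedCount hg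
    exacts [hP.subset j.2, hneg j hj]
  refine ⟨hG, castHom_injective _ ?_⟩
  rw [← hP.sumMap_signedCount hG, hP.signedCount_ofSignedCount, LinearMap.mem_ker.mp hz,
    map_zero]

theorem finrank_ker_sumMap :
    finrank ℚ (LinearMap.ker (sumMap P)) = P.card - finrank ℚ
      (span ℚ ((fun g : Fin r → ℤ => fun i => (g i : ℚ)) '' (↑G₀ : Set (Fin r → ℤ)))) := by
  have hrange : LinearMap.range (sumMap P) = span ℚ (castHom (Fin r) '' G₀) := by
    have himage : Set.range (fun j : P => castHom (Fin r) j) = castHom (Fin r) '' P := by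
      ext; simp
    rw [sumMap, Fintype.range_linearCombination, himage]
    refine le_antisymm (span_mono (Set.image_mono hP.subset)) (span_le.mpr ?_)
    rintro _ ⟨g, hg, rfl⟩
    by_cases hg0 : g = 0
    · simp [hg0]
    rcases hP.mem_or_neg_mem g hg hg0 with h | h
    · exact subset_span ⟨g, h, rfl⟩
    · have hmem : castHom (Fin r) (-g) ∈ span ℚ (castHom (Fin r) '' P) :=
        subset_span ⟨-g, h, rfl⟩
      simpa using neg_mem hmem
  have := (sumMap P).finrank_range_add_finrank_ker
  rw [finrank_fintype_fun_eq_card, Fintype.card_coe, hrange] at this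
  change _ = _ - finrank ℚ (span ℚ (castHom (Fin r) '' G₀))
  omega

theorem isElemZeroSumSeq_of_castHom_eq_smul {w : P → ℚ}
    (hw : IsElementary (LinearMap.ker (sumMap P)) w) {A : Multiset (Fin r → ℤ)}
    (hA : IsZeroSumSeq (↑G₀) A) {c : ℚ} (hc : c ≠ 0)
    (hAw : castHom P (signedCount P A) = c • w) : IsElemZeroSumSeq (↑G₀) A := by
  have hAsupp := ne_zero_iff_of_castHom_eq_smul hAw hc
  refine ⟨hA, (hP.signedSupp_ne_empty_iff hA.1).mpr fun h => hw.2.1 ?_, fun T hT hT0 hTA => ?_⟩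
  · funext j; by_contra hj; exact (hAsupp j).mpr hj (by simp [h])
  obtain ⟨c', hc'⟩ := hw.2.2 _ (hP.castHom_signedCount_mem_ker hT) fun j hj =>
    (hAsupp j).mp ((hP.signedSupp_subset_iff hT.1).mp hTA j (by simpa using hj))
  have hc'0 : c' ≠ 0 := by
    rintro rfl
    exact (hP.signedSupp_ne_empty_iff hT.1).mp hT0 (castHom_injective _ (by simpa using hc'))
  have hTsupp := ne_zero_iff_of_castHom_eq_smul hc' hc'0
  exact hTA.antisymm ((hP.signedSupp_subset_iff hA.1).mpr fun j hj =>
    (hTsupp j).mpr ((hAsupp j).mp hj))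

theorem exists_isElemAtom_castHom_eq_smul {w : P → ℚ}
    (hw : IsElementary (LinearMap.ker (sumMap P)) w)
    (hneg : ∀ j, w j < 0 → -(j : Fin r → ℤ) ∈ G₀) :
    ∃ A : Multiset (Fin r → ℤ), IsElemAtom (↑G₀) A ∧ IsPairFree A ∧
      ∃ c : ℚ, 0 < c ∧ castHom P (signedCount P A) = c • w := by
  obtain ⟨n, hn, z, hz⟩ := exists_castHom_eq_smul w
  have hn' : (0 : ℚ) < n := Nat.cast_pos.mpr hn
  have hzneg (j : P) (hj : z j < 0) : w j < 0 := by
    have hzj : (z j : ℚ) = n * w j := by simpa using congrFun hz j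
    exact neg_of_mul_neg_right (hzj ▸ Int.cast_lt_zero.mpr hj) hn'.le
  have hT0 : ofSignedCount P z ≠ 0 := fun h => hw.2.1 (by
    have : castHom P z = 0 := by
      rw [← hP.signedCount_ofSignedCount z, h, signedCount_zero, map_zero]
    simpa [hn'.ne'] using hz.symm.trans this)
  obtain ⟨A, hAT, hA⟩ := exists_isAtomSeq_le (hP.isZeroSumSeq_ofSignedCount
    (hz ▸ Submodule.smul_mem _ _ hw.1) fun j hj => hneg j (hzneg j hj)) hT0
  have hTfree := hP.isPairFree_ofSignedCount z
  have hconf : IsConformal (castHom P (signedCount P A)) ((n : ℚ) • w) := by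
    rw [← hz, isConformal_castHom_iff, ← hP.signedCount_ofSignedCount z]
    exact isConformal_signedCount_of_le hTfree hAT
  obtain ⟨c, hc⟩ := hw.2.2 _ (hP.castHom_signedCount_mem_ker hA.1)
    (hconf.support_subset.trans (support_const_smul_subset _ _))
  have hA0 : castHom P (signedCount P A) ≠ 0 := (map_ne_zero_iff _ (castHom_injective P)).mpr
    (hP.signedCount_ne_zero hA.1.1 (hTfree.mono hAT) hA.2.1)
  rw [hc] at hconf hA0
  have hc0 : 0 < c := hconf.pos_of_smul hn' hA0
  exact ⟨A, ⟨hA, hP.isElemZeroSumSeq_of_castHom_eq_smul hw hA.1 hc0.ne' hc⟩, hTfree.mono hAT,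
    c, hc0, hc⟩

theorem card_le_mul_davenportElem_of_eq_sum {k : ℕ} {U : Multiset (Fin r → ℤ)}
    {A : Fin k → Multiset (Fin r → ℤ)} {μ : Fin k → ℚ} (hU : IsAtomSeq (↑G₀) U)
    (hUfree : IsPairFree U) (hA : ∀ i, IsElemAtom (↑G₀) (A i))
    (hAfree : ∀ i, IsPairFree (A i)) (hμ : ∀ i, 0 ≤ μ i)
    (hconf : ∀ i ∈ Finset.univ, IsConformal (castHom P (signedCount P (A i)))
      (castHom P (signedCount P U)))
    (hsum : castHom P (signedCount P U) = ∑ i, μ i • castHom P (signedCount P (A i))) :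
    (Multiset.card U : ℕ∞) ≤ k * DavenportElem (↑G₀ : Set (Fin r → ℤ)) := by
  by_cases hbig : ∃ i, 1 ≤ μ i
  · -- a coefficient `≥ 1` puts `A i` inside `U`, so `A i = U` by minimality of `U`
    obtain ⟨i, hi⟩ := hbig
    have habs (j : P) : |signedCount P (A i) j| ≤ |signedCount P U j| := by
      have := IsConformal.abs_apply_le (fun l _ => hμ l) hconf hsum (Finset.mem_univ i) hi j
      simp only [castHom_apply] at this
      exact_mod_cast this
    have hAU : A i = U := hU.2.2 _ (hP.le_of_isConformal_of_abs_le (hA i).1.1.1 (hAfree i)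
      hU.1.1 hUfree (isConformal_castHom_iff.mp (hconf i (Finset.mem_univ i))) habs)
      (hA i).1.2.1 (hA i).1.1.2
    calc (Multiset.card U : ℕ∞) = Multiset.card (A i) := by rw [hAU]
      _ ≤ DavenportElem (↑G₀ : Set (Fin r → ℤ)) := card_le_davenportElem (hA i)
      _ ≤ k * DavenportElem (↑G₀ : Set (Fin r → ℤ)) :=
        le_mul_of_one_le_left zero_le (by exact_mod_cast i.pos)
  · push Not at hbig
    have hle : Multiset.card U ≤ ∑ i, Multiset.card (A i) := by
      have hcard := hP.card_eq_sum_mul_card hU.1.1 hUfree (fun i => (hA i).1.1.1) hAfree hconf hsum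
      have : (Multiset.card U : ℚ) ≤ ∑ i, (Multiset.card (A i) : ℚ) := hcard ▸
        Finset.sum_le_sum fun i _ => mul_le_of_le_one_left (Nat.cast_nonneg _) (hbig i).le
      exact_mod_cast this
    calc (Multiset.card U : ℕ∞) ≤ ∑ i, (Multiset.card (A i) : ℕ∞) := by exact_mod_cast hle
      _ ≤ Finset.univ.card • DavenportElem (↑G₀ : Set (Fin r → ℤ)) :=
        Finset.sum_le_card_nsmul _ _ _ fun i _ => card_le_davenportElem (hA i)
      _ = k * DavenportElem (↑G₀ : Set (Fin r → ℤ)) := by simp [nsmul_eq_mul]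

theorem card_le_finrank_mul_davenportElem {U : Multiset (Fin r → ℤ)}
    (hU : IsAtomSeq (↑G₀) U) (hcard : 3 ≤ Multiset.card U) :
    (Multiset.card U : ℕ∞) ≤
      finrank ℚ (LinearMap.ker (sumMap P)) * DavenportElem (↑G₀ : Set (Fin r → ℤ)) := by
  obtain ⟨k, w, μ, hμ, hw, hwv, hli, hvw⟩ :=
    exists_conformal_decomposition _ (hP.castHom_signedCount_mem_ker hU.1)
  have hk : k ≤ finrank ℚ (LinearMap.ker (sumMap P)) := by
    rw [← Fintype.card_fin k, ← finrank_span_eq_card hli]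
    exact Submodule.finrank_mono (span_le.mpr (by rintro _ ⟨i, rfl⟩; exact (hw i).1))
  choose A hA hAfree c hc hAw using fun i => hP.exists_isElemAtom_castHom_eq_smul (hw i)
    fun j hj => hU.1.1 _ (neg_mem_of_isConformal (hwv i) hj)
  have hsum : castHom P (signedCount P U) = ∑ i, (μ i / c i) • castHom P (signedCount P (A i)) := by
    rw [hvw]
    exact Finset.sum_congr rfl fun i _ => by rw [hAw, smul_smul, div_mul_cancel₀ _ (hc i).ne']
  refine (hP.card_le_mul_davenportElem_of_eq_sum hU (hU.isPairFree hcard) hA hAfree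
    (fun i => (div_pos (hμ i) (hc i)).le) (fun i _ => hAw i ▸ (hwv i).smul (hc i).le)
    hsum).trans (mul_le_mul_left (by exact_mod_cast hk) _)

end IsHalfSystem

end ZeroSumSequences

theorem stmt4_general {r : ℕ} (G₀ Pp Pm : Finset (Fin r → ℤ))
    (hpart : (↑Pp ∪ ↑Pm : Set (Fin r → ℤ)) = (↑G₀ : Set (Fin r → ℤ)) \ {0})
    (hp : ∀ g ∈ Pp, -g ∉ Pp)
    (hmax : ∀ g ∈ Pm, -g ∈ Pp) :
    Davenport (↑G₀ : Set (Fin r → ℤ)) ≤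
      max 2
        (((Pp.card -
            Module.finrank ℚ (Submodule.span ℚ
              ((fun g : Fin r → ℤ => fun i => (g i : ℚ)) '' (↑G₀ : Set (Fin r → ℤ)))) : ℕ) :
              ℕ∞) *
          DavenportElem (↑G₀ : Set (Fin r → ℤ))) := by
  have hP := IsHalfSystem.of_union_eq hpart hp hmax
  rw [← hP.finrank_ker_sumMap]
  refine iSup₂_le fun U hU => ?_
  rcases le_or_gt (Multiset.card U) 2 with hU2 | hU3
  · exact le_max_of_le_left (by exact_mod_cast hU2)
  · exact le_max_of_le_right (hP.card_le_finrank_mul_davenportElem hU hU3)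

/-- `D(G₀) ≤ max {2, (|G₀⁺| − rk⟨G₀⟩) · D^elm(G₀)}`, for a finite `G₀ ⊆ ℤ^r` (not contained
in `{0}`) with a fixed admissible partition `G₀ ∖ {0} = G₀⁺ ∪ G₀⁻`. The rank of the subgroup
generated by `G₀` is expressed as the dimension of the `ℚ`-span of `G₀` in `ℚ^r`. -/
theorem stmt4 {r : ℕ} (G₀ Pp Pm : Finset (Fin r → ℤ))
    (hne : ∃ g ∈ G₀, g ≠ (0 : Fin r → ℤ))
    (hpart : (↑Pp ∪ ↑Pm : Set (Fin r → ℤ)) = (↑G₀ : Set (Fin r → ℤ)) \ {0})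
    (hdisj : Disjoint Pp Pm)
    (hp : ∀ g ∈ Pp, -g ∉ Pp) (hm : ∀ g ∈ Pm, -g ∉ Pm)
    (hmax : ∀ g ∈ Pm, -g ∈ Pp) :
    Davenport (↑G₀ : Set (Fin r → ℤ)) ≤
      max 2
        (((Pp.card -
            Module.finrank ℚ (Submodule.span ℚ
              ((fun g : Fin r → ℤ => fun i => (g i : ℚ)) '' (↑G₀ : Set (Fin r → ℤ)))) : ℕ) :
              ℕ∞) *
          DavenportElem (↑G₀ : Set (Fin r → ℤ))) :=
  stmt4_general G₀ Pp Pm hpart hp hmax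
end

section
/- D(G_0) ≥ 3 if and only if there exists an elementary atom over G_0; and in this case D^elm(G_0) ≥ 3. -/
section Aux

variable {r : ℕ}

lemma neg_self_eq' {g : Fin r → ℤ} (h : g = -g) : g = 0 := by
  funext i
  have := congrFun h i
  simp only [Pi.neg_apply] at this
  simp only [Pi.zero_apply]
  omega

lemma signedSupp_symm' {S : Multiset (Fin r → ℤ)} {g} (h : g ∈ signedSupp S) :
    -g ∈ signedSupp S := by
  simp only [signedSupp, Set.mem_setOf_eq, neg_neg] at *
  exact h.symm

lemma mem_or_neg_mem' {S : Multiset (Fin r → ℤ)} {g} (h : g ∈ signedSupp S) :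
    g ∈ S ∨ -g ∈ S := by
  by_contra hc
  push_neg at hc
  simp only [signedSupp, Set.mem_setOf_eq] at h
  rw [Multiset.count_eq_zero_of_notMem hc.1, Multiset.count_eq_zero_of_notMem hc.2] at h
  exact h rfl

lemma signedSupp_card_le_two' {S : Multiset (Fin r → ℤ)}
    (hc : Multiset.card S ≤ 2) (hs : S.sum = 0) : signedSupp S = ∅ := by
  interval_cases h : Multiset.card S
  · rw [Multiset.card_eq_zero] at h
    subst h
    ext g; simp [signedSupp]
  · rw [Multiset.card_eq_one] at h
    obtain ⟨a, rfl⟩ := h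
    simp at hs
    subst hs
    ext g
    simp only [signedSupp, Set.mem_setOf_eq, Multiset.count_singleton, Set.mem_empty_iff_false,
      iff_false, not_not]
    have : g = 0 ↔ -g = 0 := by constructor <;> intro h <;> simp_all
    split_ifs <;> simp_all
  · rw [Multiset.card_eq_two] at h
    obtain ⟨a, b, rfl⟩ := h
    have hb : b = -a := by
      simp at hs
      linear_combination (norm := module) hs
    subst hb
    ext g
    simp only [signedSupp, Set.mem_setOf_eq, Set.mem_empty_iff_false, iff_false, not_not]
    have e1 : ({a, -a} : Multiset (Fin r → ℤ)) = a ::ₘ {-a} := rfl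
    rw [e1, Multiset.count_cons, Multiset.count_cons, Multiset.count_singleton,
      Multiset.count_singleton]
    have h1 : (-g = a) ↔ (g = -a) := by
      constructor <;> intro h <;> [exact neg_eq_iff_eq_neg.mp h; exact neg_eq_iff_eq_neg.mpr h]
    have h2 : (-g = -a) ↔ (g = a) := neg_inj
    split_ifs <;> simp_all

lemma signedSupp_sub' {T U : Multiset (Fin r → ℤ)} (hTU : T ≤ U)
    (hT : signedSupp T = ∅) : signedSupp (U - T) = signedSupp U := by
  ext g
  have h1 : T.count g = T.count (-g) := by
    by_contra hc
    have : g ∈ signedSupp T := hc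
    rw [hT] at this
    exact this
  have h2 : T.count g ≤ U.count g := Multiset.le_iff_count.mp hTU g
  have h3 : T.count (-g) ≤ U.count (-g) := Multiset.le_iff_count.mp hTU (-g)
  simp only [signedSupp, Set.mem_setOf_eq, Multiset.count_sub]
  omega

lemma reduce_exists' : ∀ (n : ℕ) (S : Multiset (Fin r → ℤ)), Multiset.card S = n → S.sum = 0 →
    ∃ S', S' ≤ S ∧ S'.sum = 0 ∧ signedSupp S' = signedSupp S ∧ ∀ g ∈ S', g ∈ signedSupp S' := by
  intro n
  induction n using Nat.strong_induction_on with
  | _ n ih =>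
    intro S hcard hsum
    by_cases hall : ∀ g ∈ S, g ∈ signedSupp S
    · exact ⟨S, le_rfl, hsum, rfl, hall⟩
    · push_neg at hall
      obtain ⟨g, hgS, hgns⟩ := hall
      have hcnt : S.count g = S.count (-g) := by
        by_contra hc; exact hgns hc
      have hg1 : 1 ≤ S.count g := Multiset.one_le_count_iff_mem.mpr hgS
      have hcons := Multiset.cons_erase hgS
      by_cases hg0 : g = -g
      · -- g = 0
        have hg0' : g = 0 := neg_self_eq' hg0
        subst hg0'
        have hle : S.erase 0 ≤ S := Multiset.erase_le _ _
        have hsum' : (S.erase 0).sum = 0 := by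
          have h5 : S.sum = 0 + (S.erase 0).sum := by rw [← Multiset.sum_cons, hcons]
          rw [hsum, zero_add] at h5
          exact h5.symm
        have hsupp' : signedSupp (S.erase 0) = signedSupp S := by
          ext h
          by_cases h0 : h = 0
          · subst h0
            simp [signedSupp]
          · have hn0 : -h ≠ 0 := fun e => h0 (neg_eq_zero.mp e)
            simp only [signedSupp, Set.mem_setOf_eq,
              Multiset.count_erase_of_ne h0, Multiset.count_erase_of_ne hn0]
        have hpos : 0 < Multiset.card S := Multiset.card_pos.mpr (fun e => by simp [e] at hgS)
        have hclt : Multiset.card (S.erase 0) < n := by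
          rw [Multiset.card_erase_of_mem hgS, hcard]
          exact Nat.pred_lt (by omega)
        obtain ⟨S', h1, h2, h3, h4⟩ := ih _ hclt (S.erase 0) rfl hsum'
        exact ⟨S', le_trans h1 hle, h2, h3.trans hsupp', h4⟩
      · have hng : (-g) ≠ g := fun e => hg0 e.symm
        have hng1 : 1 ≤ (S.erase g).count (-g) := by
          rw [Multiset.count_erase_of_ne hng]; omega
        have hngS : -g ∈ S.erase g := by
          rw [← Multiset.count_pos]; omega
        have hcons2 := Multiset.cons_erase hngS
        set B := (S.erase g).erase (-g) with hB
        have hleB : B ≤ S := le_trans (Multiset.erase_le _ _) (Multiset.erase_le _ _)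
        have hsumB : B.sum = 0 := by
          have h5 : S.sum = g + (-g + B.sum) := by
            rw [← Multiset.sum_cons, hcons2, ← Multiset.sum_cons, hcons]
          rw [hsum, ← add_assoc, add_neg_cancel, zero_add] at h5
          exact h5.symm
        have hcB : ∀ h, B.count h
            = S.count h - (if h = g then 1 else 0) - (if h = -g then 1 else 0) := by
          intro h
          by_cases c1 : h = g
          · subst c1
            rw [if_pos rfl, if_neg hg0, hB, Multiset.count_erase_of_ne hg0,
              Multiset.count_erase_self]
            omega
          · by_cases c2 : h = -g
            · subst c2
              rw [if_neg c1, if_pos rfl, hB, Multiset.count_erase_self,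
                Multiset.count_erase_of_ne c1]
              omega
            · rw [if_neg c1, if_neg c2, hB, Multiset.count_erase_of_ne c2,
                Multiset.count_erase_of_ne c1]
              omega
        have hg1' : 1 ≤ S.count (-g) := by omega
        have hsuppB : signedSupp B = signedSupp S := by
          ext h
          have e1 : (-h = g) ↔ (h = -g) := by
            constructor <;> intro e
            · exact neg_eq_iff_eq_neg.mp e
            · exact neg_eq_iff_eq_neg.mpr e
          have e2 : (-h = -g) ↔ (h = g) := neg_inj
          simp only [signedSupp, Set.mem_setOf_eq, hcB, e1, e2]
          by_cases c1 : h = g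
          · have c2 : ¬ h = -g := by rw [c1]; exact hg0
            rw [if_pos c1, if_neg c2, c1]
            omega
          · by_cases c2 : h = -g
            · rw [if_neg c1, if_pos c2, c2, neg_neg]
              omega
            · rw [if_neg c1, if_neg c2]
              omega
        have hallB : Multiset.card B < n := by
          have : Multiset.card S = 2 + Multiset.card B := by
            rw [← hcons, ← hcons2]; simp; omega
          omega
        obtain ⟨S', h1, h2, h3, h4⟩ := ih _ hallB B rfl hsumB
        exact ⟨S', le_trans h1 hleB, h2, h3.trans hsuppB, h4⟩

def fsupp (S : Multiset (Fin r → ℤ)) : Finset (Fin r → ℤ) :=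
  (S.toFinset ∪ S.toFinset.image (fun g => -g)).filter (fun g => S.count g ≠ S.count (-g))

lemma coe_fsupp (S : Multiset (Fin r → ℤ)) : ↑(fsupp S) = signedSupp S := by
  ext g
  simp only [fsupp, Finset.coe_filter, Set.mem_setOf_eq, Finset.mem_union, Finset.mem_image,
    Multiset.mem_toFinset]
  constructor
  · rintro ⟨-, h⟩; exact h
  · intro h
    refine ⟨?_, h⟩
    rcases mem_or_neg_mem' h with h1 | h1
    · exact Or.inl h1
    · exact Or.inr ⟨-g, h1, by simp⟩

lemma fsupp_nonempty_iff (S : Multiset (Fin r → ℤ)) :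
    (fsupp S).Nonempty ↔ signedSupp S ≠ ∅ := by
  rw [← Finset.coe_nonempty, coe_fsupp, Set.nonempty_iff_ne_empty]

lemma fsupp_eq_of_supp_eq {S T : Multiset (Fin r → ℤ)} (h : signedSupp S = signedSupp T) :
    fsupp S = fsupp T := by
  apply Finset.coe_injective
  rw [coe_fsupp, coe_fsupp, h]

/-- Main construction: from any zero-sum sequence with nonempty signed support we get
an elementary atom of length at least 3. -/
lemma exists_elem_atom {G₀ : Set (Fin r → ℤ)}
    (hP : ∃ S, IsZeroSumSeq G₀ S ∧ signedSupp S ≠ ∅) :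
    ∃ U, IsElemAtom G₀ U ∧ 3 ≤ Multiset.card U := by
  classical
  have hk0 : ∃ n, ∃ S, IsZeroSumSeq G₀ S ∧ (fsupp S).Nonempty ∧ (fsupp S).card = n := by
    obtain ⟨S, hS, hS2⟩ := hP
    exact ⟨_, S, hS, (fsupp_nonempty_iff S).mpr hS2, rfl⟩
  set k := Nat.find hk0 with hkdef
  have hkmin : ∀ T, IsZeroSumSeq G₀ T → (fsupp T).Nonempty → k ≤ (fsupp T).card :=
    fun T h1 h2 => Nat.find_min' hk0 ⟨T, h1, h2, rfl⟩
  -- produce a reduced sequence achieving k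
  have hm0 : ∃ n, ∃ S, (IsZeroSumSeq G₀ S ∧ (fsupp S).Nonempty ∧ (fsupp S).card = k ∧
      ∀ g ∈ S, g ∈ signedSupp S) ∧ Multiset.card S = n := by
    obtain ⟨S₀, hS₀, hS₀ne, hS₀k⟩ := Nat.find_spec hk0
    obtain ⟨S', hle, hsum, hsupp, hred⟩ := reduce_exists' _ S₀ rfl hS₀.2
    have hZS' : IsZeroSumSeq G₀ S' := ⟨fun g hg => hS₀.1 g (Multiset.mem_of_le hle hg), hsum⟩
    have hfs : fsupp S' = fsupp S₀ := fsupp_eq_of_supp_eq hsupp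
    exact ⟨_, S', ⟨hZS', by rw [hfs]; exact hS₀ne, by rw [hfs]; exact hS₀k, hred⟩, rfl⟩
  obtain ⟨U, ⟨hUZS, hUne, hUk, hUred⟩, hUm⟩ := Nat.find_spec hm0
  have hmmin : ∀ T, IsZeroSumSeq G₀ T → (fsupp T).Nonempty → (fsupp T).card = k →
      (∀ g ∈ T, g ∈ signedSupp T) → Nat.find hm0 ≤ Multiset.card T :=
    fun T h1 h2 h3 h4 => Nat.find_min' hm0 ⟨T, ⟨h1, h2, h3, h4⟩, rfl⟩
  have hsuppne : signedSupp U ≠ ∅ := (fsupp_nonempty_iff U).mp hUne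
  -- elementarity
  have helem : IsElemZeroSumSeq G₀ U := by
    refine ⟨hUZS, hsuppne, fun T hT hT2 hT3 => ?_⟩
    have hTne : (fsupp T).Nonempty := (fsupp_nonempty_iff T).mpr hT2
    have hTsub : fsupp T ⊆ fsupp U := by
      rw [← Finset.coe_subset, coe_fsupp, coe_fsupp]; exact hT3
    have : fsupp T = fsupp U :=
      Finset.eq_of_subset_of_card_le hTsub (by rw [hUk]; exact hkmin T hT hTne)
    rw [← coe_fsupp, ← coe_fsupp, this]
  -- atomicity
  have hatom : IsAtomSeq G₀ U := by
    refine ⟨hUZS, ?_, ?_⟩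
    · intro h0
      apply hsuppne
      rw [h0]
      ext g; simp [signedSupp]
    · intro T hTle hTne hTsum
      by_contra hTU
      have hTlt : T < U := lt_of_le_of_ne hTle hTU
      have hcardlt : Multiset.card T < Multiset.card U := Multiset.card_lt_card hTlt
      by_cases hTsupp : signedSupp T = ∅
      · -- complement has same support, smaller length
        set V := U - T with hV
        have hVle : V ≤ U := Multiset.sub_le_self _ _
        have hVZS : IsZeroSumSeq G₀ V := by
          refine ⟨fun g hg => hUZS.1 g (Multiset.mem_of_le hVle hg), ?_⟩
          have h5 : V + T = U := tsub_add_cancel_of_le hTle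
          have h6 : V.sum + T.sum = U.sum := by rw [← Multiset.sum_add, h5]
          rw [hTsum, hUZS.2, add_zero] at h6
          exact h6
        have hVsupp : signedSupp V = signedSupp U := signedSupp_sub' hTle hTsupp
        have hVfs : fsupp V = fsupp U := fsupp_eq_of_supp_eq hVsupp
        have hVred : ∀ g ∈ V, g ∈ signedSupp V := by
          intro g hg
          rw [hVsupp]
          exact hUred g (Multiset.mem_of_le hVle hg)
        have hVcard : Multiset.card V < Multiset.card U := by
          have := Multiset.card_sub hTle
          have hT1 : 0 < Multiset.card T := Multiset.card_pos.mpr hTne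
          have hTleU : Multiset.card T ≤ Multiset.card U := Multiset.card_le_card hTle
          rw [hV, this]
          omega
        have := hmmin V hVZS (by rw [hVfs]; exact hUne) (by rw [hVfs]; exact hUk) hVred
        omega
      · -- T itself has nonempty support contained in supp U; reduce it
        have hTZS : IsZeroSumSeq G₀ T :=
          ⟨fun g hg => hUZS.1 g (Multiset.mem_of_le hTle hg), hTsum⟩
        obtain ⟨T', hle', hsum', hsupp', hred'⟩ := reduce_exists' _ T rfl hTsum
        have hT'ZS : IsZeroSumSeq G₀ T' :=
          ⟨fun g hg => hTZS.1 g (Multiset.mem_of_le hle' hg), hsum'⟩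
        have hT'supp : signedSupp T' = signedSupp T := hsupp'
        have hT'ne : signedSupp T' ≠ ∅ := by rw [hT'supp]; exact hTsupp
        -- supp T ⊆ supp U
        have hTsubU : signedSupp T ⊆ signedSupp U := by
          intro g hg
          rcases mem_or_neg_mem' hg with h1 | h1
          · exact hUred g (Multiset.mem_of_le hTle h1)
          · have := hUred (-g) (Multiset.mem_of_le hTle h1)
            have := signedSupp_symm' this
            rwa [neg_neg] at this
        have heq := helem.2.2 T hTZS hTsupp hTsubU
        have hT'eq : signedSupp T' = signedSupp U := hT'supp.trans heq
        have hT'fs : fsupp T' = fsupp U := fsupp_eq_of_supp_eq hT'eq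
        have hT'red : ∀ g ∈ T', g ∈ signedSupp T' := hred'
        have hT'card : Multiset.card T' ≤ Multiset.card T := Multiset.card_le_card hle'
        have := hmmin T' hT'ZS (by rw [hT'fs]; exact hUne) (by rw [hT'fs]; exact hUk) hT'red
        omega
  refine ⟨U, ⟨hatom, helem⟩, ?_⟩
  by_contra hlt
  exact hsuppne (signedSupp_card_le_two' (by omega) hUZS.2)

lemma elem_atom_card3 {G₀ : Set (Fin r → ℤ)} {U : Multiset (Fin r → ℤ)}
    (hU : IsElemAtom G₀ U) : 3 ≤ Multiset.card U := by
  by_contra h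
  exact hU.2.2.1 (signedSupp_card_le_two' (by omega) hU.1.1.2)

lemma exists_big_atom {G₀ : Set (Fin r → ℤ)} (h : (3:ℕ∞) ≤ Davenport G₀) :
    ∃ U, IsAtomSeq G₀ U ∧ 3 ≤ Multiset.card U := by
  by_contra hc
  push_neg at hc
  have hD : Davenport G₀ ≤ 2 := by
    rw [Davenport]
    refine iSup₂_le fun U hU => ?_
    have h3 := hc U hU
    have h2 : Multiset.card U ≤ 2 := by omega
    exact_mod_cast h2
  have := le_trans h hD
  norm_num at this

lemma supp_ne_of_big_atom {G₀ : Set (Fin r → ℤ)} {U : Multiset (Fin r → ℤ)}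
    (hU : IsAtomSeq G₀ U) (h3 : 3 ≤ Multiset.card U) : signedSupp U ≠ ∅ := by
  intro hemp
  obtain ⟨⟨hmem, hsum⟩, hne, hmin⟩ := hU
  obtain ⟨g, hg⟩ := Multiset.exists_mem_of_ne_zero hne
  have hcnt : U.count g = U.count (-g) := by
    by_contra hc
    have : g ∈ signedSupp U := hc
    rw [hemp] at this
    exact this
  by_cases hg0 : g = -g
  · have hg0' : g = 0 := neg_self_eq' hg0
    subst hg0'
    have hle : ({0} : Multiset (Fin r → ℤ)) ≤ U := Multiset.singleton_le.mpr hg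
    have hT := hmin {0} hle (by simp) (by simp)
    have := congrArg Multiset.card hT
    simp at this
    omega
  · have hg1 : 1 ≤ U.count g := Multiset.one_le_count_iff_mem.mpr hg
    have hng1 : 1 ≤ U.count (-g) := by omega
    have hle : ({g, -g} : Multiset (Fin r → ℤ)) ≤ U := by
      rw [Multiset.le_iff_count]
      intro a
      have e1 : ({g, -g} : Multiset (Fin r → ℤ)) = g ::ₘ {-g} := rfl
      rw [e1, Multiset.count_cons, Multiset.count_singleton]
      by_cases c1 : a = g
      · subst c1
        rw [if_pos rfl, if_neg hg0]
        omega
      · by_cases c2 : a = -g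
        · subst c2
          rw [if_pos rfl, if_neg c1]
          omega
        · rw [if_neg c2, if_neg c1]
          have : a ∉ ({g, -g} : Multiset (Fin r → ℤ)) := by
            simp [c1, c2]
          omega
    have hT := hmin {g, -g} hle (by simp) (by simp)
    have := congrArg Multiset.card hT
    simp at this
    omega

lemma atom_le_davenport {G₀ : Set (Fin r → ℤ)} {U : Multiset (Fin r → ℤ)}
    (hU : IsAtomSeq G₀ U) : (Multiset.card U : ℕ∞) ≤ Davenport G₀ :=
  le_iSup₂ (f := fun (U : Multiset (Fin r → ℤ)) (_ : U ∈ {U | IsAtomSeq G₀ U}) =>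
    (Multiset.card U : ℕ∞)) U hU

lemma elem_atom_le_davenportElem {G₀ : Set (Fin r → ℤ)} {U : Multiset (Fin r → ℤ)}
    (hU : IsElemAtom G₀ U) : (Multiset.card U : ℕ∞) ≤ DavenportElem G₀ :=
  le_iSup₂ (f := fun (U : Multiset (Fin r → ℤ)) (_ : U ∈ {U | IsElemAtom G₀ U}) =>
    (Multiset.card U : ℕ∞)) U hU

end Aux

/-- `D(G₀) ≥ 3` if and only if there exists an elementary atom over `G₀`; in this case
`D^elm(G₀) ≥ 3` as well. -/
theorem stmt5 {r : ℕ} (G₀ : Set (Fin r → ℤ)) (hne : G₀.Nonempty) :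
    ((3 : ℕ∞) ≤ Davenport G₀ ↔ ∃ U : Multiset (Fin r → ℤ), IsElemAtom G₀ U) ∧
    ((3 : ℕ∞) ≤ Davenport G₀ → (3 : ℕ∞) ≤ DavenportElem G₀) := by
  have fwd : (3 : ℕ∞) ≤ Davenport G₀ → ∃ U, IsElemAtom G₀ U ∧ 3 ≤ Multiset.card U := by
    intro h3
    obtain ⟨U, hU, hc⟩ := exists_big_atom h3
    exact exists_elem_atom ⟨U, hU.1, supp_ne_of_big_atom hU hc⟩
  constructor
  · constructor
    · intro h3
      obtain ⟨V, hV, -⟩ := fwd h3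
      exact ⟨V, hV⟩
    · rintro ⟨U, hU⟩
      have h3 := elem_atom_card3 hU
      calc (3:ℕ∞) = ((3:ℕ) : ℕ∞) := by norm_num
        _ ≤ (Multiset.card U : ℕ∞) := by exact_mod_cast h3
        _ ≤ Davenport G₀ := atom_le_davenport hU.1
  · intro h3
    obtain ⟨U, hU, hc⟩ := fwd h3
    calc (3:ℕ∞) = ((3:ℕ) : ℕ∞) := by norm_num
      _ ≤ (Multiset.card U : ℕ∞) := by exact_mod_cast hc
      _ ≤ DavenportElem G₀ := elem_atom_le_davenportElem hU
end

section
/- If U is an elementary zero-sum sequence over G_0 ⊆ ℤ^r with supp(U) ∩ supp(−U) = ∅, then |supp(U)| ≤ r + 1. -/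
/-!
Let `s = supp U` and suppose `|s| ≥ r + 2`. Over `ℚ`, the relations `∑_{g ∈ s} x_g g = 0` form a
space of dimension at least `2` containing the positive multiplicity vector `m` of `U`. For another
relation `x` not proportional to `m`, the relation `μ m - x`, with `μ = max_g x_g / m_g`, is
nonnegative, nonzero and vanishes somewhere. Clearing denominators, it is the multiplicity vector of
a zero-sum sequence `T` with `∅ ≠ supp T ⊊ supp U`. As `supp U ∩ supp (-U) = ∅`, signed supports
are just `supp ∪ -supp`, so `supp⁺ T ⊊ supp⁺ U`, contradicting elementarity.
-/

open Module

section Relations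

variable {K ι : Type*} [Field K] [Fintype ι]

lemma exists_le_smul_eq_of_pos [LinearOrder K] [IsStrictOrderedRing K] [Nonempty ι] {m : ι → K}
    (hm : ∀ i, 0 < m i) (x : ι → K) :
    ∃ μ : K, x ≤ μ • m ∧ ∃ i, x i = μ * m i := by
  obtain ⟨i₀, -, hmax⟩ := Finset.univ.exists_max_image (fun i => x i / m i) Finset.univ_nonempty
  refine ⟨x i₀ / m i₀, fun i => ?_, i₀, (div_mul_cancel₀ _ (hm i₀).ne').symm⟩
  exact (div_le_iff₀ (hm i)).mp (hmax i (Finset.mem_univ i))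

variable {V : Type*} [AddCommGroup V] [Module K V] [FiniteDimensional K V]

lemma exists_relation_notMem_span_singleton (v : ι → V)
    (hcard : finrank K V + 1 < Fintype.card ι) (m : ι → K) :
    ∃ x : ι → K, ∑ i, x i • v i = 0 ∧ x ∉ K ∙ m := by
  let φ := Fintype.linearCombination K v
  have hker : 2 ≤ finrank K (LinearMap.ker φ) := by
    have hrange : finrank K (LinearMap.range φ) ≤ finrank K V := Submodule.finrank_le _
    have := φ.finrank_range_add_finrank_ker
    rw [finrank_fintype_fun_eq_card] at this
    omega
  by_contra! h
  have hle : LinearMap.ker φ ≤ K ∙ m := fun x hx =>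
    h x (by rwa [LinearMap.mem_ker, Fintype.linearCombination_apply] at hx)
  have hspan : finrank K (K ∙ m) ≤ 1 :=
    (finrank_span_le_card ({m} : Set (ι → K))).trans (by simp)
  have := Submodule.finrank_mono hle
  omega

theorem exists_nonneg_relation_eq_zero_at [LinearOrder K] [IsStrictOrderedRing K] (v : ι → V)
    (hcard : finrank K V + 1 < Fintype.card ι) {m : ι → K} (hm : ∀ i, 0 < m i)
    (hmv : ∑ i, m i • v i = 0) :
    ∃ z : ι → K, 0 ≤ z ∧ z ≠ 0 ∧ (∃ i, z i = 0) ∧ ∑ i, z i • v i = 0 := by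
  have : Nonempty ι := Fintype.card_pos_iff.mp (by omega)
  obtain ⟨x, hxv, hxm⟩ := exists_relation_notMem_span_singleton v hcard m
  obtain ⟨μ, hle, i₀, hi₀⟩ := exists_le_smul_eq_of_pos hm x
  refine ⟨μ • m - x, sub_nonneg.mpr hle, fun h => hxm ?_, ⟨i₀, ?_⟩, ?_⟩
  · exact Submodule.mem_span_singleton.mpr ⟨μ, sub_eq_zero.mp h⟩
  · simp [hi₀]
  · simp only [Pi.sub_apply, Pi.smul_apply, smul_eq_mul, sub_smul, mul_smul,
      Finset.sum_sub_distrib, ← Finset.smul_sum, hmv, hxv, smul_zero, sub_zero]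

end Relations

lemma exists_nat_eq_mul_of_nonneg {ι : Type*} [Fintype ι] {z : ι → ℚ} (hz : 0 ≤ z) :
    ∃ N : ℕ, 0 < N ∧ ∃ c : ι → ℕ, ∀ i, (c i : ℚ) = N * z i := by
  refine ⟨∏ i, (z i).den, Finset.prod_pos fun i _ => (z i).pos, ?_⟩
  have hdvd (i : ι) : (z i).den ∣ ∏ j, (z j).den := Finset.dvd_prod_of_mem _ (Finset.mem_univ i)
  choose M hM using hdvd
  refine ⟨fun i => M i * (z i).num.toNat, fun i => ?_⟩
  have hnum : ((z i).num.toNat : ℚ) = (z i).num := by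
    exact_mod_cast Int.toNat_of_nonneg (Rat.num_nonneg.mpr (hz i))
  rw [hM i]
  push_cast
  rw [hnum, ← Rat.mul_den_eq_num]
  ring

theorem exists_nat_relation_eq_zero_at {ι κ : Type*} [Fintype ι] [Fintype κ] (v : ι → κ → ℤ)
    (hcard : Fintype.card κ + 1 < Fintype.card ι) {m : ι → ℕ} (hm : ∀ i, 0 < m i)
    (hmv : ∑ i, m i • v i = 0) :
    ∃ c : ι → ℕ, c ≠ 0 ∧ (∃ i, c i = 0) ∧ ∑ i, c i • v i = 0 := by
  let vℚ : ι → κ → ℚ := fun i k => v i k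
  have hcast (c : ι → ℕ) : ∑ i, (c i : ℚ) • vℚ i = fun k => ((∑ i, c i • v i) k : ℚ) := by
    ext k
    simp [vℚ, Finset.sum_apply]
  have hmvℚ : ∑ i, (m i : ℚ) • vℚ i = 0 := by
    rw [hcast, hmv]
    rfl
  obtain ⟨z, hz0, hz, ⟨i₀, hi₀⟩, hzv⟩ := exists_nonneg_relation_eq_zero_at vℚ
    (by rwa [finrank_fintype_fun_eq_card]) (fun i => by exact_mod_cast hm i) hmvℚ
  obtain ⟨N, hN, c, hc⟩ := exists_nat_eq_mul_of_nonneg hz0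
  refine ⟨c, fun h => hz (funext fun i => ?_), ⟨i₀, ?_⟩, funext fun k => ?_⟩
  · have := hc i
    simp only [h, Pi.zero_apply, Nat.cast_zero, zero_eq_mul, Nat.cast_eq_zero] at this
    exact this.resolve_left hN.ne'
  · exact_mod_cast (hc i₀).trans (by rw [hi₀, mul_zero] : (N : ℚ) * z i₀ = 0)
  · have hcv : ∑ i, (c i : ℚ) • vℚ i = 0 := by
      simp only [hc, mul_smul, ← Finset.smul_sum, hzv, smul_zero]
    have hk := congrFun ((hcast c).symm.trans hcv) k
    rw [Pi.zero_apply] at hk ⊢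
    exact_mod_cast hk

lemma mem_signedSupp_iff {r : ℕ} {S : Multiset (Fin r → ℤ)} (hS : ∀ g ∈ S, -g ∉ S)
    {g : Fin r → ℤ} : g ∈ signedSupp S ↔ g ∈ S ∨ -g ∈ S := by
  rw [signedSupp, Set.mem_ofPred_eq]
  constructor
  · intro h
    by_contra! hg
    exact h ((Multiset.count_eq_zero.mpr hg.1).trans (Multiset.count_eq_zero.mpr hg.2).symm)
  · rintro (hg | hng)
    · rw [Multiset.count_eq_zero.mpr (hS g hg)]
      exact (Multiset.count_pos.mpr hg).ne'
    · have hg : g ∉ S := fun hg => hS g hg hng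
      rw [Multiset.count_eq_zero.mpr hg]
      exact (Multiset.count_pos.mpr hng).ne

theorem IsElemZeroSumSeq.mem_of_forall_mem {r : ℕ} {G₀ : Set (Fin r → ℤ)}
    {U T : Multiset (Fin r → ℤ)} (hU : IsElemZeroSumSeq G₀ U) (hd : ∀ g ∈ U, -g ∉ U)
    (hT0 : T ≠ 0) (hTsum : T.sum = 0) (hTU : ∀ g ∈ T, g ∈ U) {g : Fin r → ℤ} (hg : g ∈ U) :
    g ∈ T := by
  have hdT : ∀ g ∈ T, -g ∉ T := fun g hg hng => hd g (hTU g hg) (hTU _ hng)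
  obtain ⟨⟨hUG₀, -⟩, -, hmin⟩ := hU
  obtain ⟨a, ha⟩ := Multiset.exists_mem_of_ne_zero hT0
  have heq := hmin T ⟨fun g hg => hUG₀ g (hTU g hg), hTsum⟩
    (Set.nonempty_iff_ne_empty.mp ⟨a, (mem_signedSupp_iff hdT).mpr (Or.inl ha)⟩)
    (fun a ha => (mem_signedSupp_iff hd).mpr (((mem_signedSupp_iff hdT).mp ha).imp (hTU a) (hTU _)))
  have hgT : g ∈ signedSupp T := heq ▸ (mem_signedSupp_iff hd).mpr (Or.inl hg)
  exact ((mem_signedSupp_iff hdT).mp hgT).resolve_right fun hng => hd g hg (hTU _ hng)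

/-- If `U` is an elementary zero-sum sequence over `G₀ ⊆ ℤ^r` with
`supp(U) ∩ supp(−U) = ∅`, then `|supp(U)| ≤ r + 1`. -/
theorem stmt6 {r : ℕ} (G₀ : Set (Fin r → ℤ)) (U : Multiset (Fin r → ℤ))
    (hU : IsElemZeroSumSeq G₀ U) (hd : ∀ g ∈ U, -g ∉ U) :
    U.toFinset.card ≤ r + 1 := by
  by_contra! hcard
  have hsum : ∑ g : U.toFinset, U.count (g : Fin r → ℤ) • (g : Fin r → ℤ) = 0 := by
    rw [Finset.sum_coe_sort U.toFinset (fun g => U.count g • g), ← Finset.sum_multiset_count]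
    exact hU.1.2
  obtain ⟨c, hc, ⟨g₀, hg₀⟩, hcv⟩ := exists_nat_relation_eq_zero_at Subtype.val
    (by rwa [Fintype.card_coe, Fintype.card_fin])
    (fun g => Multiset.count_pos.mpr (Multiset.mem_toFinset.mp g.2)) hsum
  let T := ∑ g : U.toFinset, Multiset.replicate (c g) (g : Fin r → ℤ)
  have hmemT {h : Fin r → ℤ} : h ∈ T ↔ ∃ g : U.toFinset, c g ≠ 0 ∧ h = g := by
    simp [T, Multiset.mem_sum, Multiset.mem_replicate]
  have hT0 : T ≠ 0 := by
    obtain ⟨g, hg⟩ := Function.ne_iff.mp hc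
    exact ne_of_mem_of_not_mem' (hmemT.mpr ⟨g, hg, rfl⟩) (Multiset.notMem_zero _)
  have hTsum : T.sum = 0 := by simpa [T, Multiset.sum_sum, Multiset.sum_replicate] using hcv
  have hTU : ∀ h ∈ T, h ∈ U := by
    intro h hh
    obtain ⟨g, -, rfl⟩ := hmemT.mp hh
    exact Multiset.mem_toFinset.mp g.2
  obtain ⟨g, hg, hgg₀⟩ := hmemT.mp <|
    hU.mem_of_forall_mem hd hT0 hTsum hTU (Multiset.mem_toFinset.mp g₀.2)
  exact hg (Subtype.ext hgg₀ ▸ hg₀)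
end

section
/- For each r ≥ 1 there exists a sequence S_r over the nonzero vertices G_r^+ of the r-dimensional hypercube with |S_r| = F_{r+1}, |supp(S_r)| = r, supp(S_r) spanning ℚ^r, σ(S_r) = F_r·(e_1 + ⋯ + e_r), and such that no nonempty proper subsequence of S_r has sum in the subgroup generated by e_1 + ⋯ + e_r. -/
/-! Let `S₁ = (1)` and let `S_{r+1}` consist of `F_r` copies of `(0, 1, …, 1)` together with the
vectors `(1, 𝟙 - g)` for `g ∈ S_r`. A subsequence `T ≤ S_{r+1}` splits into `m` copies of
`(0, 1, …, 1)` and the lifts of some `T' ≤ S_r`; if `σ(T) = c·𝟙`, the first coordinate gives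
`|T'| = c` and the others then give `σ(T') = m·𝟙`, so by induction `T'` is empty or all of
`S_r`, which forces `m = 0` or `m = F_r`. Over `ℚ` the span of `S_{r+1}` contains
`σ(S_{r+1}) / F_{r+1} = 𝟙`, hence `𝟙 - (0, 1, …, 1) = e₁` and `𝟙 - (1, 𝟙 - g) = (0, g)`, so it
contains `e₁` and `0 × span S_r`. -/

/-- The set `G_r⁺` of nonzero vertices of the `r`-dimensional hypercube in `ℤ^r`,
i.e. the nonzero 0-1 vectors. -/
def hypercubePlus (r : ℕ) : Set (Fin r → ℤ) :=
  {g | g ≠ 0 ∧ ∀ i, g i = 0 ∨ g i = 1}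

namespace Multiset

variable {α β : Type*}

theorem exists_le_of_le_add {s t u : Multiset α} (h : u ≤ s + t) :
    ∃ s' ≤ s, ∃ t' ≤ t, u = s' + t' := by
  classical
  exact ⟨u ∩ s, inter_le_right, u - s, Multiset.sub_le_iff_le_add'.2 h,
    by rw [add_comm, sub_add_inter]⟩

theorem exists_le_of_le_map {f : α → β} {s : Multiset α} {t : Multiset β} (h : t ≤ s.map f) :
    ∃ u ≤ s, t = u.map f := by
  classical
  induction s using Multiset.induction_on generalizing t with
  | empty => exact ⟨0, le_rfl, by simpa using h⟩
  | cons a s ih =>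
    rw [map_cons] at h
    by_cases ha : f a ∈ t
    · obtain ⟨u, hu, hut⟩ := ih (erase_le_iff_le_cons.2 h)
      exact ⟨a ::ₘ u, cons_le_cons a hu, by rw [map_cons, ← hut, cons_erase ha]⟩
    · obtain ⟨u, hu, rfl⟩ := ih ((le_cons_of_notMem ha).1 h)
      exact ⟨u, hu.trans (le_cons_self s a), rfl⟩

end Multiset

theorem Submodule.eq_top_of_cons_mem {R : Type*} [Semiring R] {n : ℕ}
    {V : Submodule R (Fin (n + 1) → R)} {s : Set (Fin n → R)} (hs : span R s = ⊤)
    (h₀ : (Fin.cons 1 0 : Fin (n + 1) → R) ∈ V)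
    (hcons : ∀ y ∈ s, (Fin.cons 0 y : Fin (n + 1) → R) ∈ V) : V = ⊤ := by
  let consZero : (Fin n → R) →ₗ[R] (Fin (n + 1) → R) :=
    (Fin.consLinearEquiv R fun _ => R).toLinearMap ∘ₗ LinearMap.inr R R (Fin n → R)
  have htail : ∀ y, (Fin.cons 0 y : Fin (n + 1) → R) ∈ V := by
    have : span R s ≤ V.comap consZero := span_le.2 hcons
    rw [hs] at this
    exact fun y => this trivial
  rw [eq_top_iff']
  intro x
  have hx : x = x 0 • (Fin.cons 1 0 : Fin (n + 1) → R) + Fin.cons 0 (Fin.tail x) := by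
    ext i; refine Fin.cases ?_ (fun j => ?_) i <;> simp [Fin.tail]
  rw [hx]
  exact add_mem (V.smul_mem _ h₀) (htail _)

theorem cons_mem_hypercubePlus {n : ℕ} {a : ℤ} {g : Fin n → ℤ} (ha : a = 0 ∨ a = 1)
    (hg : ∀ i, g i = 0 ∨ g i = 1) (hne : a ≠ 0 ∨ g ≠ 0) :
    (Fin.cons a g : Fin (n + 1) → ℤ) ∈ hypercubePlus (n + 1) :=
  ⟨Matrix.cons_nonzero_iff.2 hne, Fin.cases ha hg⟩

section FibSeq

open Multiset

def consOneCompl {n : ℕ} (g : Fin n → ℤ) : Fin (n + 1) → ℤ :=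
  Fin.cons 1 (1 - g)

theorem consOneCompl_injective {n : ℕ} : Function.Injective (consOneCompl (n := n)) := by
  intro g h hgh
  simpa using (Fin.cons_inj.1 hgh).2

theorem sum_replicate_add_map_consOneCompl {n : ℕ} (m : ℕ) (U : Multiset (Fin n → ℤ)) :
    (replicate m (Fin.cons 0 1) + U.map consOneCompl).sum =
      Fin.cons (card U : ℤ) (fun j => m + card U - U.sum j) := by
  ext i
  refine Fin.cases ?_ (fun j => ?_) i <;>
    simp [Pi.multiset_sum_apply, Function.comp_def, consOneCompl, sum_map_sub, add_sub_assoc]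

-- `fibSeq n` is `S_{n+1}`.
def fibSeq : (n : ℕ) → Multiset (Fin (n + 1) → ℤ)
  | 0 => {1}
  | n + 1 => replicate (Nat.fib (n + 1)) (Fin.cons 0 1) + (fibSeq n).map consOneCompl

theorem card_fibSeq (n : ℕ) : card (fibSeq n) = Nat.fib (n + 2) := by
  induction n with
  | zero => rfl
  | succ n ih => simp [fibSeq, ih, Nat.fib_add_two (n := n + 1)]

theorem sum_fibSeq (n : ℕ) : (fibSeq n).sum = fun _ => (Nat.fib (n + 1) : ℤ) := by
  cases n with
  | zero => rfl
  | succ n =>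
    rw [fibSeq, sum_replicate_add_map_consOneCompl, card_fibSeq]
    ext i
    refine Fin.cases ?_ (fun j => ?_) i
    · simp
    · simp [sum_fibSeq n]

theorem mem_hypercubePlus_of_mem_fibSeq {n : ℕ} {g : Fin (n + 1) → ℤ} (hg : g ∈ fibSeq n) :
    g ∈ hypercubePlus (n + 1) := by
  induction n with
  | zero =>
    rw [fibSeq, mem_singleton] at hg
    subst hg
    exact ⟨one_ne_zero, fun _ => Or.inr rfl⟩
  | succ n ih =>
    rw [fibSeq, mem_add, mem_replicate, mem_map] at hg
    rcases hg with ⟨-, rfl⟩ | ⟨g, hg, rfl⟩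
    · exact cons_mem_hypercubePlus (Or.inl rfl) (fun _ => Or.inr rfl) (Or.inr one_ne_zero)
    · refine cons_mem_hypercubePlus (Or.inr rfl) (fun i => ?_) (Or.inl one_ne_zero)
      rcases (ih hg).2 i with h | h <;> simp [h]

theorem card_toFinset_fibSeq (n : ℕ) : (fibSeq n).toFinset.card = n + 1 := by
  classical
  induction n with
  | zero => rfl
  | succ n ih =>
    have hnot : (Fin.cons 0 1 : Fin (n + 2) → ℤ) ∉ (fibSeq n).toFinset.image consOneCompl := by
      simp [consOneCompl, Fin.cons_inj]
    rw [fibSeq, toFinset_add, toFinset_map, toFinset_replicate,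
      if_neg (Nat.fib_pos.2 n.succ_pos).ne', Finset.singleton_union,
      Finset.card_insert_of_notMem hnot,
      Finset.card_image_of_injective _ consOneCompl_injective, ih]

theorem one_mem_span_fibSeq (n : ℕ) :
    (1 : Fin (n + 1) → ℚ) ∈ Submodule.span ℚ ((fun g : Fin (n + 1) → ℤ => fun i => (g i : ℚ)) ''
      (↑(fibSeq n).toFinset : Set (Fin (n + 1) → ℤ))) := by
  set C := fun g : Fin (n + 1) → ℤ => fun i => (g i : ℚ) with hC
  set V := Submodule.span ℚ (C '' (↑(fibSeq n).toFinset : Set (Fin (n + 1) → ℤ)))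
  have hsum : C (fibSeq n).sum ∈ V := by
    rw [show C (fibSeq n).sum = ((fibSeq n).map C).sum from
      map_multiset_sum (AddMonoidHom.compLeft (Int.castAddHom ℚ) (Fin (n + 1))) _]
    refine multiset_sum_mem _ fun x hx => ?_
    obtain ⟨g, hg, rfl⟩ := mem_map.1 hx
    exact Submodule.subset_span ⟨g, mem_toFinset.2 hg, rfl⟩
  have hfib : (Nat.fib (n + 1) : ℚ) ≠ 0 := by exact_mod_cast (Nat.fib_pos.2 n.succ_pos).ne'
  have := V.smul_mem (Nat.fib (n + 1) : ℚ)⁻¹ hsum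
  rwa [sum_fibSeq, show C (fun _ => (Nat.fib (n + 1) : ℤ)) = (Nat.fib (n + 1) : ℚ) • 1 by
    ext; simp [hC], smul_smul, inv_mul_cancel₀ hfib, one_smul] at this

theorem span_fibSeq (n : ℕ) :
    Submodule.span ℚ ((fun g : Fin (n + 1) → ℤ => fun i => (g i : ℚ)) ''
      (↑(fibSeq n).toFinset : Set (Fin (n + 1) → ℤ))) = ⊤ := by
  induction n with
  | zero =>
    refine Submodule.eq_top_of_cons_mem (s := ∅) (Subsingleton.elim _ _) ?_ (by simp)
    convert one_mem_span_fibSeq 0 using 1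
    ext i
    fin_cases i
    rfl
  | succ n ih =>
    set C := fun g : Fin (n + 2) → ℤ => fun i => (g i : ℚ) with hC
    have hmem : ∀ g ∈ fibSeq (n + 1), C g ∈ Submodule.span ℚ (C '' ↑(fibSeq (n + 1)).toFinset) :=
      fun g hg => Submodule.subset_span ⟨g, mem_toFinset.2 hg, rfl⟩
    refine Submodule.eq_top_of_cons_mem ih ?_ ?_
    · have hv : Fin.cons 0 1 ∈ fibSeq (n + 1) :=
        mem_add.2 (Or.inl (mem_replicate.2 ⟨(Nat.fib_pos.2 n.succ_pos).ne', rfl⟩))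
      rw [show (Fin.cons 1 0 : Fin (n + 2) → ℚ) = 1 - C (Fin.cons 0 1) by
        ext i; refine Fin.cases ?_ (fun j => ?_) i <;> simp [hC]]
      exact sub_mem (one_mem_span_fibSeq _) (hmem _ hv)
    · rintro _ ⟨g, hg, rfl⟩
      have hg' : consOneCompl g ∈ fibSeq (n + 1) :=
        mem_add.2 (Or.inr (mem_map_of_mem _ (mem_toFinset.1 hg)))
      rw [show (Fin.cons 0 fun i => (g i : ℚ) : Fin (n + 2) → ℚ) = 1 - C (consOneCompl g) by
        ext i; refine Fin.cases ?_ (fun j => ?_) i <;> simp [hC, consOneCompl]]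
      exact sub_mem (one_mem_span_fibSeq _) (hmem _ hg')

theorem eq_zero_or_eq_of_le_fibSeq {n : ℕ} {T : Multiset (Fin (n + 1) → ℤ)} (hT : T ≤ fibSeq n)
    {c : ℤ} (hc : T.sum = fun _ => c) : T = 0 ∨ T = fibSeq n := by
  induction n generalizing c with
  | zero => exact le_singleton.1 hT
  | succ n ih =>
    obtain ⟨R, hR, U, hU, rfl⟩ := exists_le_of_le_add hT
    obtain ⟨m, -, rfl⟩ := le_replicate_iff.1 hR
    obtain ⟨T', hT', rfl⟩ := exists_le_of_le_map hU
    rw [sum_replicate_add_map_consOneCompl] at hc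
    have hcard : (card T' : ℤ) = c := by simpa using congr_fun hc 0
    have hsum : T'.sum = fun _ => (m : ℤ) := by
      ext j
      have := congr_fun hc j.succ
      simp only [Fin.cons_succ] at this
      omega
    rcases ih hT' hsum with rfl | rfl
    · have hm : m = 0 := by simpa [eq_comm] using congr_fun hsum 0
      simp [hm]
    · have hm : m = Nat.fib (n + 1) := by
        simpa [sum_fibSeq, eq_comm] using congr_fun hsum 0
      rw [hm]
      exact Or.inr rfl

end FibSeq

/-- For each `r ≥ 1` there is a sequence `S_r` over `G_r⁺` with `|S_r| = F_{r+1}`,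
`|supp S_r| = r`, `supp S_r` spanning `ℚ^r`, `σ(S_r) = F_r·(e_1 + ⋯ + e_r)`, and no
nonempty proper subsequence of `S_r` has sum in the subgroup generated by `e_1 + ⋯ + e_r`. -/
theorem stmt8 (r : ℕ) (hr : 1 ≤ r) :
    ∃ S : Multiset (Fin r → ℤ),
      (∀ g ∈ S, g ∈ hypercubePlus r) ∧
      Multiset.card S = Nat.fib (r + 1) ∧
      S.toFinset.card = r ∧
      Submodule.span ℚ
        ((fun g : Fin r → ℤ => fun i => (g i : ℚ)) '' (↑S.toFinset : Set (Fin r → ℤ))) = ⊤ ∧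
      S.sum = (fun _ => (Nat.fib r : ℤ)) ∧
      ∀ T : Multiset (Fin r → ℤ), T ≤ S → T ≠ 0 → T ≠ S →
        T.sum ∉ AddSubgroup.zmultiples ((fun _ => 1) : Fin r → ℤ) := by
  obtain ⟨n, rfl⟩ : ∃ n, r = n + 1 := ⟨r - 1, by omega⟩
  refine ⟨fibSeq n, fun _ => mem_hypercubePlus_of_mem_fibSeq, card_fibSeq n,
    card_toFinset_fibSeq n, span_fibSeq n, sum_fibSeq n, ?_⟩
  rintro T hT hT₀ hTS ⟨c, hc⟩
  refine (eq_zero_or_eq_of_le_fibSeq hT (c := c) ?_).elim hT₀ hTS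
  rw [← hc]
  ext
  simp
end

section
/- For r ≥ 2 and G_0 = G_r^+ ∪ −G_r^+, the Davenport constant satisfies D(G_0) ≥ F_{r+2}, where F denotes the Fibonacci sequence. -/
namespace Stmt9Aux

/-- standard basis-ish vector -/
def ee (r k : ℕ) : Fin r → ℤ := fun i => if (i : ℕ) = k then 1 else 0

/-- the pair (positives, negatives-as-positive-vectors) -/
def PN (r : ℕ) : ℕ → Multiset (Fin r → ℤ) × Multiset (Fin r → ℤ)
  | 0 => ({ee r 0}, {ee r 0})
  | k + 1 =>
      ((PN r k).2 + Multiset.card (PN r k).1 • ({ee r (k + 1)} : Multiset (Fin r → ℤ)),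
       ((PN r k).1).map (· + ee r (k + 1)))

def SS (r k : ℕ) : Multiset (Fin r → ℤ) := (PN r k).1 + ((PN r k).2).map Neg.neg

lemma card_PN (r k : ℕ) :
    Multiset.card (PN r k).1 = Nat.fib (k + 2) ∧
      Multiset.card (PN r k).2 = Nat.fib (k + 1) := by
  induction k with
  | zero => simp [PN]
  | succ k ih =>
      simp only [PN, Multiset.card_add, Multiset.card_map, Multiset.card_nsmul,
        Multiset.card_singleton, ih.1, ih.2]
      refine ⟨?_, trivial⟩
      rw [Nat.fib_add_two (n := k + 1)]; ring

lemma card_SS (r k : ℕ) : Multiset.card (SS r k) = Nat.fib (k + 3) := by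
  rw [SS, Multiset.card_add, Multiset.card_map, (card_PN r k).1, (card_PN r k).2,
    Nat.fib_add_two (n := k + 1)]
  ring

lemma msum_apply {r : ℕ} (s : Multiset (Fin r → ℤ)) (i : Fin r) :
    s.sum i = (s.map (fun f => f i)).sum :=
  map_multiset_sum (Pi.evalAddMonoidHom (fun _ => ℤ) i) s

lemma sum_map_add_const {M : Type*} [AddCommMonoid M] (s : Multiset M) (e : M) :
    (s.map (· + e)).sum = s.sum + Multiset.card s • e := by
  induction s using Multiset.induction_on with
  | empty => simp
  | cons a s ih =>
      simp only [Multiset.map_cons, Multiset.sum_cons, ih, Multiset.card_cons, succ_nsmul]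
      abel

def GoodV (r k : ℕ) (g : Fin r → ℤ) : Prop :=
  (∀ i, g i = 0 ∨ g i = 1) ∧ g ≠ 0 ∧ ∀ i : Fin r, k < (i : ℕ) → g i = 0

lemma goodV_mono {r k k' : ℕ} (h : k ≤ k') {g : Fin r → ℤ} (hg : GoodV r k g) :
    GoodV r k' g :=
  ⟨hg.1, hg.2.1, fun i hi => hg.2.2 i (lt_of_le_of_lt h hi)⟩

lemma goodV_ee {r k : ℕ} (hk : k < r) : GoodV r k (ee r k) := by
  refine ⟨fun i => ?_, fun h0 => ?_, fun i hi => ?_⟩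
  · by_cases h : (i : ℕ) = k <;> simp [ee, h]
  · have := congrFun h0 ⟨k, hk⟩
    simp [ee] at this
  · have : (i : ℕ) ≠ k := by omega
    simp [ee, this]

lemma inv (r : ℕ) : ∀ k, k < r →
    (∀ g ∈ (PN r k).1, GoodV r k g) ∧ (∀ g ∈ (PN r k).2, GoodV r k g) ∧
      (PN r k).1.sum = (PN r k).2.sum := by
  intro k
  induction k with
  | zero =>
      intro hk
      refine ⟨?_, ?_, rfl⟩ <;>
        · intro g hg
          simp only [PN, Multiset.mem_singleton] at hg
          subst hg
          exact goodV_ee hk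
  | succ k ih =>
      intro hk
      obtain ⟨hP, hN, hsum⟩ := ih (by omega)
      have hee := goodV_ee (r := r) (k := k + 1) hk
      refine ⟨?_, ?_, ?_⟩
      · intro g hg
        simp only [PN, Multiset.mem_add] at hg
        rcases hg with hg | hg
        · exact goodV_mono (Nat.le_succ k) (hN g hg)
        · rw [Multiset.nsmul_singleton] at hg
          rw [Multiset.eq_of_mem_replicate hg]
          exact hee
      · intro g hg
        simp only [PN, Multiset.mem_map] at hg
        obtain ⟨x, hx, rfl⟩ := hg
        obtain ⟨hx01, hxne, hxhi⟩ := hP x hx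
        have hxk : x ⟨k + 1, hk⟩ = 0 := hxhi _ (by simp)
        refine ⟨fun i => ?_, fun h0 => ?_, fun i hi => ?_⟩
        · by_cases h : (i : ℕ) = k + 1
          · right
            have : x i = 0 := hxhi i (by omega)
            simp [Pi.add_apply, this, ee, h]
          · rcases hx01 i with h' | h' <;> simp [Pi.add_apply, ee, h, h']
        · have := congrFun h0 ⟨k + 1, hk⟩
          simp [Pi.add_apply, hxk, ee] at this
        · have h1 : x i = 0 := hxhi i (by omega)
          have h2 : (i : ℕ) ≠ k + 1 := by omega
          simp [Pi.add_apply, h1, ee, h2]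
      · simp only [PN]
        rw [Multiset.sum_add, Multiset.nsmul_singleton, Multiset.sum_replicate,
          sum_map_add_const, hsum]

lemma atom_neg {r : ℕ} {G₀ : Set (Fin r → ℤ)} (hG : ∀ g ∈ G₀, -g ∈ G₀)
    {S : Multiset (Fin r → ℤ)} (h : IsAtomSeq G₀ S) : IsAtomSeq G₀ (S.map Neg.neg) := by
  obtain ⟨⟨hmem, hsum⟩, hne, hmin⟩ := h
  have hmapmap : ∀ U : Multiset (Fin r → ℤ), (U.map Neg.neg).map Neg.neg = U := by
    intro U
    rw [Multiset.map_map]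
    simp [Function.comp]
  refine ⟨⟨?_, ?_⟩, ?_, ?_⟩
  · intro g hg
    obtain ⟨x, hx, rfl⟩ := Multiset.mem_map.mp hg
    exact hG x (hmem x hx)
  · rw [Multiset.sum_map_neg', hsum, neg_zero]
  · simpa using hne
  · intro T hT hTne hTsum
    have h2 : T.map Neg.neg ≤ S := by
      have := Multiset.map_le_map (f := Neg.neg) hT
      rwa [hmapmap] at this
    have h3 := hmin (T.map Neg.neg) h2 (by simpa using hTne)
      (by rw [Multiset.sum_map_neg', hTsum, neg_zero])
    have := congrArg (Multiset.map Neg.neg) h3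
    rwa [hmapmap] at this

lemma hyp_symm (r : ℕ) :
    ∀ g ∈ (hypercubePlus r ∪ {g | -g ∈ hypercubePlus r} : Set (Fin r → ℤ)),
      -g ∈ (hypercubePlus r ∪ {g | -g ∈ hypercubePlus r} : Set (Fin r → ℤ)) := by
  intro g hg
  rcases hg with hg | hg
  · right
    simpa using hg
  · left
    exact hg

lemma atom_SS (r : ℕ) : ∀ k, k < r →
    IsAtomSeq (hypercubePlus r ∪ {g | -g ∈ hypercubePlus r}) (SS r k) := by
  intro k
  induction k with
  | zero =>
      intro hk
      have he := goodV_ee (r := r) (k := 0) hk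
      have hene : ee r 0 ≠ 0 := he.2.1
      refine ⟨⟨?_, ?_⟩, ?_, ?_⟩
      · intro g hg
        simp only [SS, PN, Multiset.map_singleton, Multiset.mem_add,
          Multiset.mem_singleton] at hg
        rcases hg with rfl | rfl
        · exact Or.inl ⟨he.2.1, he.1⟩
        · refine Or.inr ?_
          simp only [Set.mem_setOf_eq, neg_neg]
          exact ⟨he.2.1, he.1⟩
      · simp [SS, PN]
      · simp [SS, PN]
      · intro T hT hTne hTsum
        have hS : SS r 0 = {ee r 0, -(ee r 0)} := by
          simp [SS, PN]
        rw [hS] at hT ⊢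
        have hcard : Multiset.card T ≤ 2 := by
          have := Multiset.card_le_card hT
          simpa using this
        interval_cases h : Multiset.card T
        · exact absurd (Multiset.card_eq_zero.mp h) hTne
        · obtain ⟨x, rfl⟩ := Multiset.card_eq_one.mp h
          simp only [Multiset.sum_singleton] at hTsum
          subst hTsum
          exfalso
          have hx : (0 : Fin r → ℤ) ∈ ({ee r 0, -(ee r 0)} : Multiset (Fin r → ℤ)) :=
            Multiset.mem_of_le hT (by simp)
          simp only [Multiset.insert_eq_cons, Multiset.mem_cons, Multiset.mem_singleton] at hx
          rcases hx with hx | hx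
          · exact hene hx.symm
          · exact hene (by rw [← neg_neg (ee r 0), ← hx]; simp)
        · exact Multiset.eq_of_le_of_card_le hT (by simp [h])
  | succ k ih =>
      intro hk
      classical
      have hk' : k < r := by omega
      obtain ⟨hP, hN, hsum⟩ := inv r k hk'
      obtain ⟨hP', hN', hsum'⟩ := inv r (k + 1) hk
      have hAtom := atom_neg (hyp_symm r) (ih hk')
      set e : Fin r → ℤ := ee r (k + 1) with he_def
      set i0 : Fin r := ⟨k + 1, hk⟩ with hi0
      have hei0 : e i0 = 1 := by simp [he_def, ee, hi0]
      set c := Multiset.card (PN r k).1 with hc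
      set negpart : Multiset (Fin r → ℤ) := ((PN r k).1.map (· + e)).map Neg.neg
        with hnegpart
      have hSS : SS r (k + 1) =
          ((PN r k).2 + c • ({e} : Multiset (Fin r → ℤ))) + negpart := rfl
      have hNco : ∀ x ∈ (PN r k).2, x i0 = 0 := fun x hx => (hN x hx).2.2 i0 (by simp [hi0])
      have hPco : ∀ x ∈ (PN r k).1, x i0 = 0 := fun x hx => (hP x hx).2.2 i0 (by simp [hi0])
      have hnegco : ∀ x ∈ negpart, x i0 = -1 := by
        intro x hx
        rw [hnegpart, Multiset.map_map, Multiset.mem_map] at hx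
        obtain ⟨g, hg, rfl⟩ := hx
        simp only [Function.comp_apply, Pi.neg_apply, Pi.add_apply, hPco g hg, hei0]
        ring
      refine ⟨⟨?_, ?_⟩, ?_, ?_⟩
      · intro g hg
        rw [SS, Multiset.mem_add] at hg
        rcases hg with hg | hg
        · obtain ⟨h01, hne0, -⟩ := hP' g hg
          exact Or.inl ⟨hne0, h01⟩
        · obtain ⟨x, hx, rfl⟩ := Multiset.mem_map.mp hg
          obtain ⟨h01, hne0, -⟩ := hN' x hx
          refine Or.inr ?_
          simp only [Set.mem_setOf_eq, neg_neg]
          exact ⟨hne0, h01⟩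
      · rw [SS, Multiset.sum_add, Multiset.sum_map_neg', hsum']
        simp
      · intro h0
        have h1 := card_SS r (k + 1)
        rw [h0] at h1
        simp only [Multiset.card_zero] at h1
        have := Nat.fib_pos.mpr (show 0 < k + 1 + 3 by omega)
        omega
      · intro T hT hTne hTsum
        set p : (Fin r → ℤ) → Prop := fun x => x i0 = 1 with hp
        -- filters of the big sequence
        have hfN : (PN r k).2.filter p = 0 :=
          Multiset.filter_eq_nil.mpr (fun x hx => by
            show ¬ x i0 = 1; rw [hNco x hx]; norm_num)
        have hfneg : negpart.filter p = 0 :=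
          Multiset.filter_eq_nil.mpr (fun x hx => by
            show ¬ x i0 = 1; rw [hnegco x hx]; norm_num)
        have hfe : (c • ({e} : Multiset (Fin r → ℤ))).filter p
            = Multiset.replicate c e := by
          rw [Multiset.nsmul_singleton]
          exact Multiset.filter_eq_self.mpr (fun x hx => by
            show x i0 = 1; rw [Multiset.eq_of_mem_replicate hx]; exact hei0)
        have hfN' : (PN r k).2.filter (fun x => ¬ p x) = (PN r k).2 :=
          Multiset.filter_eq_self.mpr (fun x hx => by
            show ¬ x i0 = 1; rw [hNco x hx]; norm_num)
        have hfneg' : negpart.filter (fun x => ¬ p x) = negpart :=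
          Multiset.filter_eq_self.mpr (fun x hx => by
            show ¬ x i0 = 1; rw [hnegco x hx]; norm_num)
        have hfe' : (c • ({e} : Multiset (Fin r → ℤ))).filter (fun x => ¬ p x) = 0 := by
          rw [Multiset.nsmul_singleton]
          exact Multiset.filter_eq_nil.mpr (fun x hx => by
            show ¬ ¬ x i0 = 1; rw [Multiset.eq_of_mem_replicate hx, hei0]; norm_num)
        have hF1 : (SS r (k + 1)).filter p = Multiset.replicate c e := by
          rw [hSS, Multiset.filter_add, Multiset.filter_add, hfN, hfneg, hfe]
          simp
        have hF0 : (SS r (k + 1)).filter (fun x => ¬ p x) =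
            (PN r k).2 + negpart := by
          rw [hSS, Multiset.filter_add, Multiset.filter_add, hfN', hfneg', hfe']
          simp
        set f : (Fin r → ℤ) → (Fin r → ℤ) := fun x => if x i0 = -1 then x + e else x
          with hf
        have hmN : (PN r k).2.map f = (PN r k).2 := by
          rw [Multiset.map_congr (g := id) rfl (fun x hx => by
            show (if x i0 = -1 then x + e else x) = x
            rw [if_neg (by rw [hNco x hx]; norm_num)]), Multiset.map_id]
        have hmneg : negpart.map f = (PN r k).1.map Neg.neg := by
          rw [hnegpart, Multiset.map_map, Multiset.map_map]
          refine Multiset.map_congr rfl (fun g hg => ?_)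
          have h1 : (-(g + e) : Fin r → ℤ) i0 = -1 := by
            simp only [Pi.neg_apply, Pi.add_apply, hPco g hg, hei0]; ring
          show (if (-(g + e) : Fin r → ℤ) i0 = -1 then -(g + e) + e else -(g + e)) = -g
          rw [if_pos h1]
          abel
        have hmapf : ((PN r k).2 + negpart).map f = (SS r k).map Neg.neg := by
          rw [Multiset.map_add, hmN, hmneg]
          rw [SS, Multiset.map_add, Multiset.map_map]
          rw [show ((PN r k).2.map (Neg.neg ∘ Neg.neg)) = (PN r k).2 from by
            refine Eq.trans (Multiset.map_congr rfl (fun x _ => neg_neg x)) (Multiset.map_id _)]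
          exact add_comm _ _
        -- decompose T
        set A := T.filter p with hA_def
        set B := T.filter (fun x => ¬ p x) with hB_def
        have hTAB : A + B = T := Multiset.filter_add_not p T
        set a := Multiset.card A with ha
        have hAle : A ≤ Multiset.replicate c e := hF1 ▸ Multiset.filter_le_filter p hT
        have hAeq : A = Multiset.replicate a e :=
          Multiset.eq_replicate.mpr ⟨rfl, fun b hb =>
            Multiset.eq_of_mem_replicate (Multiset.mem_of_le hAle hb)⟩
        have hBle : B ≤ (PN r k).2 + negpart := hF0 ▸ Multiset.filter_le_filter _ hT
        have hBco : ∀ x ∈ B, x i0 = 0 ∨ x i0 = -1 := by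
          intro x hx
          have := Multiset.mem_of_le hBle hx
          rw [Multiset.mem_add] at this
          rcases this with h | h
          · exact Or.inl (hNco x h)
          · exact Or.inr (hnegco x h)
        set Bneg := B.filter (fun x => x i0 = -1) with hBneg_def
        set B0 := B.filter (fun x => ¬ x i0 = -1) with hB0_def
        have hBsplit : Bneg + B0 = B := Multiset.filter_add_not _ B
        set m := Multiset.card Bneg with hm
        have hB0co : ∀ x ∈ B0, x i0 = 0 := by
          intro x hx
          rw [hB0_def, Multiset.mem_filter] at hx
          rcases hBco x hx.1 with h | h
          · exact h
          · exact absurd h hx.2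
        -- coordinate i0 of sums
        have hAsum : A.sum i0 = (a : ℤ) := by
          rw [hAeq, Multiset.sum_replicate]
          simp [hei0]
        have hBnegsum : Bneg.sum i0 = -(m : ℤ) := by
          rw [msum_apply]
          rw [show Bneg.map (fun x => x i0) = Multiset.replicate m (-1 : ℤ) from
            Multiset.eq_replicate.mpr ⟨by simp [hm], fun b hb => by
              obtain ⟨x, hx, rfl⟩ := Multiset.mem_map.mp hb
              exact (Multiset.mem_filter.mp hx).2⟩]
          simp [Multiset.sum_replicate]
        have hB0sum : B0.sum i0 = 0 := by
          rw [msum_apply]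
          refine Multiset.sum_eq_zero ?_
          intro x hx
          obtain ⟨y, hy, rfl⟩ := Multiset.mem_map.mp hx
          exact hB0co y hy
        have hTsum0 : T.sum i0 = 0 := by rw [hTsum]; rfl
        have ham : a = m := by
          rw [← hTAB, Multiset.sum_add] at hTsum0
          rw [← hBsplit, Multiset.sum_add] at hTsum0
          have : A.sum i0 + (Bneg.sum i0 + B0.sum i0) = 0 := hTsum0
          rw [hAsum, hBnegsum, hB0sum] at this
          omega
        -- the projected sequence
        have hBfle : B.map f ≤ (SS r k).map Neg.neg :=
          hmapf ▸ Multiset.map_le_map hBle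
        have hBfsum : (B.map f).sum = B.sum + (m : ℕ) • e := by
          rw [← hBsplit, Multiset.map_add, Multiset.sum_add, Multiset.sum_add]
          rw [Multiset.map_congr (f := f) (g := (· + e)) rfl (fun x hx => by
            show (if x i0 = -1 then x + e else x) = x + e
            rw [if_pos ((Multiset.mem_filter.mp hx).2)])]
          rw [Multiset.map_congr (f := f) (g := id) rfl (fun x hx => by
            show (if x i0 = -1 then x + e else x) = x
            rw [if_neg ((Multiset.mem_filter.mp hx).2)]), Multiset.map_id]
          rw [sum_map_add_const, ← hm]
          abel
        have hBsumval : B.sum = -((a : ℕ) • e) := by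
          have h1 : A.sum + B.sum = 0 := by rw [← Multiset.sum_add, hTAB, hTsum]
          rw [hAeq, Multiset.sum_replicate] at h1
          linear_combination (norm := abel) h1
        have hBfsum0 : (B.map f).sum = 0 := by
          rw [hBfsum, hBsumval, ham]
          abel
        -- apply the induction hypothesis
        by_cases hB0' : B = 0
        · exfalso
          have hm0 : m = 0 := by
            rw [hm, hBneg_def, hB0', Multiset.filter_zero, Multiset.card_zero]
          have ha0 : a = 0 := by rw [ham, hm0]
          have : T = 0 := by rw [← hTAB, hAeq, ha0, hB0']; simp
          exact hTne this
        · have hBfne : B.map f ≠ 0 := by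
            simpa [Multiset.map_eq_zero] using hB0'
          have hBfeq : B.map f = (SS r k).map Neg.neg :=
            hAtom.2.2 _ hBfle hBfne hBfsum0
          have hcardB : Multiset.card ((PN r k).2 + negpart) ≤ Multiset.card B := by
            have h1 : Multiset.card (B.map f) = Multiset.card ((SS r k).map Neg.neg) := by
              rw [hBfeq]
            rw [Multiset.card_map, Multiset.card_map] at h1
            have h2 : Multiset.card (((PN r k).2 + negpart).map f)
                = Multiset.card ((SS r k).map Neg.neg) := by rw [hmapf]
            rw [Multiset.card_map, Multiset.card_map] at h2
            omega
          have hBeq : B = (PN r k).2 + negpart :=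
            Multiset.eq_of_le_of_card_le hBle hcardB
          have hmc : m = c := by
            rw [hm, hBneg_def, hBeq, Multiset.filter_add]
            rw [Multiset.filter_eq_nil.mpr (fun x hx => by
              simp only [hNco x hx]; norm_num)]
            rw [Multiset.filter_eq_self.mpr (fun x hx => hnegco x hx)]
            simp [hnegpart, hc]
          rw [hSS, ← hTAB, hAeq, ham, hmc, hBeq]
          rw [← Multiset.nsmul_singleton e c]
          exact (add_left_comm _ _ _).trans (add_assoc _ _ _).symm

end Stmt9Aux

/-- For `r ≥ 2` and `G₀ = G_r⁺ ∪ −G_r⁺`, the Davenport constant satisfies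
`D(G₀) ≥ F_{r+2}`. -/
theorem stmt9 (r : ℕ) (hr : 2 ≤ r) :
    (Nat.fib (r + 2) : ℕ∞) ≤
      Davenport (hypercubePlus r ∪ {g | -g ∈ hypercubePlus r}) := by
  have hk : r - 1 < r := by omega
  have hatom := Stmt9Aux.atom_SS r (r - 1) hk
  have hcard := Stmt9Aux.card_SS r (r - 1)
  have heq : (Nat.fib (r + 2) : ℕ∞) = (Multiset.card (Stmt9Aux.SS r (r - 1)) : ℕ∞) := by
    rw [hcard]
    congr 2
    omega
  rw [heq, Davenport]
  exact le_iSup₂ (f := fun (U : Multiset (Fin r → ℤ))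
    (_ : U ∈ {U | IsAtomSeq (hypercubePlus r ∪ {g | -g ∈ hypercubePlus r}) U}) =>
      (Multiset.card U : ℕ∞)) _ hatom
end

section
/- Let G_0 = G_r^+ ∪ −G_r^+ for r ≥ 1. For every atom U of the zero-sum monoid over G_0 with |U| ≥ 3 and any g ∈ G_0, the multiplicity of g in U is strictly less than |U|/2. -/
lemma msum_apply {r : ℕ} (S : Multiset (Fin r → ℤ)) (i : Fin r) :
    S.sum i = (S.map (fun h => h i)).sum := by
  induction S using Multiset.induction with
  | empty => simp
  | cons a s ih => simp [ih]

lemma all_eq_of_sum_eq {s : Multiset ℤ} {a : ℤ}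
    (hle : ∀ x ∈ s, a ≤ x) (hsum : s.sum = (Multiset.card s : ℤ) * a) :
    ∀ x ∈ s, x = a := by
  induction s using Multiset.induction with
  | empty => simp
  | cons b t ih =>
    have hb : a ≤ b := hle b (Multiset.mem_cons_self _ _)
    have ht : ∀ x ∈ t, a ≤ x := fun x hx => hle x (Multiset.mem_cons_of_mem hx)
    have htsum : (Multiset.card t : ℤ) * a ≤ t.sum := by
      have := Multiset.card_nsmul_le_sum ht
      simpa [nsmul_eq_mul] using this
    simp only [Multiset.sum_cons, Multiset.card_cons] at hsum
    push_cast at hsum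
    have hb' : b = a := by linarith
    have ht' : t.sum = (Multiset.card t : ℤ) * a := by linarith
    intro x hx
    rcases Multiset.mem_cons.1 hx with h | h
    · rw [h, hb']
    · exact ih ht ht' x h

lemma msum_map_neg {α : Type*} (s : Multiset α) (f : α → ℤ) :
    (s.map (fun x => -f x)).sum = -(s.map f).sum := by
  induction s using Multiset.induction with
  | empty => simp
  | cons a t ih => simp [ih]; ring

lemma sum_ge {s : Multiset ℤ} {a : ℤ} (hle : ∀ x ∈ s, a ≤ x) :
    (Multiset.card s : ℤ) * a ≤ s.sum := by
  have := Multiset.card_nsmul_le_sum hle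
  simpa [nsmul_eq_mul] using this

lemma key (r : ℕ) (U : Multiset (Fin r → ℤ))
    (hU : IsAtomSeq (hypercubePlus r ∪ {g | -g ∈ hypercubePlus r}) U)
    (h3 : 3 ≤ Multiset.card U)
    (g : Fin r → ℤ) (hg : g ∈ hypercubePlus r) :
    2 * U.count g < Multiset.card U := by
  classical
  obtain ⟨⟨hmem, hsum⟩, hne, hmin⟩ := hU
  by_contra hcon
  push_neg at hcon
  set k := U.count g with hk
  set n := Multiset.card U with hn
  -- entries of elements of U are in {-1,0,1}; positive ones 0/1, negative ones 0/-1
  have hentry : ∀ h ∈ U, (∀ i, h i = 0 ∨ h i = 1) ∨ (∀ i, h i = 0 ∨ h i = -1) := by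
    intro h hh
    rcases hmem h hh with hp | hp
    · exact Or.inl hp.2
    · refine Or.inr fun i => ?_
      rcases hp.2 i with h0 | h1
      · left; have : -h i = 0 := h0; linarith
      · right; have : -h i = 1 := h1; linarith
  -- choose coordinate i with g i = 1
  obtain ⟨i, hi⟩ : ∃ i, g i = 1 := by
    by_contra hno
    push_neg at hno
    apply hg.1
    funext j
    rcases hg.2 j with h0 | h1
    · exact h0
    · exact absurd h1 (hno j)
  -- split off copies of g
  have hrep : Multiset.replicate k g ≤ U := Multiset.le_count_iff_replicate_le.1 le_rfl
  set V := U - Multiset.replicate k g with hV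
  have hUeq : U = Multiset.replicate k g + V := by
    rw [hV, add_comm]
    exact (tsub_add_cancel_of_le hrep).symm
  have hVmem : ∀ h ∈ V, h ∈ U := by
    intro h hh; rw [hUeq]; exact Multiset.mem_add.2 (Or.inr hh)
  have hcardV : Multiset.card V = n - k := by
    have : n = k + Multiset.card V := by
      rw [hn, hUeq]; simp
    omega
  have hkn : k ≤ n := by rw [hk, hn]; exact Multiset.count_le_card _ _
  -- sum at coordinate i
  have hsumV : ∀ j : Fin r, (V.map (fun h => h j)).sum = -(k : ℤ) * g j := by
    intro j
    have h0 : U.sum j = 0 := by rw [hsum]; rfl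
    rw [msum_apply, hUeq] at h0
    simp only [Multiset.map_add, Multiset.sum_add, Multiset.map_replicate,
      Multiset.sum_replicate, nsmul_eq_mul] at h0
    linarith
  -- lower bound: each h i ≥ -1 for h ∈ V
  have hlow : ∀ x ∈ V.map (fun h => h i), (-1 : ℤ) ≤ x := by
    intro x hx
    obtain ⟨h, hh, rfl⟩ := Multiset.mem_map.1 hx
    rcases hentry h (hVmem h hh) with hp | hp <;> rcases hp i with h' | h' <;> omega
  have hgei := sum_ge hlow
  rw [hsumV i, hi, Multiset.card_map, hcardV] at hgei
  -- -(n-k) ≤ -k, so 2k ≤ n, hence n = 2k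
  have h2k : 2 * k ≤ n := by
    have : (k : ℤ) ≤ ((n - k : ℕ) : ℤ) := by linarith
    have := Int.ofNat_le.1 (by exact_mod_cast this)
    omega
  have hneq : n = 2 * k := le_antisymm hcon h2k
  have hcardV' : Multiset.card V = k := by omega
  -- equality case at coordinate i: all h i = -1 on V
  have halli : ∀ h ∈ V, h i = -1 := by
    have := all_eq_of_sum_eq hlow (by
      rw [hsumV i, hi, Multiset.card_map, hcardV']; ring)
    intro h hh
    exact this (h i) (Multiset.mem_map.2 ⟨h, hh, rfl⟩)
  -- elements of V are 0/-1 vectors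
  have hVneg : ∀ h ∈ V, ∀ j, h j = 0 ∨ h j = -1 := by
    intro h hh
    rcases hentry h (hVmem h hh) with hp | hp
    · rcases hp i with h' | h' <;> [skip; skip] <;>
        · exfalso; have := halli h hh; omega
    · exact hp
  -- each coordinate: h j = -g j on V
  have hallj : ∀ h ∈ V, ∀ j, h j = -g j := by
    intro h hh j
    rcases hg.2 j with h0 | h1
    · -- g j = 0: sum over V at j is 0, entries ≤ 0... use upper bound via negation
      have hlow' : ∀ x ∈ V.map (fun h' => -(h' j)), (0 : ℤ) ≤ x := by
        intro x hx
        obtain ⟨h', hh', rfl⟩ := Multiset.mem_map.1 hx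
        rcases hVneg h' hh' j with h' | h' <;> omega
      have hsum' : (V.map (fun h' => -(h' j))).sum = 0 := by
        rw [msum_map_neg V (fun h' => h' j), hsumV j, h0]; ring
      have := all_eq_of_sum_eq hlow' (by rw [hsum']; simp)
      have hz : -(h j) = 0 := this (-(h j)) (Multiset.mem_map.2 ⟨h, hh, rfl⟩)
      linarith
    · -- g j = 1: all entries -1
      have hlow' : ∀ x ∈ V.map (fun h' => h' j), (-1 : ℤ) ≤ x := by
        intro x hx
        obtain ⟨h', hh', rfl⟩ := Multiset.mem_map.1 hx
        rcases hVneg h' hh' j with h' | h' <;> omega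
      have := all_eq_of_sum_eq hlow' (by
        rw [hsumV j, h1, Multiset.card_map, hcardV']; ring)
      have hz : h j = -1 := this (h j) (Multiset.mem_map.2 ⟨h, hh, rfl⟩)
      linarith
  have hVrep : V = Multiset.replicate k (-g) := by
    rw [← hcardV']
    exact Multiset.eq_replicate_card.2 fun h hh => funext fun j => by
      simpa using hallj h hh j
  -- k ≥ 2
  have hk2 : 2 ≤ k := by omega
  -- T = {g, -g} is a proper zero-sum subsequence
  set T : Multiset (Fin r → ℤ) := Multiset.replicate 1 g + Multiset.replicate 1 (-g) with hT
  have hTle : T ≤ U := by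
    rw [hUeq, hVrep, hT]
    exact add_le_add ((Multiset.replicate_le_replicate g).2 (by omega))
      ((Multiset.replicate_le_replicate (-g)).2 (by omega))
  have hTne : T ≠ 0 := by
    simp [hT]
  have hTsum : T.sum = 0 := by simp [hT]
  have := hmin T hTle hTne hTsum
  have : Multiset.card T = n := by rw [this]
  simp [hT] at this
  omega

lemma msum_neg {r : ℕ} (S : Multiset (Fin r → ℤ)) :
    (S.map (fun h => -h)).sum = -S.sum := by
  induction S using Multiset.induction with
  | empty => simp
  | cons a s ih => simp [ih]; abel

/-- For `G₀ = G_r⁺ ∪ −G_r⁺`: every atom `U` of the zero-sum monoid over `G₀` with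
`|U| ≥ 3` satisfies `v_g(U) < |U|/2` for every `g ∈ G₀`. -/
theorem stmt10 (r : ℕ) (hr : 1 ≤ r) (U : Multiset (Fin r → ℤ))
    (hU : IsAtomSeq (hypercubePlus r ∪ {g | -g ∈ hypercubePlus r}) U)
    (h3 : 3 ≤ Multiset.card U)
    (g : Fin r → ℤ) (hg : g ∈ hypercubePlus r ∪ {g | -g ∈ hypercubePlus r}) :
    2 * U.count g < Multiset.card U := by
  classical
  rcases hg with hgp | hgn
  · exact key r U hU h3 g hgp
  · set U' := U.map (fun h => -h) with hU'def
    obtain ⟨⟨hmem, hsum⟩, hne, hmin⟩ := hU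
    have hinv : U'.map (fun h => -h) = U := by
      rw [hU'def, Multiset.map_map]
      simp [Function.comp]
    have hU' : IsAtomSeq (hypercubePlus r ∪ {g | -g ∈ hypercubePlus r}) U' := by
      refine ⟨⟨?_, ?_⟩, ?_, ?_⟩
      · intro h hh
        obtain ⟨x, hx, rfl⟩ := Multiset.mem_map.1 hh
        rcases hmem x hx with h' | h'
        · exact Or.inr (by simpa using h')
        · exact Or.inl h'
      · rw [hU'def, msum_neg, hsum]; simp
      · simp [hU'def, Multiset.map_eq_zero]
        intro h; exact hne (by simp [h])
      · intro T hTle hTne hTsum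
        have hT'le : T.map (fun h => -h) ≤ U := by
          calc T.map (fun h => -h) ≤ U'.map (fun h => -h) := Multiset.map_le_map hTle
          _ = U := hinv
        have hT'ne : T.map (fun h => -h) ≠ 0 := by
          simp [Multiset.map_eq_zero]; exact hTne
        have hT'sum : (T.map (fun h => -h)).sum = 0 := by
          rw [msum_neg, hTsum]; simp
        have heq := hmin _ hT'le hT'ne hT'sum
        have := congrArg (Multiset.map (fun h : Fin r → ℤ => -h)) heq
        simpa [Multiset.map_map, Function.comp, hU'def] using this
    have hcard : Multiset.card U' = Multiset.card U := by rw [hU'def, Multiset.card_map]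
    have hcount : U'.count (-g) = U.count g := by
      have := Multiset.count_map_eq_count' (fun h : Fin r → ℤ => -h) U neg_injective g
      simpa [hU'def] using this
    have := key r U' hU' (by rw [hcard]; exact h3) (-g) hgn
    omega
end

section
/- Let H = H_0 ⋉ D := ((H_0 ∖ H_0^×) × D) ∪ (H_0^× × {1}) as a submonoid of H_0 × D, with D ≠ {1} and H_0 not a group. Then H^× = H_0^× × {1}, the quotient group of H is q(H_0) × q(D), H is not saturated in H_0 × D, the complete integral closure of H equals Ĥ_0 × D̂, and hence H is not a Krull monoid. -/
/- Fix a non-unit `u` of `H₀`. Since the non-units of `H₀` form an ideal, `(u * a, e) ∈ H` for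
all `a ∈ H₀` and `e ∈ D`: multiplying by `u` moves all of `H₀ × D` into `H`. This gives
`q(H) = q(H₀) × q(D)` and `Ĥ₀ × D̂ ⊆ Ĥ`. For `d ∈ D ∖ {1}`, the element `(1, d)` is then in `Ĥ` but
not in `H`, and `(u, 1)` divides `(u, d)` in `H₀ × D` but not in `H`. -/

/- The monoids `H₀` and `D` are subsets of their quotient groups `G₁` and `G₂`; `a ∈ H₀` is a unit
of `H₀` iff `a⁻¹ ∈ H₀`. -/

def Set.completeIntegralClosure {G : Type*} [Monoid G] (S : Set G) : Set G :=
  {x | ∃ c ∈ S, ∀ n : ℕ, c * x ^ n ∈ S}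

/-- `H₀ ⋉ D = ((H₀ ∖ H₀ˣ) × D) ∪ (H₀ˣ × {1})`. -/
def semidirect {G₁ G₂ : Type*} [Group G₁] [One G₂] (H₀ : Set G₁) (D : Set G₂) :
    Set (G₁ × G₂) :=
  {x | x.1 ∈ H₀ ∧ x.2 ∈ D ∧ (x.1⁻¹ ∈ H₀ → x.2 = 1)}

lemma pow_mem_of_mul_mem {M : Type*} [Monoid M] {S : Set M} (h1 : (1 : M) ∈ S)
    (hm : ∀ a ∈ S, ∀ b ∈ S, a * b ∈ S) {a : M} (ha : a ∈ S) (n : ℕ) : a ^ n ∈ S := by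
  induction n with
  | zero => simpa using h1
  | succ n ih => simpa [pow_succ] using hm _ ih _ ha

lemma mem_completeIntegralClosure_of_mem {M : Type*} [Monoid M] {S : Set M} (h1 : (1 : M) ∈ S)
    (hm : ∀ a ∈ S, ∀ b ∈ S, a * b ∈ S) {a : M} (ha : a ∈ S) : a ∈ S.completeIntegralClosure :=
  ⟨1, h1, fun n => by simpa using pow_mem_of_mul_mem h1 hm ha n⟩

section Semidirect

variable {G₁ G₂ : Type*} [CommGroup G₁] [CommGroup G₂] {H₀ : Set G₁} {D : Set G₂}

lemma mul_inv_notMem_of_inv_notMem (h₀m : ∀ a ∈ H₀, ∀ b ∈ H₀, a * b ∈ H₀) {u b : G₁}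
    (hu : u⁻¹ ∉ H₀) (hb : b ∈ H₀) : (u * b)⁻¹ ∉ H₀ := by
  intro hub
  have hprod : (u * b)⁻¹ * b = u⁻¹ := by rw [mul_inv, inv_mul_cancel_right]
  exact hu (hprod ▸ h₀m _ hub _ hb)

lemma mk_mem_semidirect {a : G₁} {e : G₂} (ha : a ∈ H₀) (ha' : a⁻¹ ∉ H₀) (he : e ∈ D) :
    (a, e) ∈ semidirect H₀ D :=
  ⟨ha, he, fun h => absurd h ha'⟩

lemma mul_mk_mem_semidirect (h₀m : ∀ a ∈ H₀, ∀ b ∈ H₀, a * b ∈ H₀) {u a : G₁} {e : G₂}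
    (hu : u ∈ H₀) (hu' : u⁻¹ ∉ H₀) (ha : a ∈ H₀) (he : e ∈ D) :
    (u * a, e) ∈ semidirect H₀ D :=
  mk_mem_semidirect (h₀m _ hu _ ha) (mul_inv_notMem_of_inv_notMem h₀m hu' ha) he

lemma inv_mem_semidirect_iff (hD1 : (1 : G₂) ∈ D) {x : G₁ × G₂} (hx : x ∈ semidirect H₀ D) :
    x⁻¹ ∈ semidirect H₀ D ↔ x.1⁻¹ ∈ H₀ ∧ x.2 = 1 := by
  constructor
  · rintro ⟨hx₁, -, hunit⟩
    exact ⟨hx₁, inv_eq_one.1 (hunit (by simpa using hx.1))⟩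
  · rintro ⟨hx₁, hx₂⟩
    exact ⟨hx₁, by simpa [hx₂] using hD1, fun _ => by simp [hx₂]⟩

lemma exists_eq_mul_inv_of_mem_semidirect (h₀m : ∀ a ∈ H₀, ∀ b ∈ H₀, a * b ∈ H₀)
    (hq₁ : ∀ g : G₁, ∃ a ∈ H₀, ∃ b ∈ H₀, g = a * b⁻¹)
    (hq₂ : ∀ g : G₂, ∃ a ∈ D, ∃ b ∈ D, g = a * b⁻¹) {u : G₁} (hu : u ∈ H₀) (hu' : u⁻¹ ∉ H₀)
    (g : G₁ × G₂) : ∃ a ∈ semidirect H₀ D, ∃ b ∈ semidirect H₀ D, g = a * b⁻¹ := by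
  obtain ⟨a₁, ha₁, b₁, hb₁, hg₁⟩ := hq₁ g.1
  obtain ⟨a₂, ha₂, b₂, hb₂, hg₂⟩ := hq₂ g.2
  refine ⟨_, mul_mk_mem_semidirect h₀m hu hu' ha₁ ha₂,
    _, mul_mk_mem_semidirect h₀m hu hu' hb₁ hb₂, Prod.ext ?_ hg₂⟩
  rw [Prod.fst_mul, Prod.fst_inv, hg₁, ← div_eq_mul_inv, ← div_eq_mul_inv,
    mul_div_mul_left_eq_div]

lemma semidirect_not_saturated (h₀1 : (1 : G₁) ∈ H₀) (hD1 : (1 : G₂) ∈ D) {u : G₁} {d : G₂}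
    (hu : u ∈ H₀) (hu' : u⁻¹ ∉ H₀) (hd : d ∈ D) (hd1 : d ≠ 1) :
    ∃ a ∈ semidirect H₀ D, ∃ b ∈ semidirect H₀ D,
      (∃ z : G₁ × G₂, z.1 ∈ H₀ ∧ z.2 ∈ D ∧ b = a * z) ∧ ¬ ∃ z ∈ semidirect H₀ D, b = a * z := by
  refine ⟨(u, 1), mk_mem_semidirect hu hu' hD1, (u, d), mk_mem_semidirect hu hu' hd,
    ⟨(1, d), h₀1, hd, by simp⟩, ?_⟩
  rintro ⟨z, ⟨-, -, hunit⟩, hz⟩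
  obtain ⟨hz₁, hz₂⟩ := Prod.ext_iff.1 hz
  have hz₁ : z.1 = 1 := mul_eq_left.1 hz₁.symm
  have hz₂ : z.2 = d := by simpa using hz₂.symm
  exact hd1 (hz₂ ▸ hunit (by simpa [hz₁] using h₀1))

lemma completeIntegralClosure_semidirect (h₀m : ∀ a ∈ H₀, ∀ b ∈ H₀, a * b ∈ H₀) {u : G₁}
    (hu : u ∈ H₀) (hu' : u⁻¹ ∉ H₀) :
    (semidirect H₀ D).completeIntegralClosure =
      H₀.completeIntegralClosure ×ˢ D.completeIntegralClosure := by
  ext x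
  constructor
  · rintro ⟨c, ⟨hc₁, hc₂, -⟩, hc⟩
    exact ⟨⟨c.1, hc₁, fun n => (hc n).1⟩, ⟨c.2, hc₂, fun n => (hc n).2.1⟩⟩
  · rintro ⟨⟨c₁, hc₁, h₁⟩, ⟨c₂, hc₂, h₂⟩⟩
    refine ⟨(u * c₁, c₂), mul_mk_mem_semidirect h₀m hu hu' hc₁ hc₂, fun n => ?_⟩
    convert mul_mk_mem_semidirect h₀m hu hu' (h₁ n) (h₂ n) using 1
    ext <;> simp [mul_assoc]

lemma semidirect_ne_completeIntegralClosure (h₀1 : (1 : G₁) ∈ H₀)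
    (h₀m : ∀ a ∈ H₀, ∀ b ∈ H₀, a * b ∈ H₀) (hD1 : (1 : G₂) ∈ D)
    (hDm : ∀ a ∈ D, ∀ b ∈ D, a * b ∈ D) {u : G₁} {d : G₂} (hu : u ∈ H₀) (hu' : u⁻¹ ∉ H₀)
    (hd : d ∈ D) (hd1 : d ≠ 1) :
    semidirect H₀ D ≠ (semidirect H₀ D).completeIntegralClosure := by
  have hmem : ((1 : G₁), d) ∈ (semidirect H₀ D).completeIntegralClosure := by
    rw [completeIntegralClosure_semidirect h₀m hu hu']
    exact ⟨mem_completeIntegralClosure_of_mem h₀1 h₀m h₀1,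
      mem_completeIntegralClosure_of_mem hD1 hDm hd⟩
  intro heq
  rw [← heq] at hmem
  exact hd1 (hmem.2.2 (by simpa using h₀1))

end Semidirect

theorem stmt12 {G₁ G₂ : Type*} [CommGroup G₁] [CommGroup G₂]
    (H₀ : Set G₁) (D : Set G₂)
    (h₀1 : (1 : G₁) ∈ H₀) (h₀m : ∀ a ∈ H₀, ∀ b ∈ H₀, a * b ∈ H₀)
    (hq₁ : ∀ g : G₁, ∃ a ∈ H₀, ∃ b ∈ H₀, g = a * b⁻¹)
    (hD1 : (1 : G₂) ∈ D) (hDm : ∀ a ∈ D, ∀ b ∈ D, a * b ∈ D)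
    (hq₂ : ∀ g : G₂, ∃ a ∈ D, ∃ b ∈ D, g = a * b⁻¹)
    (hDnt : D ≠ {1})
    (hH₀ng : ∃ a ∈ H₀, a⁻¹ ∉ H₀)
    (H : Set (G₁ × G₂))
    (hH : H = {x : G₁ × G₂ | x.1 ∈ H₀ ∧ x.2 ∈ D ∧ (x.1⁻¹ ∈ H₀ → x.2 = 1)}) :
    -- `H^× = H₀^× × {1}`
    (∀ x ∈ H, (x⁻¹ ∈ H ↔ (x.1⁻¹ ∈ H₀ ∧ x.2 = 1))) ∧
    -- `q(H) = q(H₀) × q(D)`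
    (∀ g : G₁ × G₂, ∃ a ∈ H, ∃ b ∈ H, g = a * b⁻¹) ∧
    -- `H ⊆ H₀ × D` is not saturated
    (∃ a ∈ H, ∃ b ∈ H,
      (∃ z : G₁ × G₂, z.1 ∈ H₀ ∧ z.2 ∈ D ∧ b = a * z) ∧ ¬ ∃ z ∈ H, b = a * z) ∧
    -- `Ĥ = Ĥ₀ × D̂`
    ({x : G₁ × G₂ | ∃ c ∈ H, ∀ n : ℕ, c * x ^ n ∈ H} =
      {x : G₁ × G₂ | (∃ c ∈ H₀, ∀ n : ℕ, c * x.1 ^ n ∈ H₀) ∧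
        (∃ c ∈ D, ∀ n : ℕ, c * x.2 ^ n ∈ D)}) ∧
    -- `H` is not completely integrally closed (hence not Krull)
    H ≠ {x : G₁ × G₂ | ∃ c ∈ H, ∀ n : ℕ, c * x ^ n ∈ H} := by
  obtain ⟨u, hu, hu'⟩ := hH₀ng
  obtain ⟨d, hd, hd1⟩ : ∃ d ∈ D, d ≠ 1 := by
    by_contra! h
    exact hDnt (Set.eq_singleton_iff_unique_mem.2 ⟨hD1, h⟩)
  change H = semidirect H₀ D at hH
  subst hH
  exact ⟨fun x hx => inv_mem_semidirect_iff hD1 hx,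
    exists_eq_mul_inv_of_mem_semidirect h₀m hq₁ hq₂ hu hu',
    semidirect_not_saturated h₀1 hD1 hu hu' hd hd1,
    completeIntegralClosure_semidirect h₀m hu hu',
    semidirect_ne_completeIntegralClosure h₀1 h₀m hD1 hDm hu hu' hd hd1⟩
end
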